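/- arXiv:1008.1525 — 12 statements merged into one kernel-verified Lean document; each statement's English description precedes it below -/
import Mathlib

section
/- Let 0 ≤ m ≤ n, let e_0, …, e_{m−1} ∈ ℂ and set R(x) = p_m(x) + ∑_{l=0}^{m−1} e_l p_l(x). Then for all complex coefficients c_m, …, c_n, the polynomial P(x) = c_m R(x) + ∑_{l=m+1}^n c_l p_l(x) satisfies ε(P) = \tilde c^H J_n^m \tilde c + (ε(R) − a_m) |c_m|², where \tilde c = (c_m, …, c_n)^T. -/
open MeasureTheory Finset

private lemma tridiag_sum (g : ℕ → ℕ → ℂ) (m n : ℕ) (hmn : m ≤ n)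
    (h0 : ∀ k l, k ∈ Finset.Icc m n → l ∈ Finset.Icc m n → k ≠ l → l ≠ k + 1 → k ≠ l + 1 →
      g k l = 0) :
    ∑ k ∈ Finset.Icc m n, ∑ l ∈ Finset.Icc m n, g k l
      = ∑ k ∈ Finset.Icc m n, g k k
        + ∑ k ∈ Finset.Ico m n, (g k (k + 1) + g (k + 1) k) := by
  induction n, hmn using Nat.le_induction with
  | base => simp
  | succ n hmn ih =>
    have hsub : Finset.Icc m n ⊆ Finset.Icc m (n + 1) :=
      Finset.Icc_subset_Icc_right (by omega)
    have hins : Finset.Icc m (n + 1) = insert (n + 1) (Finset.Icc m n) :=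
      (Finset.insert_Icc_right_eq_Icc_add_one (by omega)).symm
    have hnot : (n + 1) ∉ Finset.Icc m n := by simp
    have hmem : n ∈ Finset.Icc m n := Finset.mem_Icc.mpr ⟨hmn, le_rfl⟩
    have hrow : ∑ l ∈ Finset.Icc m n, g (n + 1) l = g (n + 1) n := by
      apply Finset.sum_eq_single_of_mem n hmem
      intro l hl hln
      exact h0 (n + 1) l (hins ▸ Finset.mem_insert_self _ _) (hsub hl)
        (by have := Finset.mem_Icc.mp hl; omega)
        (by have := Finset.mem_Icc.mp hl; omega)
        (by have := Finset.mem_Icc.mp hl; omega)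
    have hcol : ∑ k ∈ Finset.Icc m n, g k (n + 1) = g n (n + 1) := by
      apply Finset.sum_eq_single_of_mem n hmem
      intro k hk hkn
      exact h0 k (n + 1) (hsub hk) (hins ▸ Finset.mem_insert_self _ _)
        (by have := Finset.mem_Icc.mp hk; omega)
        (by have := Finset.mem_Icc.mp hk; omega)
        (by have := Finset.mem_Icc.mp hk; omega)
    have ih' := ih (fun k l hk hl => h0 k l (hsub hk) (hsub hl))
    rw [hins]
    simp only [Finset.sum_insert hnot]
    rw [Finset.sum_add_distrib, hrow, hcol, ih',
      Finset.sum_Ico_succ_top hmn (fun k => g k (k + 1) + g (k + 1) k)]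
    ring

/-- For `R = p_m + ∑_{l<m} e_l p_l` and `P = c_m R + ∑_{l=m+1}^n c_l p_l`,
`ε(P) = c̃^H J_n^m c̃ + (ε(R) − a_m)|c_m|²`. -/
theorem epsilon_eq_quadratic_form_R
    (w : ℝ → ℝ)
    (hw_cont : ContinuousOn w (Set.Icc (-1) 1))
    (hw_nonneg : ∀ x ∈ Set.Icc (-1 : ℝ) 1, 0 ≤ w x)
    (hw_pos : 0 < ∫ x in (-1 : ℝ)..1, w x)
    (p : ℕ → Polynomial ℝ) (a b : ℕ → ℝ)
    (hdeg : ∀ l, (p l).natDegree = l)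
    (hlead : ∀ l, 0 < (p l).leadingCoeff)
    (hb : ∀ l, 0 < b l)
    (horth : ∀ k l, (∫ x in (-1 : ℝ)..1, (p k).eval x * (p l).eval x * w x)
      = if k = l then 1 else 0)
    (hp0 : p 0 = Polynomial.C (1 / b 0))
    (hrec : ∀ l x, b (l + 1) * (p (l + 1)).eval x
      = (x - a l) * (p l).eval x - b l * (if l = 0 then 0 else (p (l - 1)).eval x))
    (m n : ℕ) (hmn : m ≤ n)
    (e : ℕ → ℂ) (c : ℕ → ℂ)
    (R : ℝ → ℂ)
    (hR : ∀ x, R x = (((p m).eval x : ℝ) : ℂ)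
      + ∑ l ∈ Finset.range m, e l * (((p l).eval x : ℝ) : ℂ))
    (P : ℝ → ℂ)
    (hP : ∀ x, P x = c m * R x
      + ∑ l ∈ Finset.Icc (m + 1) n, c l * (((p l).eval x : ℝ) : ℂ)) :
    ((∫ x in (-1 : ℝ)..1, x * ‖P x‖ ^ 2 * w x : ℝ) : ℂ)
      = (∑ l ∈ Finset.Icc m n, (a l : ℂ) * ((‖c l‖ : ℂ)) ^ 2
          + ∑ l ∈ Finset.Ico m n, (b (l + 1) : ℂ) *
              (c l * (starRingEnd ℂ) (c (l + 1)) + (starRingEnd ℂ) (c l) * c (l + 1)))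
        + (((∫ x in (-1 : ℝ)..1, x * ‖R x‖ ^ 2 * w x : ℝ) : ℂ) - (a m : ℂ))
            * ((‖c m‖ : ℂ)) ^ 2 := by
  -- weight continuity on the unordered interval
  have hwC : ContinuousOn w (Set.uIcc (-1 : ℝ) 1) := by
    rwa [Set.uIcc_of_le (by norm_num : (-1 : ℝ) ≤ 1)]
  -- integrability helpers
  have hint : ∀ g : ℝ → ℝ, Continuous g →
      IntervalIntegrable (fun x => g x * w x) volume (-1) 1 :=
    fun g hg => (hg.continuousOn.mul hwC).intervalIntegrable
  have hintC : ∀ g : ℝ → ℂ, Continuous g →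
      IntervalIntegrable (fun x => g x * ((w x : ℝ) : ℂ)) volume (-1) 1 :=
    fun g hg => (hg.continuousOn.mul
      (Complex.continuous_ofReal.comp_continuousOn hwC)).intervalIntegrable
  have hsumInt : ∀ (s : Finset ℕ) (F : ℕ → ℝ → ℂ),
      (∀ i ∈ s, IntervalIntegrable (F i) volume (-1) 1) →
      IntervalIntegrable (fun x => ∑ i ∈ s, F i x) volume (-1) 1 := by
    intro s F h
    have hfe : (∑ i ∈ s, F i) = fun x => ∑ i ∈ s, F i x := by
      funext x; simp
    exact hfe ▸ IntervalIntegrable.sum s h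
  -- the real tridiagonal entries
  have hE : ∀ k l, (∫ x in (-1 : ℝ)..1, x * (p k).eval x * (p l).eval x * w x)
      = (if k = l then a k else if k = l + 1 then b k else if l = k + 1 then b l else 0) := by
    intro k l
    have hpt : ∀ x : ℝ, x * (p k).eval x * (p l).eval x * w x
        = b (l + 1) * ((p k).eval x * (p (l + 1)).eval x * w x)
          + (a l * ((p k).eval x * (p l).eval x * w x)
            + b l * (if l = 0 then (0 : ℝ) else (p k).eval x * (p (l - 1)).eval x * w x)) := by
      intro x
      have h := hrec l x
      by_cases hl : l = 0
      · subst hl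
        simp only [if_true, reduceIte] at h ⊢
        linear_combination (-((p k).eval x * w x)) * h
      · simp only [hl, if_false] at h ⊢
        linear_combination (-((p k).eval x * w x)) * h
    have h1i : IntervalIntegrable
        (fun x => b (l + 1) * ((p k).eval x * (p (l + 1)).eval x * w x)) volume (-1) 1 :=
      (hint _ ((p k).continuous.mul (p (l + 1)).continuous)).const_mul _
    have h2i : IntervalIntegrable
        (fun x => a l * ((p k).eval x * (p l).eval x * w x)) volume (-1) 1 :=
      (hint _ ((p k).continuous.mul (p l).continuous)).const_mul _
    have h3i : IntervalIntegrable
        (fun x => b l * (if l = 0 then (0 : ℝ) else (p k).eval x * (p (l - 1)).eval x * w x))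
        volume (-1) 1 := by
      by_cases hl : l = 0
      · simp [hl]
      · simp only [hl, if_false]
        exact (hint _ ((p k).continuous.mul (p (l - 1)).continuous)).const_mul _
    have h3 : (∫ x in (-1 : ℝ)..1,
        b l * (if l = 0 then (0 : ℝ) else (p k).eval x * (p (l - 1)).eval x * w x))
        = b l * (if l = 0 then (0 : ℝ) else if k = l - 1 then 1 else 0) := by
      by_cases hl : l = 0
      · simp [hl]
      · simp only [hl, if_false]
        rw [intervalIntegral.integral_const_mul, horth]
    rw [intervalIntegral.integral_congr (g := fun x =>
        b (l + 1) * ((p k).eval x * (p (l + 1)).eval x * w x)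
          + (a l * ((p k).eval x * (p l).eval x * w x)
            + b l * (if l = 0 then (0 : ℝ) else (p k).eval x * (p (l - 1)).eval x * w x)))
        (fun x _ => hpt x),
      intervalIntegral.integral_add h1i (h2i.add h3i),
      intervalIntegral.integral_add h2i h3i,
      intervalIntegral.integral_const_mul, intervalIntegral.integral_const_mul,
      horth, horth, h3]
    split_ifs <;> first | (exfalso; omega) | (subst_vars; ring) | (subst_vars; exfalso; omega)
  -- the combined family
  set φ : ℕ → ℝ → ℂ :=
    fun l x => if l = m then R x else (((p l).eval x : ℝ) : ℂ) with hφ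
  have hRc : Continuous R := by
    have : R = fun x => (((p m).eval x : ℝ) : ℂ)
        + ∑ l ∈ Finset.range m, e l * (((p l).eval x : ℝ) : ℂ) := funext hR
    rw [this]
    exact (Complex.continuous_ofReal.comp (p m).continuous).add
      (continuous_finset_sum _ fun l _ =>
        continuous_const.mul (Complex.continuous_ofReal.comp (p l).continuous))
  have hφc : ∀ l, Continuous (φ l) := by
    intro l
    by_cases h : l = m
    · simpa [hφ, h] using hRc
    · simpa [hφ, h] using (show Continuous (fun x => (((p l).eval x : ℝ) : ℂ)) from Complex.continuous_ofReal.comp (p l).continuous)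
  -- complex entries
  set T : ℕ → ℕ → ℂ := fun k l =>
    ∫ x in (-1 : ℝ)..1, (x : ℂ) * φ k x * (starRingEnd ℂ) (φ l x) * ((w x : ℝ) : ℂ)
    with hT
  -- entry when both indices are ≠ m
  have hTpp : ∀ k l, k ≠ m → l ≠ m → T k l
      = (((if k = l then a k else if k = l + 1 then b k else if l = k + 1 then b l else 0) : ℝ) : ℂ) := by
    intro k l hk hl
    have hTkl : T k l = ∫ x in (-1 : ℝ)..1, (x : ℂ) * (((p k).eval x : ℝ) : ℂ)
        * (starRingEnd ℂ) ((((p l).eval x : ℝ) : ℂ)) * ((w x : ℝ) : ℂ) := by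
      rw [hT]; simp only [hφ, hk, hl, if_false]
    rw [hTkl, ← hE k l, ← intervalIntegral.integral_ofReal]
    apply intervalIntegral.integral_congr
    intro x _
    simp only [Complex.conj_ofReal]
    push_cast
    ring
  -- auxiliary: integral of x * (ofReal f) * (ofReal g) * w with complex coefficient handled
  have hXint : ∀ j l : ℕ,
      (∫ x in (-1 : ℝ)..1, (x : ℂ) * (((p j).eval x : ℝ) : ℂ) * (((p l).eval x : ℝ) : ℂ)
        * ((w x : ℝ) : ℂ))
      = (((if j = l then a j else if j = l + 1 then b j else if l = j + 1 then b l else 0) : ℝ) : ℂ) := by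
    intro j l
    rw [← hE j l, ← intervalIntegral.integral_ofReal]
    apply intervalIntegral.integral_congr
    intro x _
    beta_reduce
    push_cast
    ring
  have hXintegrable : ∀ j l : ℕ, IntervalIntegrable
      (fun x => (x : ℂ) * (((p j).eval x : ℝ) : ℂ) * (((p l).eval x : ℝ) : ℂ)
        * ((w x : ℝ) : ℂ)) volume (-1) 1 :=
    fun j l => hintC _ ((Complex.continuous_ofReal.mul
      (Complex.continuous_ofReal.comp (p j).continuous)).mul
      (Complex.continuous_ofReal.comp (p l).continuous))
  -- entry (m, l) with l ≠ m, l > m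
  have hTRp : ∀ l, l ≠ m → T m l
      = (((if m = l then a m else if m = l + 1 then b m else if l = m + 1 then b l else 0) : ℝ) : ℂ)
        + ∑ j ∈ Finset.range m,
          e j * (((if j = l then a j else if j = l + 1 then b j else if l = j + 1 then b l else 0) : ℝ) : ℂ) := by
    intro l hl
    have hTml : T m l = ∫ x in (-1 : ℝ)..1, (x : ℂ) * R x
        * (starRingEnd ℂ) ((((p l).eval x : ℝ) : ℂ)) * ((w x : ℝ) : ℂ) := by
      rw [hT]; simp only [hφ, hl, if_false, if_pos rfl]
    rw [hTml]
    have hpt : ∀ x : ℝ, (x : ℂ) * R x * (starRingEnd ℂ) ((((p l).eval x : ℝ) : ℂ))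
        * ((w x : ℝ) : ℂ)
        = ((x : ℂ) * (((p m).eval x : ℝ) : ℂ) * (((p l).eval x : ℝ) : ℂ) * ((w x : ℝ) : ℂ))
          + ∑ j ∈ Finset.range m, e j *
            ((x : ℂ) * (((p j).eval x : ℝ) : ℂ) * (((p l).eval x : ℝ) : ℂ) * ((w x : ℝ) : ℂ)) := by
      intro x
      rw [hR x, Complex.conj_ofReal]
      simp only [Finset.mul_sum, Finset.sum_mul, mul_add, add_mul]
      congr 1
      exact Finset.sum_congr rfl fun j _ => by ring
    rw [intervalIntegral.integral_congr (g := fun x =>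
        ((x : ℂ) * (((p m).eval x : ℝ) : ℂ) * (((p l).eval x : ℝ) : ℂ) * ((w x : ℝ) : ℂ))
          + ∑ j ∈ Finset.range m, e j *
            ((x : ℂ) * (((p j).eval x : ℝ) : ℂ) * (((p l).eval x : ℝ) : ℂ) * ((w x : ℝ) : ℂ)))
        (fun x _ => hpt x),
      intervalIntegral.integral_add (hXintegrable m l)
        (hsumInt _ _ fun j _ => (hXintegrable j l).const_mul _),
      intervalIntegral.integral_finset_sum (fun j _ => (hXintegrable j l).const_mul _)]
    congr 1
    · exact hXint m l
    · exact Finset.sum_congr rfl fun j _ => by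
        rw [intervalIntegral.integral_const_mul, hXint j l]
  -- entry (k, m) with k ≠ m
  have hTpR : ∀ k, k ≠ m → T k m
      = (((if k = m then a k else if k = m + 1 then b k else if m = k + 1 then b m else 0) : ℝ) : ℂ)
        + ∑ j ∈ Finset.range m,
          (starRingEnd ℂ) (e j) *
            (((if k = j then a k else if k = j + 1 then b k else if j = k + 1 then b j else 0) : ℝ) : ℂ) := by
    intro k hk
    have hTkm : T k m = ∫ x in (-1 : ℝ)..1, (x : ℂ) * (((p k).eval x : ℝ) : ℂ)
        * (starRingEnd ℂ) (R x) * ((w x : ℝ) : ℂ) := by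
      rw [hT]; simp only [hφ, hk, if_false, if_pos rfl]
    rw [hTkm]
    have hpt : ∀ x : ℝ, (x : ℂ) * (((p k).eval x : ℝ) : ℂ) * (starRingEnd ℂ) (R x)
        * ((w x : ℝ) : ℂ)
        = ((x : ℂ) * (((p k).eval x : ℝ) : ℂ) * (((p m).eval x : ℝ) : ℂ) * ((w x : ℝ) : ℂ))
          + ∑ j ∈ Finset.range m, (starRingEnd ℂ) (e j) *
            ((x : ℂ) * (((p k).eval x : ℝ) : ℂ) * (((p j).eval x : ℝ) : ℂ) * ((w x : ℝ) : ℂ)) := by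
      intro x
      rw [hR x, map_add, map_sum, Complex.conj_ofReal]
      simp only [map_mul, Complex.conj_ofReal]
      simp only [Finset.mul_sum, Finset.sum_mul, mul_add, add_mul]
      congr 1
      exact Finset.sum_congr rfl fun j _ => by ring
    rw [intervalIntegral.integral_congr (g := fun x =>
        ((x : ℂ) * (((p k).eval x : ℝ) : ℂ) * (((p m).eval x : ℝ) : ℂ) * ((w x : ℝ) : ℂ))
          + ∑ j ∈ Finset.range m, (starRingEnd ℂ) (e j) *
            ((x : ℂ) * (((p k).eval x : ℝ) : ℂ) * (((p j).eval x : ℝ) : ℂ) * ((w x : ℝ) : ℂ)))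
        (fun x _ => hpt x),
      intervalIntegral.integral_add (hXintegrable k m)
        (hsumInt _ _ fun j _ => (hXintegrable k j).const_mul _),
      intervalIntegral.integral_finset_sum (fun j _ => (hXintegrable k j).const_mul _)]
    congr 1
    · exact hXint k m
    · exact Finset.sum_congr rfl fun j _ => by
        rw [intervalIntegral.integral_const_mul, hXint k j]
  -- entry (m, m)
  have hTRR : T m m = ((∫ x in (-1 : ℝ)..1, x * ‖R x‖ ^ 2 * w x : ℝ) : ℂ) := by
    have hTmm : T m m = ∫ x in (-1 : ℝ)..1, (x : ℂ) * R x
        * (starRingEnd ℂ) (R x) * ((w x : ℝ) : ℂ) := by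
      rw [hT]; simp only [hφ, if_pos rfl]
    rw [hTmm, ← intervalIntegral.integral_ofReal]
    apply intervalIntegral.integral_congr
    intro x _
    beta_reduce
    have h := Complex.mul_conj' (R x)
    push_cast
    linear_combination ((x : ℂ) * ((w x : ℝ) : ℂ)) * h
  -- uniform entry description
  have hTent : ∀ k l, k ∈ Finset.Icc m n → l ∈ Finset.Icc m n → T k l
      = if k = m ∧ l = m then ((∫ x in (-1 : ℝ)..1, x * ‖R x‖ ^ 2 * w x : ℝ) : ℂ)
        else (((if k = l then a k else if k = l + 1 then b k else if l = k + 1 then b l else 0) : ℝ) : ℂ) := by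
    intro k l hk hl
    have hk' := Finset.mem_Icc.mp hk
    have hl' := Finset.mem_Icc.mp hl
    by_cases hkm : k = m
    · by_cases hlm : l = m
      · subst hkm; subst hlm; simp [hTRR]
      · subst hkm
        have hlgt : k < l := by omega
        rw [hTRp l hlm]
        have hz : ∀ j ∈ Finset.range k,
            e j * (((if j = l then a j else if j = l + 1 then b j
              else if l = j + 1 then b l else 0) : ℝ) : ℂ) = 0 := by
          intro j hj
          have hj' := Finset.mem_range.mp hj
          have h1 : ¬ (j = l) := by omega
          have h2 : ¬ (j = l + 1) := by omega
          have h3 : ¬ (l = j + 1) := by omega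
          simp [h1, h2, h3]
        rw [Finset.sum_congr rfl hz, Finset.sum_const_zero, add_zero]
        have h1 : ¬ (k = l) := by omega
        have h2 : ¬ (k = l + 1) := by omega
        rw [if_neg (show ¬(k = k ∧ l = k) from fun h => hlm h.2)]
    · by_cases hlm : l = m
      · subst hlm
        have hkgt : l < k := by omega
        rw [hTpR k hkm]
        have hz : ∀ j ∈ Finset.range l,
            (starRingEnd ℂ) (e j) * (((if k = j then a k else if k = j + 1 then b k
              else if j = k + 1 then b j else 0) : ℝ) : ℂ) = 0 := by
          intro j hj
          have hj' := Finset.mem_range.mp hj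
          have h1 : ¬ (k = j) := by omega
          have h2 : ¬ (k = j + 1) := by omega
          have h3 : ¬ (j = k + 1) := by omega
          simp [h1, h2, h3]
        rw [Finset.sum_congr rfl hz, Finset.sum_const_zero, add_zero]
        have h1 : ¬ (k = l) := by omega
        have h3 : ¬ (l = k + 1) := by omega
        rw [if_neg (show ¬(k = l ∧ l = l) from fun h => hkm h.1)]
      · rw [hTpp k l hkm hlm,
          if_neg (show ¬(k = m ∧ l = m) from fun h => hkm h.1)]
  -- rewrite P as a single sum over Icc m n
  have hPsum : ∀ x, P x = ∑ l ∈ Finset.Icc m n, c l * φ l x := by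
    intro x
    rw [Finset.Icc_eq_cons_Ioc hmn, Finset.sum_cons, hP x]
    congr 1
    · simp [hφ]
    · rw [← Finset.Icc_add_one_left_eq_Ioc]
      apply Finset.sum_congr rfl
      intro l hl
      have hl' := Finset.mem_Icc.mp hl
      have : l ≠ m := by omega
      simp [hφ, this]
  -- main expansion of the LHS
  have hLHS : ((∫ x in (-1 : ℝ)..1, x * ‖P x‖ ^ 2 * w x : ℝ) : ℂ)
      = ∑ k ∈ Finset.Icc m n, ∑ l ∈ Finset.Icc m n,
          (c k * (starRingEnd ℂ) (c l)) * T k l := by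
    rw [← intervalIntegral.integral_ofReal]
    have hpt : ∀ x : ℝ, ((x * ‖P x‖ ^ 2 * w x : ℝ) : ℂ)
        = ∑ k ∈ Finset.Icc m n, ∑ l ∈ Finset.Icc m n,
            (c k * (starRingEnd ℂ) (c l)) *
              ((x : ℂ) * φ k x * (starRingEnd ℂ) (φ l x) * ((w x : ℝ) : ℂ)) := by
      intro x
      have h1 : ((x * ‖P x‖ ^ 2 * w x : ℝ) : ℂ)
          = (x : ℂ) * (P x * (starRingEnd ℂ) (P x)) * ((w x : ℝ) : ℂ) := by
        have h := Complex.mul_conj' (P x)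
        push_cast
        linear_combination (-((x : ℂ) * ((w x : ℝ) : ℂ))) * h
      rw [h1, hPsum x, map_sum]
      simp only [map_mul]
      rw [Finset.sum_mul_sum]
      rw [Finset.mul_sum, Finset.sum_mul]
      apply Finset.sum_congr rfl
      intro k _
      rw [Finset.mul_sum, Finset.sum_mul]
      apply Finset.sum_congr rfl
      intro l _
      ring
    rw [intervalIntegral.integral_congr (g := fun x =>
        ∑ k ∈ Finset.Icc m n, ∑ l ∈ Finset.Icc m n,
          (c k * (starRingEnd ℂ) (c l)) *
            ((x : ℂ) * φ k x * (starRingEnd ℂ) (φ l x) * ((w x : ℝ) : ℂ)))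
        (fun x _ => hpt x)]
    have hintφ : ∀ k l : ℕ, IntervalIntegrable
        (fun x => (x : ℂ) * φ k x * (starRingEnd ℂ) (φ l x) * ((w x : ℝ) : ℂ))
        volume (-1) 1 :=
      fun k l => hintC _ ((Complex.continuous_ofReal.mul (hφc k)).mul
        (continuous_star.comp (hφc l)))
    rw [intervalIntegral.integral_finset_sum (fun k _ =>
      hsumInt _ _ fun l _ => (hintφ k l).const_mul _)]
    apply Finset.sum_congr rfl
    intro k _
    rw [intervalIntegral.integral_finset_sum (fun l _ => (hintφ k l).const_mul _)]
    exact Finset.sum_congr rfl fun l _ => intervalIntegral.integral_const_mul _ _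
  rw [hLHS]
  -- collapse the double sum
  rw [tridiag_sum (fun k l => (c k * (starRingEnd ℂ) (c l)) * T k l) m n hmn
    (by
      intro k l hk hl h1 h2 h3
      beta_reduce
      rw [hTent k l hk hl]
      have hne : ¬ (k = m ∧ l = m) := fun ⟨ha', hb'⟩ => h1 (ha'.trans hb'.symm)
      have e1 : ¬ (k = l + 1) := fun h => h3 h
      have e2 : ¬ (l = k + 1) := fun h => h2 h
      simp [hne, h1, e1, e2])]
  -- evaluate diagonal and off-diagonal parts
  have hdiag : ∑ k ∈ Finset.Icc m n, (c k * (starRingEnd ℂ) (c k)) * T k k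
      = ∑ l ∈ Finset.Icc m n, (a l : ℂ) * ((‖c l‖ : ℂ)) ^ 2
        + (((∫ x in (-1 : ℝ)..1, x * ‖R x‖ ^ 2 * w x : ℝ) : ℂ) - (a m : ℂ))
            * ((‖c m‖ : ℂ)) ^ 2 := by
    have hstep : ∀ k ∈ Finset.Icc m n, (c k * (starRingEnd ℂ) (c k)) * T k k
        = (a k : ℂ) * ((‖c k‖ : ℂ)) ^ 2
          + (if k = m then
              (((∫ x in (-1 : ℝ)..1, x * ‖R x‖ ^ 2 * w x : ℝ) : ℂ) - (a m : ℂ))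
                * ((‖c m‖ : ℂ)) ^ 2 else 0) := by
      intro k hk
      rw [hTent k k hk hk, Complex.mul_conj']
      by_cases hkm : k = m
      · subst hkm
        simp only [if_pos rfl, and_self, if_true]
        push_cast
        ring
      · simp only [hkm, if_false, and_self, if_pos rfl]
        push_cast
        ring
    rw [Finset.sum_congr rfl hstep, Finset.sum_add_distrib, Finset.sum_ite_eq']
    simp [Finset.mem_Icc.mpr ⟨le_rfl, hmn⟩]
  have hoff : ∑ k ∈ Finset.Ico m n,
      ((c k * (starRingEnd ℂ) (c (k + 1))) * T k (k + 1)
        + (c (k + 1) * (starRingEnd ℂ) (c k)) * T (k + 1) k)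
      = ∑ l ∈ Finset.Ico m n, (b (l + 1) : ℂ) *
          (c l * (starRingEnd ℂ) (c (l + 1)) + (starRingEnd ℂ) (c l) * c (l + 1)) := by
    apply Finset.sum_congr rfl
    intro k hk
    have hk' := Finset.mem_Ico.mp hk
    have hm1 : k ∈ Finset.Icc m n := Finset.mem_Icc.mpr ⟨hk'.1, by omega⟩
    have hm2 : k + 1 ∈ Finset.Icc m n := Finset.mem_Icc.mpr ⟨by omega, by omega⟩
    rw [hTent k (k + 1) hm1 hm2, hTent (k + 1) k hm2 hm1]
    have h1 : ¬ (k = m ∧ k + 1 = m) := by omega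
    have h2 : ¬ (k + 1 = m ∧ k = m) := by omega
    have h3 : ¬ (k = k + 1) := by omega
    have h4 : ¬ (k = (k + 1) + 1) := by omega
    have h5 : ¬ ((k + 1 : ℕ) = k) := by omega
    simp only [h1, h2, h3, h4, h5, if_false, if_pos rfl, if_true]
    ring
  rw [hdiag, hoff]
  ring
end

section
/- Let λ_{n+1} be the largest real zero of p_{n+1} (i.e. p_{n+1}(λ_{n+1}) = 0 and every real zero μ of p_{n+1} satisfies μ ≤ λ_{n+1}). Then the maximum of ε(P) over all polynomials P = ∑_{l=0}^n c_l p_l with complex coefficients and ∑_{l=0}^n |c_l|² = 1 equals λ_{n+1}, and the maximum is attained. -/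
open MeasureTheory Finset Matrix

lemma aux_rayleigh {m : ℕ} (A : Matrix (Fin m) (Fin m) ℝ) (hA : A.IsHermitian) (lam : ℝ)
    (hev : ∀ i, hA.eigenvalues i ≤ lam) (u : Fin m → ℝ) :
    u ⬝ᵥ (A *ᵥ u) ≤ lam * (u ⬝ᵥ u) := by
  set U := (hA.eigenvectorUnitary : Matrix (Fin m) (Fin m) ℝ) with hU
  set y := star U *ᵥ u with hy
  have hdiag : (Matrix.diagonal (RCLike.ofReal ∘ hA.eigenvalues) : Matrix (Fin m) (Fin m) ℝ)
      = Matrix.diagonal hA.eigenvalues := by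
    simp [Function.comp]
  have hAu : A *ᵥ u = U *ᵥ (Matrix.diagonal hA.eigenvalues *ᵥ y) := by
    conv_lhs => rw [hA.spectral_theorem, hdiag]
    simp [hy, ← Matrix.mulVec_mulVec, Matrix.mul_assoc]
    rfl
  have hstar : star U = Uᵀ := by
    ext i j; simp [Matrix.conjTranspose_apply]
  have hdot : ∀ z : Fin m → ℝ, u ⬝ᵥ (U *ᵥ z) = y ⬝ᵥ z := by
    intro z
    rw [Matrix.dotProduct_mulVec, hy, hstar, ← Matrix.vecMul_transpose, Matrix.transpose_transpose]
  have hUU : U * star U = 1 := Matrix.mem_unitaryGroup_iff.mp hA.eigenvectorUnitary.2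
  have hyy : y ⬝ᵥ y = u ⬝ᵥ u := by
    have := hdot y
    rw [hy, Matrix.mulVec_mulVec, hUU, Matrix.one_mulVec] at this
    exact this.symm
  rw [hAu, hdot, ← hyy]
  have hterm : ∀ i : Fin m, y i * (Matrix.diagonal hA.eigenvalues *ᵥ y) i ≤ lam * (y i * y i) := by
    intro i
    rw [Matrix.mulVec_diagonal]
    have h1 : hA.eigenvalues i * (y i * y i) ≤ lam * (y i * y i) :=
      mul_le_mul_of_nonneg_right (hev i) (mul_self_nonneg _)
    nlinarith [h1]
  calc y ⬝ᵥ (Matrix.diagonal hA.eigenvalues *ᵥ y) = ∑ i, y i * (Matrix.diagonal hA.eigenvalues *ᵥ y) i := rfl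
    _ ≤ ∑ i, lam * (y i * y i) := Finset.sum_le_sum (fun i _ => hterm i)
    _ = lam * (y ⬝ᵥ y) := by rw [dotProduct, Finset.mul_sum]

/-- The maximum of `ε(P)` over the unit sphere of `span{p_0, …, p_n}`
equals the largest real zero `λ_{n+1}` of `p_{n+1}`, and it is attained. -/
theorem epsilon_max_eq_largest_zero
    (w : ℝ → ℝ)
    (hw_cont : ContinuousOn w (Set.Icc (-1) 1))
    (hw_nonneg : ∀ x ∈ Set.Icc (-1 : ℝ) 1, 0 ≤ w x)
    (hw_pos : 0 < ∫ x in (-1 : ℝ)..1, w x)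
    (p : ℕ → Polynomial ℝ) (a b : ℕ → ℝ)
    (hdeg : ∀ l, (p l).natDegree = l)
    (hlead : ∀ l, 0 < (p l).leadingCoeff)
    (hb : ∀ l, 0 < b l)
    (horth : ∀ k l, (∫ x in (-1 : ℝ)..1, (p k).eval x * (p l).eval x * w x)
      = if k = l then 1 else 0)
    (hp0 : p 0 = Polynomial.C (1 / b 0))
    (hrec : ∀ l x, b (l + 1) * (p (l + 1)).eval x
      = (x - a l) * (p l).eval x - b l * (if l = 0 then 0 else (p (l - 1)).eval x))
    (n : ℕ) (lam : ℝ)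
    (hzero : (p (n + 1)).eval lam = 0)
    (hlargest : ∀ μ : ℝ, (p (n + 1)).eval μ = 0 → μ ≤ lam) :
    IsGreatest { y : ℝ | ∃ c : ℕ → ℂ,
        (∑ l ∈ Finset.range (n + 1), ‖c l‖ ^ 2) = 1 ∧
        y = ∫ x in (-1 : ℝ)..1,
          x * ‖∑ l ∈ Finset.range (n + 1), c l * (((p l).eval x : ℝ) : ℂ)‖ ^ 2 * w x }
      lam := by
  -- basic integrability
  have key : ∀ f : ℝ → ℝ, Continuous f →
      IntervalIntegrable (fun x => f x * w x) volume (-1) 1 := by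
    intro f hf
    apply ContinuousOn.intervalIntegrable
    rw [Set.uIcc_of_le (by norm_num : (-1:ℝ) ≤ 1)]
    exact hf.continuousOn.mul hw_cont
  have ik : ∀ k l : ℕ, IntervalIntegrable
      (fun x => (p k).eval x * (p l).eval x * w x) volume (-1) 1 := by
    intro k l
    exact key (fun x => (p k).eval x * (p l).eval x)
      ((p k).continuous_aeval.mul (p l).continuous_aeval)
  -- three-term recurrence, rearranged
  have threeterm : ∀ (l : ℕ) (x : ℝ), x * (p l).eval x
      = b (l+1) * (p (l+1)).eval x + a l * (p l).eval x
        + (if l = 0 then 0 else b l * (p (l-1)).eval x) := by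
    intro l x
    have h := hrec l x
    split_ifs at h ⊢ with h0
    · linear_combination -h
    · linear_combination -h
  
  -- the tridiagonal moment integrals
  set X : ℕ → ℕ → ℝ :=
    fun k l => ∫ x in (-1:ℝ)..1, x * (p k).eval x * (p l).eval x * w x with hXdef
  have Xval : ∀ k l, X k l
      = b (l+1) * (if k = l+1 then 1 else 0) + a l * (if k = l then 1 else 0)
        + (if l = 0 then (0:ℝ) else b l * (if k = l - 1 then 1 else 0)) := by
    intro k l
    rcases l with _ | m
    · have hfun : (fun x => x * (p k).eval x * (p 0).eval x * w x)
          = fun x => b 1 * ((p k).eval x * (p 1).eval x * w x)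
            + a 0 * ((p k).eval x * (p 0).eval x * w x) := by
        funext x
        have h := threeterm 0 x
        norm_num at h
        linear_combination ((p k).eval x * w x) * h
      simp only [hXdef]
      rw [hfun, intervalIntegral.integral_add ((ik k 1).const_mul _) ((ik k 0).const_mul _),
          intervalIntegral.integral_const_mul, intervalIntegral.integral_const_mul,
          horth, horth]
      simp
    · have hfun : (fun x => x * (p k).eval x * (p (m+1)).eval x * w x)
          = fun x => b (m+2) * ((p k).eval x * (p (m+2)).eval x * w x)
            + a (m+1) * ((p k).eval x * (p (m+1)).eval x * w x)
            + b (m+1) * ((p k).eval x * (p m).eval x * w x) := by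
        funext x
        have h := threeterm (m+1) x
        simp only [if_neg (Nat.succ_ne_zero m), Nat.add_sub_cancel] at h
        linear_combination ((p k).eval x * w x) * h
      simp only [hXdef]
      rw [hfun,
          intervalIntegral.integral_add
            (((ik k (m+2)).const_mul _).add ((ik k (m+1)).const_mul _))
            ((ik k m).const_mul _),
          intervalIntegral.integral_add ((ik k (m+2)).const_mul _) ((ik k (m+1)).const_mul _),
          intervalIntegral.integral_const_mul, intervalIntegral.integral_const_mul,
          intervalIntegral.integral_const_mul, horth, horth, horth]
      simp only [if_neg (Nat.succ_ne_zero m), Nat.add_sub_cancel]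
  -- row sums of the tridiagonal matrix
  have rowsum : ∀ (k : ℕ), k ≤ n → ∀ t : ℕ → ℝ,
      ∑ l ∈ range (n+1), X k l * t l
        = (if k = 0 then 0 else b k * t (k-1)) + a k * t k
          + (if k < n then b (k+1) * t (k+1) else 0) := by
    intro k hk t
    have hsplit : ∀ l, X k l * t l
        = (if l + 1 = k then b k * t l else 0) + (if l = k then a k * t l else 0)
          + (if l = k + 1 then b (k+1) * t l else 0) := by
      intro l
      rw [Xval k l]
      split_ifs <;>
        first
          | (exfalso; omega)
          | ring1
          | ((obtain rfl : k = l + 1 := by omega); ring1)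
          | ((obtain rfl : k = l := by omega); ring1)
          | ((obtain rfl : l = k + 1 := by omega); ring1)
    rw [Finset.sum_congr rfl (fun l _ => hsplit l), Finset.sum_add_distrib,
        Finset.sum_add_distrib]
    have e2 : ∑ l ∈ range (n+1), (if l = k then a k * t l else 0) = a k * t k := by
      rw [Finset.sum_ite_eq' (range (n+1)) k (fun l => a k * t l),
          if_pos (Finset.mem_range.mpr (by omega))]
    have e3 : ∑ l ∈ range (n+1), (if l = k + 1 then b (k+1) * t l else 0)
        = (if k < n then b (k+1) * t (k+1) else 0) := by
      rw [Finset.sum_ite_eq' (range (n+1)) (k+1) (fun l => b (k+1) * t l)]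
      by_cases hkn : k < n
      · rw [if_pos (Finset.mem_range.mpr (by omega)), if_pos hkn]
      · rw [if_neg (by simp [Finset.mem_range]; omega), if_neg hkn]
    have e1 : ∑ l ∈ range (n+1), (if l + 1 = k then b k * t l else 0)
        = (if k = 0 then 0 else b k * t (k-1)) := by
      rcases k with _ | j
      · simp
      · have : ∀ l, (if l + 1 = j + 1 then b (j+1) * t l else 0)
            = (if l = j then b (j+1) * t l else 0) := by
          intro l; congr 1; simp
        rw [Finset.sum_congr rfl (fun l _ => this l),
            Finset.sum_ite_eq' (range (n+1)) j (fun l => b (j+1) * t l),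
            if_pos (Finset.mem_range.mpr (by omega))]
        simp
    rw [e1, e2, e3]
  
  -- value of the integral for real coefficient vectors
  have realE : ∀ u : ℕ → ℝ,
      (∫ x in (-1:ℝ)..1, x * (∑ l ∈ range (n+1), u l * (p l).eval x)^2 * w x)
        = ∑ k ∈ range (n+1), ∑ l ∈ range (n+1), u k * u l * X k l := by
    intro u
    have expand : (fun x => x * (∑ l ∈ range (n+1), u l * (p l).eval x)^2 * w x)
        = fun x => ∑ z ∈ (range (n+1)) ×ˢ (range (n+1)),
            (u z.1 * u z.2) * (x * (p z.1).eval x * (p z.2).eval x * w x) := by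
      funext x
      symm
      rw [Finset.sum_product]
      have hin : ∀ k, ∑ l ∈ range (n+1), (u k * u l) * (x * (p k).eval x * (p l).eval x * w x)
          = (u k * (p k).eval x)
            * ((x * w x) * (∑ l ∈ range (n+1), u l * (p l).eval x)) := by
        intro k
        rw [Finset.mul_sum, Finset.mul_sum]
        exact Finset.sum_congr rfl (fun l _ => by ring)
      rw [Finset.sum_congr rfl (fun k _ => hin k), ← Finset.sum_mul]
      ring
    rw [expand, intervalIntegral.integral_finset_sum, Finset.sum_product]
    · refine Finset.sum_congr rfl (fun k _ => Finset.sum_congr rfl (fun l _ => ?_))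
      rw [intervalIntegral.integral_const_mul]
    · intro z _
      exact (key (fun x => x * (p z.1).eval x * (p z.2).eval x)
        ((continuous_id.mul (p z.1).continuous_aeval).mul (p z.2).continuous_aeval)).const_mul _
  -- eigen relation at lam
  have heig : ∀ k, k ≤ n →
      ∑ l ∈ range (n+1), X k l * (p l).eval lam = lam * (p k).eval lam := by
    intro k hk
    rw [rowsum k hk (fun l => (p l).eval lam)]
    have h3 := threeterm k lam
    by_cases hkn : k < n
    · rw [if_pos hkn]
      split_ifs at h3 ⊢ <;> linarith [h3]
    · have hk' : k = n := by omega
      subst hk'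
      rw [if_neg hkn]
      rw [hzero, mul_zero] at h3
      split_ifs at h3 ⊢ <;> linarith [h3]
  -- the tridiagonal matrix
  set A : Matrix (Fin (n+1)) (Fin (n+1)) ℝ :=
    Matrix.of (fun i j : Fin (n+1) => X i j) with hAdef
  have Xsymm : ∀ k l, X k l = X l k := by
    intro k l
    simp only [hXdef]
    congr 1
    funext x
    ring
  have hA : A.IsHermitian := by
    show A.conjTranspose = A
    ext i j
    simp only [hAdef, Matrix.conjTranspose_apply, Matrix.of_apply, star_trivial]
    exact Xsymm j i
  -- all eigenvalues are at most lam
  have hev_le : ∀ i, hA.eigenvalues i ≤ lam := by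
    intro i
    set μ := hA.eigenvalues i with hμ
    have hvec := hA.mulVec_eigenvectorBasis i
    set ve := ⇑(hA.eigenvectorBasis i) with hve
    have hvne : ve ≠ 0 := by
      intro h0
      exact hA.eigenvectorBasis.orthonormal.ne_zero i (by ext j; exact congrFun h0 j)
    set v' : ℕ → ℝ := fun j => if h : j < n+1 then ve ⟨j, h⟩ else 0 with hv'
    have hrowv : ∀ k, k ≤ n → ∑ l ∈ range (n+1), X k l * v' l = μ * v' k := by
      intro k hk
      have hklt : k < n + 1 := by omega
      have h1 := congrFun hvec ⟨k, hklt⟩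
      have hL : (A *ᵥ ve) ⟨k, hklt⟩ = ∑ j : Fin (n+1), X k (j : ℕ) * v' (j : ℕ) := by
        show ∑ j, A ⟨k, hklt⟩ j * ve j = _
        refine Finset.sum_congr rfl (fun j _ => ?_)
        simp only [hAdef, Matrix.of_apply, hv']
        rw [dif_pos j.isLt]
      have hR : (μ • ve) ⟨k, hklt⟩ = μ * v' k := by
        simp only [Pi.smul_apply, smul_eq_mul, hv']
        rw [dif_pos hklt]
      rw [hL, hR] at h1
      rw [← h1, ← Fin.sum_univ_eq_sum_range (fun l => X k l * v' l) (n+1)]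
    have claim : ∀ k, k ≤ n → v' k = (v' 0 * b 0) * (p k).eval μ := by
      intro k
      induction k using Nat.strong_induction_on with
      | _ k IH =>
        intro hk
        rcases k with _ | m
        · rw [hp0, Polynomial.eval_C]
          have hb0 : b 0 ≠ 0 := (hb 0).ne'
          field_simp
        · have hm : m ≤ n := by omega
          have hmn : m < n := by omega
          have hrow := hrowv m hm
          rw [rowsum m hm v', if_pos hmn] at hrow
          have h3 := threeterm m μ
          have hbne : b (m+1) ≠ 0 := (hb (m+1)).ne'
          have IHm := IH m (by omega) hm
          apply mul_left_cancel₀ hbne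
          by_cases hm0 : m = 0
          · subst hm0
            rw [if_pos rfl] at hrow h3
            linear_combination hrow + (v' 0 * b 0) * h3 + (μ - a 0) * IHm
          · have IHm1 := IH (m-1) (by omega) (by omega)
            rw [if_neg hm0] at hrow h3
            linear_combination hrow + (v' 0 * b 0) * h3 + (μ - a m) * IHm - b m * IHm1
    have hc0 : v' 0 ≠ 0 := by
      intro h0
      apply hvne
      funext j
      have hj : (j : ℕ) ≤ n := by omega
      have hcl := claim j hj
      rw [h0] at hcl
      simp only [zero_mul] at hcl
      rw [hv'] at hcl
      simp only [dif_pos j.isLt] at hcl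
      simpa using hcl
    have hrown := hrowv n (le_refl n)
    rw [rowsum n (le_refl n) v', if_neg (lt_irrefl n)] at hrown
    have h3 := threeterm n μ
    have hcln := claim n (le_refl n)
    have key0 : (v' 0 * b 0) * (b (n+1) * (p (n+1)).eval μ) = 0 := by
      by_cases hn0 : n = 0
      · subst hn0
        rw [if_pos rfl] at hrown h3
        linear_combination - hrown - (v' 0 * b 0) * h3 + (a 0 - μ) * hcln
      · have hcln1 := claim (n-1) (by omega)
        rw [if_neg hn0] at hrown h3
        linear_combination - hrown - (v' 0 * b 0) * h3 + (a n - μ) * hcln + b n * hcln1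
    have hb0 : b 0 ≠ 0 := (hb 0).ne'
    have hbn : b (n+1) ≠ 0 := (hb (n+1)).ne'
    have hz : (p (n+1)).eval μ = 0 := by
      rcases mul_eq_zero.mp key0 with h | h
      · exact absurd h (mul_ne_zero hc0 hb0)
      · rcases mul_eq_zero.mp h with h' | h'
        · exact absurd h' hbn
        · exact h'
    exact hlargest μ hz
  
  -- continuity of coefficient combinations
  have hScont : ∀ u : ℕ → ℝ, Continuous fun x => ∑ l ∈ range (n+1), u l * (p l).eval x :=
    fun u => continuous_finset_sum _ fun l _ => continuous_const.mul (p l).continuous_aeval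
  -- norm-square expansion for complex coefficients
  have normsq : ∀ (c : ℕ → ℂ) (x : ℝ),
      ‖∑ l ∈ range (n+1), c l * (((p l).eval x : ℝ) : ℂ)‖^2
        = (∑ l ∈ range (n+1), (c l).re * (p l).eval x)^2
          + (∑ l ∈ range (n+1), (c l).im * (p l).eval x)^2 := by
    intro c x
    set Z := ∑ l ∈ range (n+1), c l * (((p l).eval x : ℝ) : ℂ) with hZ
    have hre : Z.re = ∑ l ∈ range (n+1), (c l).re * (p l).eval x := by
      rw [hZ, Complex.re_sum]
      exact Finset.sum_congr rfl fun l _ => by simp [Complex.mul_re]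
    have him : Z.im = ∑ l ∈ range (n+1), (c l).im * (p l).eval x := by
      rw [hZ, Complex.im_sum]
      exact Finset.sum_congr rfl fun l _ => by simp [Complex.mul_im]
    rw [← hre, ← him, Complex.sq_norm, Complex.normSq_apply]
    ring
  -- the integral for complex coefficients
  have Esplit : ∀ c : ℕ → ℂ,
      (∫ x in (-1:ℝ)..1, x * ‖∑ l ∈ range (n+1), c l * (((p l).eval x : ℝ) : ℂ)‖^2 * w x)
        = (∑ k ∈ range (n+1), ∑ l ∈ range (n+1), (c k).re * (c l).re * X k l)
          + (∑ k ∈ range (n+1), ∑ l ∈ range (n+1), (c k).im * (c l).im * X k l) := by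
    intro c
    have hfun : (fun x => x * ‖∑ l ∈ range (n+1), c l * (((p l).eval x : ℝ) : ℂ)‖^2 * w x)
        = fun x => (x * (∑ l ∈ range (n+1), (c l).re * (p l).eval x)^2 * w x)
            + (x * (∑ l ∈ range (n+1), (c l).im * (p l).eval x)^2 * w x) := by
      funext x
      rw [normsq c x]
      ring
    rw [hfun, intervalIntegral.integral_add
        (key (fun x => x * (∑ l ∈ range (n+1), (c l).re * (p l).eval x)^2)
          (continuous_id.mul ((hScont fun l => (c l).re).pow 2)))
        (key (fun x => x * (∑ l ∈ range (n+1), (c l).im * (p l).eval x)^2)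
          (continuous_id.mul ((hScont fun l => (c l).im).pow 2))),
      realE, realE]
  -- quadratic form bound
  have hQ : ∀ u : ℕ → ℝ,
      (∑ k ∈ range (n+1), ∑ l ∈ range (n+1), u k * u l * X k l)
        ≤ lam * ∑ l ∈ range (n+1), (u l)^2 := by
    intro u
    set uf : Fin (n+1) → ℝ := fun i => u i with huf
    have h1 : (∑ k ∈ range (n+1), ∑ l ∈ range (n+1), u k * u l * X k l)
        = uf ⬝ᵥ (A *ᵥ uf) := by
      rw [dotProduct,
        ← Fin.sum_univ_eq_sum_range (fun k => ∑ l ∈ range (n+1), u k * u l * X k l) (n+1)]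
      refine Finset.sum_congr rfl fun i _ => ?_
      have hAv : (A *ᵥ uf) i = ∑ l ∈ range (n+1), X (i : ℕ) l * u l := by
        show ∑ j, A i j * uf j = _
        rw [← Fin.sum_univ_eq_sum_range (fun l => X (i : ℕ) l * u l) (n+1)]
        rfl
      rw [hAv, Finset.mul_sum]
      exact Finset.sum_congr rfl fun l _ => by ring
    have h2 : (∑ l ∈ range (n+1), (u l)^2) = uf ⬝ᵥ uf := by
      rw [dotProduct, ← Fin.sum_univ_eq_sum_range (fun l => (u l)^2) (n+1)]
      exact Finset.sum_congr rfl fun l _ => sq (u l) ▸ (sq (u l)).symm ▸ rfl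
    rw [h1, h2]
    exact aux_rayleigh A hA lam hev_le uf
  constructor
  · -- membership : the maximum is attained
    set N := ∑ l ∈ range (n+1), ((p l).eval lam)^2 with hNdef
    have hN0 : 0 < N := by
      have h0mem : (0:ℕ) ∈ range (n+1) := mem_range.mpr (by omega)
      have hpos : 0 < ((p 0).eval lam)^2 := by
        rw [hp0, Polynomial.eval_C]
        exact pow_pos (div_pos one_pos (hb 0)) 2
      calc 0 < ((p 0).eval lam)^2 := hpos
        _ ≤ N := by
          rw [hNdef]
          exact Finset.single_le_sum (f := fun l => ((p l).eval lam)^2)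
            (fun l _ => sq_nonneg _) h0mem
    set s := Real.sqrt N with hsdef
    have hs0 : 0 < s := Real.sqrt_pos.mpr hN0
    have hs2 : s^2 = N := Real.sq_sqrt hN0.le
    refine ⟨fun l => (((p l).eval lam / s : ℝ) : ℂ), ?_, ?_⟩
    · have hterm : ∀ l, ‖((((p l).eval lam / s : ℝ)) : ℂ)‖^2 = ((p l).eval lam)^2 / N := by
        intro l
        rw [Complex.norm_real, Real.norm_eq_abs, sq_abs, div_pow, hs2]
      rw [Finset.sum_congr rfl (fun l _ => hterm l), ← Finset.sum_div]
      exact div_self hN0.ne'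
    · symm
      rw [Esplit]
      have e2 : (∑ k ∈ range (n+1), ∑ l ∈ range (n+1),
          ((fun l => (((p l).eval lam / s : ℝ) : ℂ)) k).im
            * ((fun l => (((p l).eval lam / s : ℝ) : ℂ)) l).im * X k l) = 0 :=
        Finset.sum_eq_zero fun k _ => Finset.sum_eq_zero fun l _ => by
          simp [Complex.ofReal_im]
      rw [e2, add_zero]
      have inner : ∀ k, k ≤ n →
          (∑ l ∈ range (n+1),
            ((fun l => (((p l).eval lam / s : ℝ) : ℂ)) k).re
              * ((fun l => (((p l).eval lam / s : ℝ) : ℂ)) l).re * X k l)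
            = lam * (((p k).eval lam)^2 / N) := by
        intro k hk
        have hterm : ∀ l, ((fun l => (((p l).eval lam / s : ℝ) : ℂ)) k).re
              * ((fun l => (((p l).eval lam / s : ℝ) : ℂ)) l).re * X k l
            = ((p k).eval lam / (s*s)) * (X k l * (p l).eval lam) := by
          intro l
          simp only [Complex.ofReal_re]
          ring
        rw [Finset.sum_congr rfl (fun l _ => hterm l), ← Finset.mul_sum, heig k hk,
          show s * s = N by rw [← hs2]; ring]
        ring
      rw [Finset.sum_congr rfl (fun k hk => inner k (by
        have := mem_range.mp hk; omega)), ← Finset.mul_sum, ← Finset.sum_div, ← hNdef,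
        div_self hN0.ne', mul_one]
  · -- upper bound
    rintro y ⟨c, hc1, rfl⟩
    rw [Esplit c]
    have hre := hQ fun l => (c l).re
    have him := hQ fun l => (c l).im
    have hsum : (∑ l ∈ range (n+1), (((c l).re)^2 + ((c l).im)^2)) = 1 := by
      rw [← hc1]
      refine Finset.sum_congr rfl fun l _ => ?_
      rw [Complex.sq_norm, Complex.normSq_apply]
      ring
    calc (∑ k ∈ range (n+1), ∑ l ∈ range (n+1), (c k).re * (c l).re * X k l)
          + (∑ k ∈ range (n+1), ∑ l ∈ range (n+1), (c k).im * (c l).im * X k l)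
        ≤ lam * (∑ l ∈ range (n+1), ((c l).re)^2)
          + lam * (∑ l ∈ range (n+1), ((c l).im)^2) := add_le_add hre him
      _ = lam * (∑ l ∈ range (n+1), (((c l).re)^2 + ((c l).im)^2)) := by
          rw [Finset.sum_add_distrib]
          ring
      _ = lam := by rw [hsum, mul_one]
end

section
/- Let λ_{n+1} be the largest real zero of p_{n+1} and set κ = (∑_{k=0}^n p_k(λ_{n+1})²)^{−1/2}. Then the polynomial 𝒫_n(x) = κ ∑_{l=0}^n p_l(λ_{n+1}) p_l(x) satisfies ∫_{−1}^1 |𝒫_n(x)|² w(x) dx = 1 and ε(𝒫_n) = λ_{n+1}. -/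
open MeasureTheory Finset

set_option maxHeartbeats 800000

/-- With `λ_{n+1}` the largest zero of `p_{n+1}` and
`κ = (∑_{k=0}^n p_k(λ_{n+1})²)^{-1/2}`, the polynomial
`𝒫_n(x) = κ ∑_{l=0}^n p_l(λ_{n+1}) p_l(x)` has unit norm and `ε(𝒫_n) = λ_{n+1}`. -/
theorem optimal_polynomial_unit_norm_and_epsilon
    (w : ℝ → ℝ)
    (hw_cont : ContinuousOn w (Set.Icc (-1) 1))
    (hw_nonneg : ∀ x ∈ Set.Icc (-1 : ℝ) 1, 0 ≤ w x)
    (hw_pos : 0 < ∫ x in (-1 : ℝ)..1, w x)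
    (p : ℕ → Polynomial ℝ) (a b : ℕ → ℝ)
    (hdeg : ∀ l, (p l).natDegree = l)
    (hlead : ∀ l, 0 < (p l).leadingCoeff)
    (hb : ∀ l, 0 < b l)
    (horth : ∀ k l, (∫ x in (-1 : ℝ)..1, (p k).eval x * (p l).eval x * w x)
      = if k = l then 1 else 0)
    (hp0 : p 0 = Polynomial.C (1 / b 0))
    (hrec : ∀ l x, b (l + 1) * (p (l + 1)).eval x
      = (x - a l) * (p l).eval x - b l * (if l = 0 then 0 else (p (l - 1)).eval x))
    (n : ℕ) (lam : ℝ)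
    (hzero : (p (n + 1)).eval lam = 0)
    (hlargest : ∀ μ : ℝ, (p (n + 1)).eval μ = 0 → μ ≤ lam)
    (κ : ℝ)
    (hκ : κ = (Real.sqrt (∑ k ∈ Finset.range (n + 1), ((p k).eval lam) ^ 2))⁻¹)
    (Pn : ℝ → ℝ)
    (hPn : ∀ x, Pn x = κ * ∑ l ∈ Finset.range (n + 1), (p l).eval lam * (p l).eval x) :
    (∫ x in (-1 : ℝ)..1, (Pn x) ^ 2 * w x) = 1 ∧
    (∫ x in (-1 : ℝ)..1, x * (Pn x) ^ 2 * w x) = lam := by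
  set c : ℕ → ℝ := fun l => (p l).eval lam with hc
  -- integrability of (continuous) * w on [-1,1]
  have hint : ∀ g : ℝ → ℝ, Continuous g →
      IntervalIntegrable (fun x => g x * w x) volume (-1) 1 := by
    intro g hg
    apply ContinuousOn.intervalIntegrable
    rw [Set.uIcc_of_le (by norm_num : (-1:ℝ) ≤ 1)]
    exact hg.continuousOn.mul hw_cont
  have hintpp : ∀ k l, IntervalIntegrable
      (fun x => (p k).eval x * (p l).eval x * w x) volume (-1) 1 := by
    intro k l
    exact hint _ ((p k).continuous_aeval.mul (p l).continuous_aeval)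
  have hintxpp : ∀ k l, IntervalIntegrable
      (fun x => x * ((p k).eval x * (p l).eval x) * w x) volume (-1) 1 := by
    intro k l
    exact hint _ (continuous_id.mul ((p k).continuous_aeval.mul (p l).continuous_aeval))
  -- positivity of S
  have hc0 : c 0 = 1 / b 0 := by simp [hc, hp0]
  have hS : 0 < ∑ k ∈ Finset.range (n + 1), (c k) ^ 2 := by
    apply Finset.sum_pos' (fun k _ => sq_nonneg _)
    refine ⟨0, Finset.mem_range.mpr (Nat.succ_pos n), ?_⟩
    rw [hc0]
    have := hb 0
    positivity
  have hκ2 : κ ^ 2 = (∑ k ∈ Finset.range (n + 1), (c k) ^ 2)⁻¹ := by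
    rw [hκ]
    rw [← Real.sqrt_inv]
    exact Real.sq_sqrt (by positivity)
  have hintsum : ∀ k, IntervalIntegrable (fun x => ∑ l ∈ Finset.range (n + 1),
      (κ ^ 2 * c k * c l) * ((p k).eval x * (p l).eval x * w x)) volume (-1) 1 := by
    intro k
    apply ContinuousOn.intervalIntegrable
    rw [Set.uIcc_of_le (by norm_num : (-1:ℝ) ≤ 1)]
    exact continuousOn_finset_sum _ (fun l _ => continuousOn_const.mul
      (((p k).continuous_aeval.mul (p l).continuous_aeval).continuousOn.mul hw_cont))
  have hintsumx : ∀ k, IntervalIntegrable (fun x => ∑ l ∈ Finset.range (n + 1),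
      (κ ^ 2 * c k * c l) * (x * ((p k).eval x * (p l).eval x) * w x)) volume (-1) 1 := by
    intro k
    apply ContinuousOn.intervalIntegrable
    rw [Set.uIcc_of_le (by norm_num : (-1:ℝ) ≤ 1)]
    exact continuousOn_finset_sum _ (fun l _ => continuousOn_const.mul
      (((continuous_id.mul ((p k).continuous_aeval.mul (p l).continuous_aeval)).continuousOn).mul hw_cont))
  -- first part: the squared norm
  have hPt : ∀ x, Pn x ^ 2 * w x = ∑ k ∈ Finset.range (n + 1), ∑ l ∈ Finset.range (n + 1),
      (κ ^ 2 * c k * c l) * ((p k).eval x * (p l).eval x * w x) := by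
    intro x
    rw [hPn x, mul_pow, sq (∑ l ∈ Finset.range (n + 1), c l * (p l).eval x),
      Finset.sum_mul_sum]
    simp only [Finset.mul_sum, Finset.sum_mul]
    exact Finset.sum_congr rfl fun k _ => Finset.sum_congr rfl fun l _ => by ring
  have part1 : (∫ x in (-1 : ℝ)..1, (Pn x) ^ 2 * w x) = 1 := by
    have hcalc : (∫ x in (-1 : ℝ)..1, (Pn x) ^ 2 * w x)
        = ∑ k ∈ Finset.range (n + 1), ∑ l ∈ Finset.range (n + 1),
          (κ ^ 2 * c k * c l) * (if k = l then 1 else 0) :=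
      calc (∫ x in (-1 : ℝ)..1, (Pn x) ^ 2 * w x)
          = ∫ x in (-1 : ℝ)..1, ∑ k ∈ Finset.range (n + 1), ∑ l ∈ Finset.range (n + 1),
            (κ ^ 2 * c k * c l) * ((p k).eval x * (p l).eval x * w x) :=
          intervalIntegral.integral_congr (fun x _ => hPt x)
        _ = ∑ k ∈ Finset.range (n + 1), ∫ x in (-1 : ℝ)..1, ∑ l ∈ Finset.range (n + 1),
            (κ ^ 2 * c k * c l) * ((p k).eval x * (p l).eval x * w x) :=
          intervalIntegral.integral_finset_sum (fun k _ => hintsum k)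
        _ = ∑ k ∈ Finset.range (n + 1), ∑ l ∈ Finset.range (n + 1),
            ∫ x in (-1 : ℝ)..1, (κ ^ 2 * c k * c l) * ((p k).eval x * (p l).eval x * w x) :=
          Finset.sum_congr rfl (fun k _ =>
            intervalIntegral.integral_finset_sum (fun l _ => (hintpp k l).const_mul _))
        _ = ∑ k ∈ Finset.range (n + 1), ∑ l ∈ Finset.range (n + 1),
            (κ ^ 2 * c k * c l) * (if k = l then 1 else 0) :=
          Finset.sum_congr rfl fun k _ => Finset.sum_congr rfl fun l _ => by
            rw [intervalIntegral.integral_const_mul, horth k l]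
    rw [hcalc]
    simp only [mul_ite, mul_one, mul_zero, Finset.sum_ite_eq, Finset.mem_range]
    rw [show (∑ k ∈ Finset.range (n + 1), if k < n + 1 then κ ^ 2 * c k * c k else 0)
        = ∑ k ∈ Finset.range (n + 1), κ ^ 2 * c k ^ 2 from
      Finset.sum_congr rfl fun k hk => by
        rw [if_pos (Finset.mem_range.mp hk)]; ring]
    rw [← Finset.mul_sum, hκ2]
    exact inv_mul_cancel₀ (ne_of_gt hS)
  -- the key integral computation via the recurrence
  have hJ : ∀ k l, (∫ x in (-1 : ℝ)..1, x * ((p k).eval x * (p l).eval x) * w x)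
      = b (l + 1) * (if k = l + 1 then 1 else 0) + a l * (if k = l then 1 else 0)
        + (if l = 0 then 0 else b l * (if k = l - 1 then 1 else 0)) := by
    intro k l
    match l with
    | 0 =>
      have heq : ∀ x, x * ((p k).eval x * (p 0).eval x) * w x
          = b 1 * ((p k).eval x * (p 1).eval x * w x)
            + a 0 * ((p k).eval x * (p 0).eval x * w x) := by
        intro x
        have h := hrec 0 x
        simp at h
        have hx : x * (p 0).eval x = b 1 * (p 1).eval x + a 0 * (p 0).eval x := by
          linear_combination -h
        calc x * ((p k).eval x * (p 0).eval x) * w x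
            = (x * (p 0).eval x) * ((p k).eval x * w x) := by ring
          _ = (b 1 * (p 1).eval x + a 0 * (p 0).eval x) * ((p k).eval x * w x) := by rw [hx]
          _ = _ := by ring
      rw [intervalIntegral.integral_congr (fun x _ => heq x),
        intervalIntegral.integral_add ((hintpp k 1).const_mul _) ((hintpp k 0).const_mul _),
        intervalIntegral.integral_const_mul, intervalIntegral.integral_const_mul,
        horth k 1, horth k 0]
      simp
    | m + 1 =>
      have heq : ∀ x, x * ((p k).eval x * (p (m + 1)).eval x) * w x
          = b (m + 2) * ((p k).eval x * (p (m + 2)).eval x * w x)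
            + (a (m + 1) * ((p k).eval x * (p (m + 1)).eval x * w x)
              + b (m + 1) * ((p k).eval x * (p m).eval x * w x)) := by
        intro x
        have h := hrec (m + 1) x
        simp only [Nat.succ_ne_zero, if_false, Nat.add_sub_cancel] at h
        have hx : x * (p (m + 1)).eval x = b (m + 2) * (p (m + 2)).eval x
            + a (m + 1) * (p (m + 1)).eval x + b (m + 1) * (p m).eval x := by
          linear_combination -h
        calc x * ((p k).eval x * (p (m + 1)).eval x) * w x
            = (x * (p (m + 1)).eval x) * ((p k).eval x * w x) := by ring
          _ = (b (m + 2) * (p (m + 2)).eval x + a (m + 1) * (p (m + 1)).eval x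
              + b (m + 1) * (p m).eval x) * ((p k).eval x * w x) := by rw [hx]
          _ = _ := by ring
      rw [intervalIntegral.integral_congr (fun x _ => heq x),
        intervalIntegral.integral_add ((hintpp k (m + 2)).const_mul _)
          (((hintpp k (m + 1)).const_mul _).add ((hintpp k m).const_mul _)),
        intervalIntegral.integral_add ((hintpp k (m + 1)).const_mul _)
          ((hintpp k m).const_mul _),
        intervalIntegral.integral_const_mul, intervalIntegral.integral_const_mul,
        intervalIntegral.integral_const_mul, horth k (m + 2), horth k (m + 1), horth k m]
      simp [add_assoc]
  -- second part
  have hcn1 : c (n + 1) = 0 := hzero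
  have hcrec : ∀ l, lam * c l = b (l + 1) * c (l + 1) + a l * c l
      + (if l = 0 then 0 else b l * c (l - 1)) := by
    intro l
    have h : b (l + 1) * c (l + 1)
        = (lam - a l) * c l - b l * (if l = 0 then 0 else c (l - 1)) := hrec l lam
    by_cases h0 : l = 0
    · rw [if_pos h0] at h ⊢
      linear_combination -h
    · rw [if_neg h0] at h ⊢
      linear_combination -h
  have hPtx : ∀ x, x * Pn x ^ 2 * w x = ∑ k ∈ Finset.range (n + 1), ∑ l ∈ Finset.range (n + 1),
      (κ ^ 2 * c k * c l) * (x * ((p k).eval x * (p l).eval x) * w x) := by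
    intro x
    rw [hPn x, mul_pow, sq (∑ l ∈ Finset.range (n + 1), c l * (p l).eval x),
      Finset.sum_mul_sum]
    simp only [Finset.mul_sum, Finset.sum_mul]
    exact Finset.sum_congr rfl fun k _ => Finset.sum_congr rfl fun l _ => by ring
  have part2 : (∫ x in (-1 : ℝ)..1, x * (Pn x) ^ 2 * w x) = lam := by
    have hstep : (∫ x in (-1 : ℝ)..1, x * (Pn x) ^ 2 * w x)
        = ∑ k ∈ Finset.range (n + 1), ∑ l ∈ Finset.range (n + 1),
          (κ ^ 2 * c k * c l) * (b (l + 1) * (if k = l + 1 then 1 else 0)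
            + a l * (if k = l then 1 else 0)
            + (if l = 0 then 0 else b l * (if k = l - 1 then 1 else 0))) := by
      calc (∫ x in (-1 : ℝ)..1, x * (Pn x) ^ 2 * w x)
          = ∫ x in (-1 : ℝ)..1, ∑ k ∈ Finset.range (n + 1), ∑ l ∈ Finset.range (n + 1),
            (κ ^ 2 * c k * c l) * (x * ((p k).eval x * (p l).eval x) * w x) :=
          intervalIntegral.integral_congr (fun x _ => hPtx x)
        _ = ∑ k ∈ Finset.range (n + 1), ∫ x in (-1 : ℝ)..1, ∑ l ∈ Finset.range (n + 1),
            (κ ^ 2 * c k * c l) * (x * ((p k).eval x * (p l).eval x) * w x) :=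
          intervalIntegral.integral_finset_sum (fun k _ => hintsumx k)
        _ = ∑ k ∈ Finset.range (n + 1), ∑ l ∈ Finset.range (n + 1),
            ∫ x in (-1 : ℝ)..1, (κ ^ 2 * c k * c l) * (x * ((p k).eval x * (p l).eval x) * w x) :=
          Finset.sum_congr rfl (fun k _ =>
            intervalIntegral.integral_finset_sum (fun l _ => (hintxpp k l).const_mul _))
        _ = _ :=
          Finset.sum_congr rfl fun k _ => Finset.sum_congr rfl fun l _ => by
            rw [intervalIntegral.integral_const_mul, hJ k l]
    rw [hstep, Finset.sum_comm]
    have hinner : ∀ l ∈ Finset.range (n + 1),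
        (∑ k ∈ Finset.range (n + 1), (κ ^ 2 * c k * c l) * (b (l + 1) * (if k = l + 1 then 1 else 0)
          + a l * (if k = l then 1 else 0)
          + (if l = 0 then 0 else b l * (if k = l - 1 then 1 else 0))))
        = κ ^ 2 * (lam * c l ^ 2) := by
      intro l hl
      have hl' : l < n + 1 := Finset.mem_range.mp hl
      have expand : ∀ k, (κ ^ 2 * c k * c l) * (b (l + 1) * (if k = l + 1 then 1 else 0)
          + a l * (if k = l then 1 else 0)
          + (if l = 0 then 0 else b l * (if k = l - 1 then 1 else 0)))
        = (if k = l + 1 then κ ^ 2 * c l * (b (l + 1) * c k) else 0)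
          + (if k = l then κ ^ 2 * c l * (a l * c k) else 0)
          + (if l = 0 then 0 else (if k = l - 1 then κ ^ 2 * c l * (b l * c k) else 0)) := by
        intro k
        split_ifs <;> ring
      rw [Finset.sum_congr rfl (fun k _ => expand k)]
      rw [Finset.sum_add_distrib, Finset.sum_add_distrib]
      rw [Finset.sum_ite_eq' (Finset.range (n + 1)) (l + 1) (fun k => κ ^ 2 * c l * (b (l + 1) * c k)),
        Finset.sum_ite_eq' (Finset.range (n + 1)) l (fun k => κ ^ 2 * c l * (a l * c k))]
      have h1 : (if l + 1 ∈ Finset.range (n + 1) then κ ^ 2 * c l * (b (l + 1) * c (l + 1)) else 0)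
          = κ ^ 2 * c l * (b (l + 1) * c (l + 1)) := by
        by_cases h : l + 1 ∈ Finset.range (n + 1)
        · rw [if_pos h]
        · rw [if_neg h]
          have : l = n := by
            have := Finset.mem_range.not.mp h
            omega
          rw [this, hcn1]; ring
      rw [h1, if_pos hl]
      have h3 : (∑ k ∈ Finset.range (n + 1), (if l = 0 then (0:ℝ) else
          (if k = l - 1 then κ ^ 2 * c l * (b l * c k) else 0)))
          = (if l = 0 then 0 else κ ^ 2 * c l * (b l * c (l - 1))) := by
        by_cases h0 : l = 0
        · simp [h0]
        · simp only [if_neg h0]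
          rw [Finset.sum_ite_eq' (Finset.range (n + 1)) (l - 1)]
          rw [if_pos (Finset.mem_range.mpr (by omega))]
      rw [h3]
      have := hcrec l
      by_cases h0 : l = 0
      · simp only [h0, if_pos] at this ⊢
        rw [show lam * c 0 ^ 2 = (lam * c 0) * c 0 by ring, this]
        ring
      · simp only [if_neg h0] at this ⊢
        rw [show lam * c l ^ 2 = (lam * c l) * c l by ring, this]
        ring
    rw [Finset.sum_congr rfl hinner, ← Finset.mul_sum]
    have : (∑ l ∈ Finset.range (n + 1), lam * c l ^ 2)
        = lam * ∑ l ∈ Finset.range (n + 1), c l ^ 2 := by rw [Finset.mul_sum]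
    rw [this, hκ2, ← mul_assoc, mul_comm (∑ k ∈ Finset.range (n + 1), c k ^ 2)⁻¹ lam, mul_assoc,
      inv_mul_cancel₀ (ne_of_gt hS), mul_one]
  exact ⟨part1, part2⟩
end

section
/- For all integers 0 ≤ m ≤ n and all real x ≠ y, the Christoffel–Darboux type formula ∑_{k=m}^n p_k(x) p_{k−m}(y, m) = b_{n+1} (p_{n+1}(x) p_{n−m}(y, m) − p_{n−m+1}(y, m) p_n(x))/(x − y) + b_m p_{m−1}(x)/(x − y) holds. -/
open Finset

/-- Christoffel–Darboux type formula for the associated polynomials. -/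
theorem christoffel_darboux_associated
    (a b : ℕ → ℝ) (hb : ∀ l, 0 < b l)
    (p : ℕ → ℝ → ℝ)
    (hp0 : ∀ x, p 0 x = 1 / b 0)
    (hprec : ∀ l x, b (l + 1) * p (l + 1) x
      = (x - a l) * p l x - b l * (if l = 0 then 0 else p (l - 1) x))
    (m n : ℕ) (hmn : m ≤ n)
    (q : ℕ → ℝ → ℝ)
    (hq0 : ∀ x, q 0 x = 1)
    (hqrec : ∀ l x, b (m + l + 1) * q (l + 1) x
      = (x - a (m + l)) * q l x - b (m + l) * (if l = 0 then 0 else q (l - 1) x))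
    (x y : ℝ) (hxy : x ≠ y) :
    ∑ k ∈ Finset.Icc m n, p k x * q (k - m) y
      = b (n + 1) * (p (n + 1) x * q (n - m) y - q (n - m + 1) y * p n x) / (x - y)
        + b m * (if m = 0 then 0 else p (m - 1) x) / (x - y) := by
  have key : ∀ N, m ≤ N →
      (x - y) * ∑ k ∈ Finset.Icc m N, p k x * q (k - m) y
        = b (N + 1) * (p (N + 1) x * q (N - m) y - q (N - m + 1) y * p N x)
          + b m * (if m = 0 then 0 else p (m - 1) x) := by
    intro N hN
    induction N, hN using Nat.le_induction with
    | base =>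
        have h1 := hprec m x
        have h2 := hqrec 0 y
        norm_num [hq0] at h2
        simp only [Finset.Icc_self, Finset.sum_singleton, Nat.sub_self, hq0, mul_one]
        linear_combination p m x * h2 - h1
    | succ N hN ih =>
        rw [Finset.sum_Icc_succ_top (le_trans hN (Nat.le_succ N)), mul_add, ih]
        have hs : N + 1 - m = (N - m) + 1 := Nat.succ_sub hN
        rw [hs]
        have h3 := hprec (N + 1) x
        simp only [Nat.add_sub_cancel, if_neg (Nat.succ_ne_zero N)] at h3
        have h4 := hqrec (N - m + 1) y
        have hm1 : m + (N - m + 1) = N + 1 := by omega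
        rw [hm1] at h4
        simp only [if_neg (Nat.succ_ne_zero (N - m)), Nat.add_sub_cancel] at h4
        linear_combination p (N + 1) x * h4 - q (N - m + 1) y * h3
  rw [← add_div, eq_div_iff (sub_ne_zero.mpr hxy)]
  linear_combination key n hmn
end

section
/- For all integers 0 ≤ m ≤ n, all γ ∈ ℝ, δ ≥ 0, and all real x ≠ y, the Christoffel–Darboux type formula ∑_{k=m}^n p_k(x) p_{k−m}(y, m, γ, δ) = b_{n+1} (p_{n+1}(x) p_{n−m}(y, m, γ, δ) − p_{n−m+1}(y, m, γ, δ) p_n(x))/(x − y) + p_m(x)((δ − 1) y − γ)/(x − y) + b_m p_{m−1}(x)/(x − y) holds. -/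
open Finset

/-- Christoffel–Darboux type formula for the scaled co-recursive
associated polynomials. -/
theorem christoffel_darboux_corecursive
    (a b : ℕ → ℝ) (hb : ∀ l, 0 < b l)
    (p : ℕ → ℝ → ℝ)
    (hp0 : ∀ x, p 0 x = 1 / b 0)
    (hprec : ∀ l x, b (l + 1) * p (l + 1) x
      = (x - a l) * p l x - b l * (if l = 0 then 0 else p (l - 1) x))
    (m n : ℕ) (hmn : m ≤ n)
    (γ δ : ℝ) (hδ : 0 ≤ δ)
    (r : ℕ → ℝ → ℝ)
    (hr0 : ∀ x, r 0 x = 1)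
    (hr1 : ∀ x, r 1 x = (δ * x - a m - γ) / b (m + 1))
    (hrrec : ∀ l, 1 ≤ l → ∀ x, b (m + l + 1) * r (l + 1) x
      = (x - a (m + l)) * r l x - b (m + l) * r (l - 1) x)
    (x y : ℝ) (hxy : x ≠ y) :
    ∑ k ∈ Finset.Icc m n, p k x * r (k - m) y
      = b (n + 1) * (p (n + 1) x * r (n - m) y - r (n - m + 1) y * p n x) / (x - y)
        + p m x * ((δ - 1) * y - γ) / (x - y)
        + b m * (if m = 0 then 0 else p (m - 1) x) / (x - y) := by
  have hxy' : x - y ≠ 0 := sub_ne_zero.mpr hxy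
  set q : ℝ := (if m = 0 then 0 else p (m - 1) x) with hq
  have hr1' : b (m + 1) * r 1 y = δ * y - a m - γ := by
    rw [hr1, mul_div_cancel₀ _ (hb (m+1)).ne']
  have key : ∀ j : ℕ, (x - y) * ∑ k ∈ Finset.Icc m (m + j), p k x * r (k - m) y
      = b (m + j + 1) * (p (m + j + 1) x * r j y - r (j + 1) y * p (m + j) x)
        + p m x * ((δ - 1) * y - γ)
        + b m * (if m = 0 then 0 else p (m - 1) x) := by
    intro j
    induction j with
    | zero =>
      have hsum : ∑ k ∈ Finset.Icc m (m + 0), p k x * r (k - m) y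
          = p m x * r 0 y := by simp
      rw [hsum, hr0]; simp only [zero_add, add_zero]
      have h1 := hprec m x
      rw [← hq] at h1
      linear_combination p m x * hr1' - h1
    | succ j ih =>
      have hsum : ∑ k ∈ Finset.Icc m (m + (j + 1)), p k x * r (k - m) y
          = (∑ k ∈ Finset.Icc m (m + j), p k x * r (k - m) y)
            + p (m + (j + 1)) x * r (m + (j + 1) - m) y := by
        rw [show m + (j + 1) = (m + j) + 1 by ring,
          Finset.sum_Icc_succ_top (by omega : m ≤ m + j + 1)]
      rw [hsum]
      have hsub : m + (j + 1) - m = j + 1 := by omega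
      rw [hsub]
      have h1 := hprec (m + j + 1) x
      rw [if_neg (by omega : ¬ m + j + 1 = 0)] at h1
      have h2 := hrrec (j + 1) (by omega) y
      simp only [show m + (j + 1) = m + j + 1 from rfl, Nat.add_sub_cancel] at h2
      have e1 : m + j + 1 - 1 = m + j := by omega
      rw [e1] at h1
      have : m + (j + 1) = m + j + 1 := rfl
      rw [this]
      linear_combination ih - r (j + 1) y * h1 + p (m + j + 1) x * h2
  obtain ⟨j, rfl⟩ := Nat.exists_eq_add_of_le hmn
  have hsub : m + j - m = j := by omega
  rw [hsub, ← add_div, ← add_div, eq_div_iff hxy']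
  linear_combination key j
end

section
/- Let 0 ≤ m ≤ n. If λ ∈ ℝ is a zero of the associated polynomial p_{n−m+1}(·, m), then for every real x ≠ λ one has ∑_{k=m}^n p_{k−m}(λ, m) p_k(x) = (b_{n+1} p_{n+1}(x) p_{n−m}(λ, m) + b_m p_{m−1}(x))/(x − λ). -/
open Finset

/-- If `λ` is a zero of the associated polynomial `p_{n−m+1}(·, m)`, then for
`x ≠ λ`, `∑_{k=m}^n p_{k−m}(λ, m) p_k(x)
  = (b_{n+1} p_{n+1}(x) p_{n−m}(λ, m) + b_m p_{m−1}(x))/(x − λ)`. -/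
theorem explicit_optimal_polynomial_associated
    (a b : ℕ → ℝ) (hb : ∀ l, 0 < b l)
    (p : ℕ → ℝ → ℝ)
    (hp0 : ∀ x, p 0 x = 1 / b 0)
    (hprec : ∀ l x, b (l + 1) * p (l + 1) x
      = (x - a l) * p l x - b l * (if l = 0 then 0 else p (l - 1) x))
    (m n : ℕ) (hmn : m ≤ n)
    (q : ℕ → ℝ → ℝ)
    (hq0 : ∀ x, q 0 x = 1)
    (hqrec : ∀ l x, b (m + l + 1) * q (l + 1) x
      = (x - a (m + l)) * q l x - b (m + l) * (if l = 0 then 0 else q (l - 1) x))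
    (lam : ℝ)
    (hzero : q (n - m + 1) lam = 0)
    (x : ℝ) (hx : x ≠ lam) :
    ∑ k ∈ Finset.Icc m n, q (k - m) lam * p k x
      = (b (n + 1) * p (n + 1) x * q (n - m) lam
          + b m * (if m = 0 then 0 else p (m - 1) x)) / (x - lam) := by
  have hxl : x - lam ≠ 0 := sub_ne_zero.mpr hx
  set F : ℕ → ℝ := fun l => b (m + l) *
    (p (m + l) x * (if l = 0 then 0 else q (l - 1) lam)
      - (if m + l = 0 then 0 else p (m + l - 1) x) * q l lam) with hF
  have key : ∀ l : ℕ, (x - lam) * (q l lam * p (m + l) x) = F (l + 1) - F l := by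
    intro l
    have h1 := hprec (m + l) x
    have h2 := hqrec l lam
    simp only [hF]
    have e1 : l + 1 ≠ 0 := Nat.succ_ne_zero l
    have e2 : m + (l + 1) ≠ 0 := by omega
    rw [if_neg e1, if_neg e2]
    have e3 : l + 1 - 1 = l := rfl
    have e4 : m + (l + 1) - 1 = m + l := by omega
    have e5 : m + (l + 1) = m + l + 1 := by omega
    rw [e3, e4, e5]
    by_cases hl : l = 0
    · subst hl
      simp only [Nat.add_zero, reduceIte] at h1 h2 ⊢
      by_cases hm : m = 0
      · subst hm
        simp only [reduceIte] at h1 ⊢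
        linear_combination p 0 x * h2 - q 0 lam * h1
      · rw [if_neg hm] at h1 ⊢
        linear_combination p m x * h2 - q 0 lam * h1
    · rw [if_neg hl] at h2 ⊢
      have hml : m + l ≠ 0 := by omega
      rw [if_neg hml] at h1 ⊢
      linear_combination p (m + l) x * h2 - q l lam * h1
  have hsum : ∑ k ∈ Finset.Icc m n, q (k - m) lam * p k x
      = ∑ l ∈ Finset.range (n - m + 1), q l lam * p (m + l) x := by
    rw [← Finset.Ico_add_one_right_eq_Icc, Finset.sum_Ico_eq_sum_range]
    apply Finset.sum_congr
    · congr 1; omega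
    · intro l _; rw [Nat.add_sub_cancel_left, Nat.add_comm]
  have htel : (x - lam) * ∑ k ∈ Finset.Icc m n, q (k - m) lam * p k x
      = F (n - m + 1) - F 0 := by
    rw [hsum, Finset.mul_sum]
    rw [Finset.sum_congr rfl (fun l _ => key l), Finset.sum_range_sub]
  have hF0 : F 0 = - (b m * (if m = 0 then 0 else p (m - 1) x)) := by
    simp only [hF, Nat.add_zero, if_pos rfl, hq0]
    ring_nf
    by_cases hm : m = 0 <;> simp [hm] <;> ring
  have hFn : F (n - m + 1) = b (n + 1) * p (n + 1) x * q (n - m) lam := by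
    simp only [hF]
    have e1 : n - m + 1 ≠ 0 := by omega
    have e2 : m + (n - m + 1) ≠ 0 := by omega
    rw [if_neg e1, if_neg e2]
    have e3 : m + (n - m + 1) = n + 1 := by omega
    have e4 : n - m + 1 - 1 = n - m := rfl
    rw [e3, e4, hzero]
    ring
  rw [eq_div_iff hxl]
  rw [mul_comm, htel, hFn, hF0]
  ring
end

section
/- Let 0 ≤ m ≤ n, γ ∈ ℝ and δ ≥ 0. If λ ∈ ℝ is a zero of the scaled co-recursive associated polynomial p_{n−m+1}(·, m, γ, δ), then for every real x ≠ λ one has ∑_{k=m}^n p_{k−m}(λ, m, γ, δ) p_k(x) = (b_{n+1} p_{n+1}(x) p_{n−m}(λ, m, γ, δ) + ((δ − 1)λ − γ) p_m(x) + b_m p_{m−1}(x))/(x − λ). -/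
open Finset

/-- If `λ` is a zero of the scaled co-recursive associated polynomial
`p_{n−m+1}(·, m, γ, δ)`, then for `x ≠ λ`, `∑_{k=m}^n p_{k−m}(λ, m, γ, δ) p_k(x)
  = (b_{n+1} p_{n+1}(x) p_{n−m}(λ, m, γ, δ) + ((δ−1)λ−γ) p_m(x) + b_m p_{m−1}(x))/(x − λ)`. -/
theorem explicit_optimal_polynomial_corecursive
    (a b : ℕ → ℝ) (hb : ∀ l, 0 < b l)
    (p : ℕ → ℝ → ℝ)
    (hp0 : ∀ x, p 0 x = 1 / b 0)
    (hprec : ∀ l x, b (l + 1) * p (l + 1) x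
      = (x - a l) * p l x - b l * (if l = 0 then 0 else p (l - 1) x))
    (m n : ℕ) (hmn : m ≤ n)
    (γ δ : ℝ) (hδ : 0 ≤ δ)
    (r : ℕ → ℝ → ℝ)
    (hr0 : ∀ x, r 0 x = 1)
    (hr1 : ∀ x, r 1 x = (δ * x - a m - γ) / b (m + 1))
    (hrrec : ∀ l, 1 ≤ l → ∀ x, b (m + l + 1) * r (l + 1) x
      = (x - a (m + l)) * r l x - b (m + l) * r (l - 1) x)
    (lam : ℝ)
    (hzero : r (n - m + 1) lam = 0)
    (x : ℝ) (hx : x ≠ lam) :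
    ∑ k ∈ Finset.Icc m n, r (k - m) lam * p k x
      = (b (n + 1) * p (n + 1) x * r (n - m) lam
          + ((δ - 1) * lam - γ) * p m x
          + b m * (if m = 0 then 0 else p (m - 1) x)) / (x - lam) := by
  set q : ℝ := if m = 0 then 0 else p (m - 1) x with hq
  have hbm1 : b (m + 1) ≠ 0 := (hb (m + 1)).ne'
  have hr1' : b (m + 1) * r 1 lam = δ * lam - a m - γ := by
    rw [hr1]; field_simp
  have key : ∀ j : ℕ,
      (x - lam) * ∑ k ∈ Finset.Icc m (m + j), r (k - m) lam * p k x
        = b (m + j + 1) * (p (m + j + 1) x * r j lam - p (m + j) x * r (j + 1) lam)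
          + ((δ - 1) * lam - γ) * p m x + b m * q := by
    intro j
    induction j with
    | zero =>
      simp only [Nat.add_zero, Finset.Icc_self, Finset.sum_singleton, Nat.sub_self, hr0]
      have Hp := hprec m x
      rw [← hq] at Hp
      linear_combination -Hp + p m x * hr1'
    | succ j ih =>
      rw [show m + (j + 1) = (m + j) + 1 from rfl,
        Finset.sum_Icc_succ_top (by omega : m ≤ m + j + 1)]
      have Hp := hprec (m + j + 1) x
      have hne : ¬ (m + j + 1 = 0) := by omega
      rw [if_neg hne] at Hp
      have h1 : m + j + 1 - 1 = m + j := by omega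
      rw [h1] at Hp
      have Hr := hrrec (j + 1) (by omega) lam
      have h2 : j + 1 - 1 = j := by omega
      rw [h2] at Hr
      simp only [← Nat.add_assoc] at Hr
      have h3 : m + j + 1 - m = j + 1 := by omega
      rw [h3]
      have h4 : m + (j + 1) = m + j + 1 := rfl
      linear_combination ih - r (j + 1) lam * Hp + p (m + j + 1) x * Hr
  have hxl : x - lam ≠ 0 := sub_ne_zero.mpr hx
  have hk := key (n - m)
  have h5 : m + (n - m) = n := by omega
  rw [h5] at hk
  rw [eq_div_iff hxl]
  linear_combination hk - b (n + 1) * p n x * hzero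
end

section
/- Let α, β ≥ −1/2 and let f : [−1,1] → ℂ be twice continuously differentiable with ‖f‖_{w_{αβ}} = 1. If (α − β) + (α + β + 2) ε(f) ≠ 0, then the following strict uncertainty inequality holds: (1 − ε(f)²)/|(α − β)/(α + β + 2) + ε(f)|² · Re⟨−L_{αβ} f, f⟩_{w_{αβ}} > (α + β + 2)²/4. -/
open MeasureTheory Finset Set



noncomputable def jw (α β : ℝ) (x : ℝ) : ℝ := (1 - x) ^ α * (1 + x) ^ β

lemma jw_nonneg (α β : ℝ) {x : ℝ} (hx : x ∈ Set.Icc (-1:ℝ) 1) : 0 ≤ jw α β x := by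
  have h1 : (0:ℝ) ≤ 1 - x := by linarith [hx.2]
  have h2 : (0:ℝ) ≤ 1 + x := by linarith [hx.1]
  exact mul_nonneg (Real.rpow_nonneg h1 _) (Real.rpow_nonneg h2 _)

lemma jw_pos (α β : ℝ) {x : ℝ} (hx : x ∈ Set.Ioo (-1:ℝ) 1) : 0 < jw α β x := by
  have h1 : (0:ℝ) < 1 - x := by linarith [hx.2]
  have h2 : (0:ℝ) < 1 + x := by linarith [hx.1]
  exact mul_pos (Real.rpow_pos_of_pos h1 _) (Real.rpow_pos_of_pos h2 _)

lemma jw_continuousAt (α β : ℝ) {x : ℝ} (hx : x ∈ Set.Ioo (-1:ℝ) 1) :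
    ContinuousAt (jw α β) x := by
  have h1 : (1:ℝ) - x ≠ 0 := by intro h; have := hx.2; linarith
  have h2 : (1:ℝ) + x ≠ 0 := by have := hx.1; intro h; linarith
  exact ((continuous_const.sub continuous_id).continuousAt.rpow_const (Or.inl h1)).mul
    ((continuous_const.add continuous_id).continuousAt.rpow_const (Or.inl h2))

lemma jw_intervalIntegrable (α β : ℝ) (hα : (-1:ℝ) < α) (hβ : (-1:ℝ) < β) :
    IntervalIntegrable (jw α β) volume (-1) 1 := by
  have c1 : ContinuousOn (fun x : ℝ => (1 - x) ^ α) (Set.uIcc (-1:ℝ) 0) := by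
    intro x hx
    rw [Set.uIcc_of_le (by norm_num : (-1:ℝ) ≤ 0)] at hx
    have h1 : (1:ℝ) - x ≠ 0 := by have := hx.2; intro h; linarith [(by linarith : x = 1)]
    exact ((continuous_const.sub continuous_id).continuousAt.rpow_const (Or.inl h1)).continuousWithinAt
  have c2 : ContinuousOn (fun x : ℝ => (1 + x) ^ β) (Set.uIcc (0:ℝ) 1) := by
    intro x hx
    rw [Set.uIcc_of_le (by norm_num : (0:ℝ) ≤ 1)] at hx
    have h2 : (1:ℝ) + x ≠ 0 := by have := hx.1; intro h; linarith
    exact ((continuous_const.add continuous_id).continuousAt.rpow_const (Or.inl h2)).continuousWithinAt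
  have half1 : IntervalIntegrable (fun x : ℝ => (1 + x) ^ β) volume (-1) 0 := by
    have h0 : IntervalIntegrable (fun x : ℝ => x ^ β) volume 0 1 :=
      intervalIntegral.intervalIntegrable_rpow' hβ
    have := h0.comp_add_right 1
    norm_num at this
    simpa [add_comm] using this
  have part1 : IntervalIntegrable (jw α β) volume (-1) 0 := by
    have := half1.continuousOn_mul c1
    exact this
  have half2 : IntervalIntegrable (fun x : ℝ => (1 - x) ^ α) volume 0 1 := by
    have h0 : IntervalIntegrable (fun x : ℝ => x ^ α) volume 0 1 :=
      intervalIntegral.intervalIntegrable_rpow' hα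
    have hneg : IntervalIntegrable (fun x : ℝ => (-x) ^ α) volume 0 (-1) := by
      simpa using (IntervalIntegrable.iff_comp_neg (by simp)).mp h0
    have := (hneg.comp_add_right (-1)).symm
    norm_num at this
    simpa [neg_sub, sub_eq_neg_add, add_comm] using this
  have part2 : IntervalIntegrable (jw α β) volume 0 1 := by
    have := half2.mul_continuousOn c2
    exact this
  exact part1.trans part2

lemma intR (α β : ℝ) (hα : (-1:ℝ) < α) (hβ : (-1:ℝ) < β) {φ : ℝ → ℝ}
    (hφ : ContinuousOn φ (Set.Icc (-1:ℝ) 1)) :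
    IntervalIntegrable (fun x => φ x * jw α β x) volume (-1) 1 := by
  have := (jw_intervalIntegrable α β hα hβ).continuousOn_mul
    (by rwa [Set.uIcc_of_le (by norm_num : (-1:ℝ) ≤ 1)])
  exact this

lemma intC (α β : ℝ) (hα : (-1:ℝ) < α) (hβ : (-1:ℝ) < β) {φ : ℝ → ℂ}
    (hφ : ContinuousOn φ (Set.Icc (-1:ℝ) 1)) :
    IntervalIntegrable (fun x => φ x * ((jw α β x : ℝ) : ℂ)) volume (-1) 1 := by
  have hw : IntervalIntegrable (fun x => ((jw α β x : ℝ) : ℂ)) volume (-1) 1 := by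
    have h := jw_intervalIntegrable α β hα hβ
    exact ⟨Complex.ofRealCLM.integrable_comp h.1, Complex.ofRealCLM.integrable_comp h.2⟩
  exact hw.continuousOn_mul (by rwa [Set.uIcc_of_le (by norm_num : (-1:ℝ) ≤ 1)])

lemma re_integral {F : ℝ → ℂ} (hF : IntervalIntegrable F volume (-1) 1) :
    (∫ x in (-1:ℝ)..1, F x).re = ∫ x in (-1:ℝ)..1, (F x).re := by
  have := Complex.reCLM.intervalIntegral_comp_comm hF
  simpa using this.symm

lemma jw_comb (α β : ℝ) (hα : (-1:ℝ) < α) (hβ : (-1:ℝ) < β) (a b : ℝ) {φ ψ : ℝ → ℝ}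
    (hφ : ContinuousOn φ (Set.Icc (-1:ℝ) 1)) (hψ : ContinuousOn ψ (Set.Icc (-1:ℝ) 1)) :
    ∫ x in (-1:ℝ)..1, (a * φ x + b * ψ x) * jw α β x
      = a * (∫ x in (-1:ℝ)..1, φ x * jw α β x) + b * ∫ x in (-1:ℝ)..1, ψ x * jw α β x := by
  have h : ∀ x : ℝ, (a * φ x + b * ψ x) * jw α β x
      = a * (φ x * jw α β x) + b * (ψ x * jw α β x) := fun x => by ring
  simp_rw [h]
  rw [intervalIntegral.integral_add ((intR α β hα hβ hφ).const_mul a)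
    ((intR α β hα hβ hψ).const_mul b), intervalIntegral.integral_const_mul,
    intervalIntegral.integral_const_mul]

lemma jw_comb3 (α β : ℝ) (hα : (-1:ℝ) < α) (hβ : (-1:ℝ) < β) (a b c : ℝ) {φ ψ χ : ℝ → ℝ}
    (hφ : ContinuousOn φ (Set.Icc (-1:ℝ) 1)) (hψ : ContinuousOn ψ (Set.Icc (-1:ℝ) 1))
    (hχ : ContinuousOn χ (Set.Icc (-1:ℝ) 1)) :
    ∫ x in (-1:ℝ)..1, (a * φ x + b * ψ x + c * χ x) * jw α β x
      = a * (∫ x in (-1:ℝ)..1, φ x * jw α β x) + b * (∫ x in (-1:ℝ)..1, ψ x * jw α β x)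
        + c * ∫ x in (-1:ℝ)..1, χ x * jw α β x := by
  have h : ∀ x : ℝ, (a * φ x + b * ψ x + c * χ x) * jw α β x
      = (a * φ x + b * ψ x) * jw α β x + c * (χ x * jw α β x) := fun x => by ring
  simp_rw [h]
  rw [intervalIntegral.integral_add
    (intR α β hα hβ (φ := fun x => a * φ x + b * ψ x) ((continuousOn_const.mul hφ).add (continuousOn_const.mul hψ)))
    ((intR α β hα hβ hχ).const_mul c), intervalIntegral.integral_const_mul,
    jw_comb α β hα hβ a b hφ hψ]

lemma jw_int_nonneg (α β : ℝ) {φ : ℝ → ℝ} (hnn : ∀ x ∈ Set.Icc (-1:ℝ) 1, 0 ≤ φ x) :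
    0 ≤ ∫ x in (-1:ℝ)..1, φ x * jw α β x :=
  intervalIntegral.integral_nonneg (by norm_num)
    (fun x hx => mul_nonneg (hnn x hx) (jw_nonneg α β hx))

lemma jw_int_pos (α β : ℝ) (hα : (-1:ℝ) < α) (hβ : (-1:ℝ) < β) {φ : ℝ → ℝ}
    (hφ : ContinuousOn φ (Set.Icc (-1:ℝ) 1)) (hnn : ∀ x ∈ Set.Icc (-1:ℝ) 1, 0 ≤ φ x)
    {x₀ : ℝ} (hx₀ : x₀ ∈ Set.Ioo (-1:ℝ) 1) (hpos : 0 < φ x₀) :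
    0 < ∫ x in (-1:ℝ)..1, φ x * jw α β x := by
  have hGnn : ∀ x ∈ Set.Icc (-1:ℝ) 1, 0 ≤ φ x * jw α β x :=
    fun x hx => mul_nonneg (hnn x hx) (jw_nonneg α β hx)
  have hGint : IntervalIntegrable (fun x => φ x * jw α β x) volume (-1) 1 := intR α β hα hβ hφ
  have hGcont : ContinuousAt (fun x => φ x * jw α β x) x₀ := by
    apply ContinuousAt.mul _ (jw_continuousAt α β hx₀)
    exact hφ.continuousAt (mem_nhds_iff.2 ⟨Set.Ioo (-1:ℝ) 1, Ioo_subset_Icc_self, isOpen_Ioo, hx₀⟩)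
  have hGx₀ : 0 < φ x₀ * jw α β x₀ := mul_pos hpos (jw_pos α β hx₀)
  have hev : ∀ᶠ x in nhds x₀, φ x₀ * jw α β x₀ / 2 < φ x * jw α β x ∧ x ∈ Set.Ioo (-1:ℝ) 1 := by
    refine Filter.Eventually.and ?_ (isOpen_Ioo.eventually_mem hx₀)
    exact hGcont.eventually (eventually_gt_nhds (by linarith))
  obtain ⟨δ, hδ0, hδ⟩ := Metric.eventually_nhds_iff.mp hev
  have hsub : ∀ x ∈ Set.Icc (x₀ - δ/2) (x₀ + δ/2),
      φ x₀ * jw α β x₀ / 2 < φ x * jw α β x ∧ x ∈ Set.Ioo (-1:ℝ) 1 := by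
    intro x hx
    obtain ⟨h1, h2⟩ := hx
    apply hδ
    rw [Real.dist_eq, abs_lt]
    constructor <;> linarith
  have hcd : x₀ - δ/2 ≤ x₀ + δ/2 := by linarith
  have h1c : (-1:ℝ) ≤ x₀ - δ/2 :=
    le_of_lt (hsub _ ⟨le_refl _, hcd⟩).2.1
  have hd1 : x₀ + δ/2 ≤ 1 :=
    le_of_lt (hsub _ ⟨hcd, le_refl _⟩).2.2
  have i1 : IntervalIntegrable (fun x => φ x * jw α β x) volume (-1) (x₀ - δ/2) :=
    hGint.mono_set (by
      rw [Set.uIcc_of_le h1c, Set.uIcc_of_le (by norm_num : (-1:ℝ) ≤ 1)]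
      exact Set.Icc_subset_Icc le_rfl (by linarith))
  have i2 : IntervalIntegrable (fun x => φ x * jw α β x) volume (x₀ - δ/2) (x₀ + δ/2) :=
    hGint.mono_set (by
      rw [Set.uIcc_of_le hcd, Set.uIcc_of_le (by norm_num : (-1:ℝ) ≤ 1)]
      exact Set.Icc_subset_Icc h1c hd1)
  have i3 : IntervalIntegrable (fun x => φ x * jw α β x) volume (x₀ + δ/2) 1 :=
    hGint.mono_set (by
      rw [Set.uIcc_of_le hd1, Set.uIcc_of_le (by norm_num : (-1:ℝ) ≤ 1)]
      exact Set.Icc_subset_Icc (by linarith) le_rfl)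
  have hsplit : (∫ x in (-1:ℝ)..1, φ x * jw α β x)
      = (∫ x in (-1:ℝ)..(x₀ - δ/2), φ x * jw α β x)
        + (∫ x in (x₀ - δ/2)..(x₀ + δ/2), φ x * jw α β x)
        + ∫ x in (x₀ + δ/2)..1, φ x * jw α β x := by
    rw [← intervalIntegral.integral_add_adjacent_intervals (i1.trans i2) i3,
      ← intervalIntegral.integral_add_adjacent_intervals i1 i2]
  have hnn1 : 0 ≤ ∫ x in (-1:ℝ)..(x₀ - δ/2), φ x * jw α β x :=
    intervalIntegral.integral_nonneg h1c
      (fun x hx => hGnn x ⟨hx.1, by linarith [hx.2]⟩)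
  have hnn3 : 0 ≤ ∫ x in (x₀ + δ/2)..1, φ x * jw α β x :=
    intervalIntegral.integral_nonneg hd1
      (fun x hx => hGnn x ⟨by linarith [hx.1], hx.2⟩)
  have hmid : δ * (φ x₀ * jw α β x₀ / 2) ≤ ∫ x in (x₀ - δ/2)..(x₀ + δ/2), φ x * jw α β x := by
    have hconst : (∫ _x in (x₀ - δ/2)..(x₀ + δ/2), φ x₀ * jw α β x₀ / 2)
        = δ * (φ x₀ * jw α β x₀ / 2) := by
      rw [intervalIntegral.integral_const]
      rw [smul_eq_mul]
      ring_nf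
    rw [← hconst]
    exact intervalIntegral.integral_mono_on hcd intervalIntegrable_const i2
      (fun x hx => (hsub x hx).1.le)
  have : 0 < δ * (φ x₀ * jw α β x₀ / 2) := by positivity
  rw [hsplit]
  linarith

lemma ftc_key (α β : ℝ) (hα : -(1/2:ℝ) ≤ α) (hβ : -(1/2:ℝ) ≤ β)
    (u u' : ℝ → ℂ)
    (hu : ∀ x ∈ Set.Icc (-1:ℝ) 1, HasDerivWithinAt u (u' x) (Set.Icc (-1:ℝ) 1) x)
    (hu' : ContinuousOn u' (Set.Icc (-1:ℝ) 1)) :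
    (∫ x in (-1:ℝ)..1,
      (((β - α - (α + β + 2) * x : ℝ) : ℂ) * u x + ((1 - x ^ 2 : ℝ) : ℂ) * u' x)
        * ((jw α β x : ℝ) : ℂ)) = 0 := by
  have hα1 : (0:ℝ) < α + 1 := by linarith
  have hβ1 : (0:ℝ) < β + 1 := by linarith
  set W : ℝ → ℝ := fun x => (1 - x) ^ (α + 1) * (1 + x) ^ (β + 1) with hW_def
  have hucont : ContinuousOn u (Set.Icc (-1:ℝ) 1) :=
    fun x hx => (hu x hx).continuousWithinAt
  have hWcont : Continuous W := by
    apply Continuous.mul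
    · exact continuous_iff_continuousAt.2 fun x =>
        (continuous_const.sub continuous_id).continuousAt.rpow_const (Or.inr hα1.le)
    · exact continuous_iff_continuousAt.2 fun x =>
        (continuous_const.add continuous_id).continuousAt.rpow_const (Or.inr hβ1.le)
  set g : ℝ → ℂ := fun x => (W x : ℂ) * u x with hg_def
  have hgcont : ContinuousOn g (Set.Icc (-1:ℝ) 1) :=
    (Complex.continuous_ofReal.comp hWcont).continuousOn.mul hucont
  set D : ℝ → ℂ := fun x =>
    (((β - α - (α + β + 2) * x : ℝ) : ℂ) * u x + ((1 - x ^ 2 : ℝ) : ℂ) * u' x)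
      * ((jw α β x : ℝ) : ℂ) with hD_def
  have hderiv : ∀ x ∈ Set.Ioo (-1:ℝ) 1, HasDerivWithinAt g (D x) (Set.Ioi x) x := by
    intro x hx
    have h1x : (0:ℝ) < 1 - x := by linarith [hx.2]
    have h2x : (0:ℝ) < 1 + x := by linarith [hx.1]
    have hmem : Set.Icc (-1:ℝ) 1 ∈ nhds x := Icc_mem_nhds hx.1 hx.2
    have hu_at : HasDerivAt u (u' x) x := (hu x (Set.mem_Icc.2 ⟨hx.1.le, hx.2.le⟩)).hasDerivAt hmem
    have hin1 : HasDerivAt (fun y : ℝ => 1 - y) (-1) x := (hasDerivAt_id x).const_sub 1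
    have hin2 : HasDerivAt (fun y : ℝ => 1 + y) 1 x := by
      simpa using (hasDerivAt_id x).const_add 1
    have hW1 : HasDerivAt (fun y : ℝ => (1 - y) ^ (α + 1)) (-((α + 1) * (1 - x) ^ α)) x := by
      have := (Real.hasDerivAt_rpow_const (x := 1 - x) (p := α + 1) (Or.inl h1x.ne')).comp x hin1
      simpa [add_sub_cancel_right, mul_comm, mul_assoc, Function.comp_def] using this
    have hW2 : HasDerivAt (fun y : ℝ => (1 + y) ^ (β + 1)) ((β + 1) * (1 + x) ^ β) x := by
      have := (Real.hasDerivAt_rpow_const (x := 1 + x) (p := β + 1) (Or.inl h2x.ne')).comp x hin2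
      simpa [add_sub_cancel_right, Function.comp_def] using this
    have hW : HasDerivAt W ((β - α - (α + β + 2) * x) * jw α β x) x := by
      have := hW1.mul hW2
      refine this.congr_deriv ?_
      rw [jw, Real.rpow_add_one h1x.ne', Real.rpow_add_one h2x.ne']
      ring
    have hgd : HasDerivAt g (D x) x := by
      have := hW.ofReal_comp.mul hu_at
      refine this.congr_deriv ?_
      rw [hD_def]
      have hWx : (W x : ℂ) = ((1 - x ^ 2 : ℝ) : ℂ) * ((jw α β x : ℝ) : ℂ) := by
        rw [hW_def]
        push_cast
        rw [jw, Real.rpow_add_one h1x.ne', Real.rpow_add_one h2x.ne']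
        push_cast
        ring
      simp only [hWx]
      push_cast
      ring
    exact hgd.hasDerivWithinAt
  have hint : IntervalIntegrable D volume (-1) 1 := by
    apply intC α β (by linarith) (by linarith)
    apply ContinuousOn.add
    · exact (Complex.continuous_ofReal.comp (by fun_prop)).continuousOn.mul hucont
    · exact (Complex.continuous_ofReal.comp (by fun_prop)).continuousOn.mul hu'
  have := intervalIntegral.integral_eq_sub_of_hasDeriv_right_of_le (by norm_num)
    hgcont hderiv hint
  rw [this, hg_def]
  have hW1 : W 1 = 0 := by
    simp only [hW_def]
    rw [show (1:ℝ) - 1 = 0 by ring, Real.zero_rpow hα1.ne']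
    ring
  have hWm1 : W (-1) = 0 := by
    simp only [hW_def]
    rw [show (1:ℝ) + (-1) = 0 by ring, Real.zero_rpow hβ1.ne']
    ring
  simp [hW1, hWm1]


lemma normsq' (z : ℂ) : ‖z‖^2 = z.re^2 + z.im^2 := by
  rw [Complex.sq_norm, Complex.normSq_apply]; ring

set_option maxHeartbeats 1000000 in
/-- The uncertainty principle for Jacobi expansions: for `f` twice continuously
differentiable on `[-1,1]` with unit norm and `(α−β)+(α+β+2)ε(f) ≠ 0`,
`var_S(f) · Re⟨−L_{αβ}f, f⟩ > (α+β+2)²/4`. -/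
theorem jacobi_uncertainty
    (α β : ℝ) (hα : -(1/2 : ℝ) ≤ α) (hβ : -(1/2 : ℝ) ≤ β)
    (f f' f'' : ℝ → ℂ)
    (hf' : ∀ x ∈ Set.Icc (-1 : ℝ) 1, HasDerivWithinAt f (f' x) (Set.Icc (-1 : ℝ) 1) x)
    (hf'' : ∀ x ∈ Set.Icc (-1 : ℝ) 1, HasDerivWithinAt f' (f'' x) (Set.Icc (-1 : ℝ) 1) x)
    (hf''cont : ContinuousOn f'' (Set.Icc (-1 : ℝ) 1))
    (hnorm : (∫ x in (-1 : ℝ)..1, ‖f x‖ ^ 2 * ((1 - x) ^ α * (1 + x) ^ β)) = 1)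
    (ε : ℝ)
    (hε : ε = ∫ x in (-1 : ℝ)..1, x * ‖f x‖ ^ 2 * ((1 - x) ^ α * (1 + x) ^ β))
    (hne : (α - β) + (α + β + 2) * ε ≠ 0) :
    (1 - ε ^ 2) / |(α - β) / (α + β + 2) + ε| ^ 2 *
      (∫ x in (-1 : ℝ)..1,
        (-(((1 - x ^ 2 : ℝ) : ℂ) * f'' x + ((β - α - (α + β + 2) * x : ℝ) : ℂ) * f' x))
          * (starRingEnd ℂ) (f x) * (((1 - x) ^ α * (1 + x) ^ β : ℝ) : ℂ)).re
      > (α + β + 2) ^ 2 / 4 := by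
  have hα1 : (-1:ℝ) < α := by linarith
  have hβ1 : (-1:ℝ) < β := by linarith
  have hK : (0:ℝ) < α + β + 2 := by linarith
  have hfc : ContinuousOn f (Set.Icc (-1:ℝ) 1) := fun x hx => (hf' x hx).continuousWithinAt
  have hf'c : ContinuousOn f' (Set.Icc (-1:ℝ) 1) := fun x hx => (hf'' x hx).continuousWithinAt
  have hconjf : ContinuousOn (fun x => (starRingEnd ℂ) (f x)) (Set.Icc (-1:ℝ) 1) :=
    Complex.continuous_conj.comp_continuousOn hfc
  have hconjf' : ContinuousOn (fun x => (starRingEnd ℂ) (f' x)) (Set.Icc (-1:ℝ) 1) :=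
    Complex.continuous_conj.comp_continuousOn hf'c
  have hNc : ContinuousOn (fun x => ‖f x‖^2) (Set.Icc (-1:ℝ) 1) := (hfc.norm).pow 2
  have hN'c : ContinuousOn (fun x => ‖f' x‖^2) (Set.Icc (-1:ℝ) 1) := (hf'c.norm).pow 2
  have hrehc : ContinuousOn (fun x => (f' x * (starRingEnd ℂ) (f x)).re) (Set.Icc (-1:ℝ) 1) :=
    Complex.continuous_re.comp_continuousOn (hf'c.mul hconjf)
  have hq2 : ContinuousOn (fun x : ℝ => 1 - x^2) (Set.Icc (-1:ℝ) 1) := by fun_prop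
  have hxNc : ContinuousOn (fun x => x * ‖f x‖^2) (Set.Icc (-1:ℝ) 1) :=
    continuousOn_id.mul hNc
  have hx2Nc : ContinuousOn (fun x => x^2 * ‖f x‖^2) (Set.Icc (-1:ℝ) 1) :=
    (continuousOn_id.pow 2).mul hNc
  have hCc : ContinuousOn (fun x => (1 - x^2) * ‖f x‖^2) (Set.Icc (-1:ℝ) 1) := hq2.mul hNc
  have hAc : ContinuousOn (fun x => (1 - x^2) * ‖f' x‖^2) (Set.Icc (-1:ℝ) 1) := hq2.mul hN'c
  have hDc : ContinuousOn (fun x => (1 - x^2) * (f' x * (starRingEnd ℂ) (f x)).re)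
    (Set.Icc (-1:ℝ) 1) := hq2.mul hrehc
  have hnormJ : (∫ x in (-1:ℝ)..1, ‖f x‖^2 * jw α β x) = 1 := by
    simpa only [jw] using hnorm
  have hεJ : (∫ x in (-1:ℝ)..1, (x * ‖f x‖^2) * jw α β x) = ε := by
    rw [hε]; simp only [jw]
  set A : ℝ := ∫ x in (-1:ℝ)..1, ((1 - x^2) * ‖f' x‖^2) * jw α β x with hA_def
  set C : ℝ := ∫ x in (-1:ℝ)..1, ((1 - x^2) * ‖f x‖^2) * jw α β x with hC_def
  set D : ℝ := ∫ x in (-1:ℝ)..1, ((1 - x^2) * (f' x * (starRingEnd ℂ) (f x)).re) * jw α β x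
    with hD_def
  set X2 : ℝ := ∫ x in (-1:ℝ)..1, (x^2 * ‖f x‖^2) * jw α β x with hX2_def
  set P : ℝ := ∫ x in (-1:ℝ)..1, ((x - ε)^2 * ‖f x‖^2) * jw α β x with hP_def
  have hstar : ∀ g : ℝ → ℂ, (fun x => star (g x)) = (fun x => (starRingEnd ℂ) (g x)) := by
    intro g; funext x; rw [Complex.star_def]
  -- ===== Step E2 : 2*D = (α - β) + (α+β+2)*ε =====
  have h2 := ftc_key α β hα hβ (fun x => f x * (starRingEnd ℂ) (f x))
    (fun x => f' x * (starRingEnd ℂ) (f x) + f x * (starRingEnd ℂ) (f' x))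
    (by
      intro x hx
      have := (hf' x hx).mul ((hf' x hx).star)
      simpa [hstar, Pi.mul_def] using this)
    ((hf'c.mul hconjf).add (hfc.mul hconjf'))
  have hint2 : IntervalIntegrable (fun x =>
      (((β - α - (α + β + 2) * x : ℝ) : ℂ) * (f x * (starRingEnd ℂ) (f x))
        + ((1 - x ^ 2 : ℝ) : ℂ) * (f' x * (starRingEnd ℂ) (f x) + f x * (starRingEnd ℂ) (f' x)))
      * ((jw α β x : ℝ) : ℂ)) volume (-1) 1 := by
    apply intC α β hα1 hβ1
    apply ContinuousOn.add
    · exact (Complex.continuous_ofReal.comp (by fun_prop)).continuousOn.mul (hfc.mul hconjf)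
    · exact (Complex.continuous_ofReal.comp (by fun_prop)).continuousOn.mul
        ((hf'c.mul hconjf).add (hfc.mul hconjf'))
  have e2 : (∫ x in (-1:ℝ)..1,
      ((β - α) * ‖f x‖^2 + (-(α + β + 2)) * (x * ‖f x‖^2)
        + 2 * ((1 - x^2) * (f' x * (starRingEnd ℂ) (f x)).re)) * jw α β x) = 0 := by
    have hre := re_integral hint2
    rw [h2] at hre
    have : (∫ x in (-1:ℝ)..1,
        ((β - α) * ‖f x‖^2 + (-(α + β + 2)) * (x * ‖f x‖^2)
          + 2 * ((1 - x^2) * (f' x * (starRingEnd ℂ) (f x)).re)) * jw α β x)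
        = ∫ x in (-1:ℝ)..1,
          ((((β - α - (α + β + 2) * x : ℝ) : ℂ) * (f x * (starRingEnd ℂ) (f x))
            + ((1 - x ^ 2 : ℝ) : ℂ) * (f' x * (starRingEnd ℂ) (f x)
              + f x * (starRingEnd ℂ) (f' x)))
          * ((jw α β x : ℝ) : ℂ)).re := by
      apply intervalIntegral.integral_congr
      intro x _
      simp only [normsq', Complex.add_re, Complex.mul_re, Complex.ofReal_re, Complex.ofReal_im,
        Complex.conj_re, Complex.conj_im]
      ring
    rw [this, ← hre]
    simp
  rw [jw_comb3 α β hα1 hβ1 (β - α) (-(α + β + 2)) 2 hNc hxNc hDc, hnormJ, hεJ, ← hD_def] at e2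
  have hD2 : 2 * D = (α - β) + (α + β + 2) * ε := by linarith
  -- ===== Step E1 : the goal integral has real part A =====
  have h1 := ftc_key α β hα hβ (fun x => f' x * (starRingEnd ℂ) (f x))
    (fun x => f'' x * (starRingEnd ℂ) (f x) + f' x * (starRingEnd ℂ) (f' x))
    (by
      intro x hx
      have := (hf'' x hx).mul ((hf' x hx).star)
      simpa [hstar, Pi.mul_def] using this)
    ((hf''cont.mul hconjf).add (hf'c.mul hconjf'))
  have hint1 : IntervalIntegrable (fun x =>
      (((β - α - (α + β + 2) * x : ℝ) : ℂ) * (f' x * (starRingEnd ℂ) (f x))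
        + ((1 - x ^ 2 : ℝ) : ℂ) * (f'' x * (starRingEnd ℂ) (f x) + f' x * (starRingEnd ℂ) (f' x)))
      * ((jw α β x : ℝ) : ℂ)) volume (-1) 1 := by
    apply intC α β hα1 hβ1
    apply ContinuousOn.add
    · exact (Complex.continuous_ofReal.comp (by fun_prop)).continuousOn.mul (hf'c.mul hconjf)
    · exact (Complex.continuous_ofReal.comp (by fun_prop)).continuousOn.mul
        ((hf''cont.mul hconjf).add (hf'c.mul hconjf'))
  have hintF2 : IntervalIntegrable (fun x =>
      (((1 - x ^ 2 : ℝ) : ℂ) * (f' x * (starRingEnd ℂ) (f' x)))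
      * ((jw α β x : ℝ) : ℂ)) volume (-1) 1 := by
    apply intC α β hα1 hβ1
    exact (Complex.continuous_ofReal.comp (by fun_prop)).continuousOn.mul (hf'c.mul hconjf')
  have hE1 : (∫ x in (-1 : ℝ)..1,
        (-(((1 - x ^ 2 : ℝ) : ℂ) * f'' x + ((β - α - (α + β + 2) * x : ℝ) : ℂ) * f' x))
          * (starRingEnd ℂ) (f x) * (((1 - x) ^ α * (1 + x) ^ β : ℝ) : ℂ)).re = A := by
    have hsplit : (∫ x in (-1 : ℝ)..1,
        (-(((1 - x ^ 2 : ℝ) : ℂ) * f'' x + ((β - α - (α + β + 2) * x : ℝ) : ℂ) * f' x))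
          * (starRingEnd ℂ) (f x) * (((1 - x) ^ α * (1 + x) ^ β : ℝ) : ℂ))
        = ∫ x in (-1:ℝ)..1,
          (((1 - x ^ 2 : ℝ) : ℂ) * (f' x * (starRingEnd ℂ) (f' x))) * ((jw α β x : ℝ) : ℂ) - (((β - α - (α + β + 2) * x : ℝ) : ℂ) * (f' x * (starRingEnd ℂ) (f x)) + ((1 - x ^ 2 : ℝ) : ℂ) * (f'' x * (starRingEnd ℂ) (f x) + f' x * (starRingEnd ℂ) (f' x))) * ((jw α β x : ℝ) : ℂ) := by
      apply intervalIntegral.integral_congr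
      intro x _
      simp only [jw]
      push_cast
      ring
    rw [hsplit, intervalIntegral.integral_sub hintF2 hint1, h1, sub_zero]
    have hre := re_integral hintF2
    rw [hre]
    rw [hA_def]
    apply intervalIntegral.integral_congr
    intro x _
    simp only [normsq', Complex.mul_re, Complex.ofReal_re, Complex.ofReal_im,
      Complex.conj_re, Complex.conj_im]
    ring
  -- ===== Quadratic nonnegativity =====
  have hquad : ∀ t : ℝ, 0 ≤ 1 * A + (2 * t) * D + t ^ 2 * C := by
    intro t
    have h0 := jw_int_nonneg α β (φ := fun x => (1 - x^2) * ‖f' x + (t:ℂ) * f x‖^2)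
      (fun x hx => mul_nonneg (by nlinarith [hx.1, hx.2]) (by positivity))
    have hcg : (∫ x in (-1:ℝ)..1, ((1 - x^2) * ‖f' x + (t:ℂ) * f x‖^2) * jw α β x)
        = ∫ x in (-1:ℝ)..1,
          (1 * ((1 - x^2) * ‖f' x‖^2) + (2 * t) * ((1 - x^2) * (f' x * (starRingEnd ℂ) (f x)).re)
            + t ^ 2 * ((1 - x^2) * ‖f x‖^2)) * jw α β x := by
      apply intervalIntegral.integral_congr
      intro x _
      simp only [normsq', Complex.add_re, Complex.add_im, Complex.mul_re, Complex.mul_im,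
        Complex.ofReal_re, Complex.ofReal_im, Complex.conj_re, Complex.conj_im]
      ring
    rw [hcg, jw_comb3 α β hα1 hβ1 1 (2*t) (t^2) hAc hDc hCc, ← hA_def, ← hD_def, ← hC_def] at h0
    exact h0
  -- ===== positivity facts =====
  have hx1 : ∃ x₁ ∈ Set.Ioo (-1:ℝ) 1, f x₁ ≠ 0 := by
    by_contra hcon
    push_neg at hcon
    have hz : (∫ x in (-1:ℝ)..1, ‖f x‖^2 * jw α β x) = 0 := by
      have hae : ∀ᵐ x : ℝ, x ∈ Set.uIoc (-1:ℝ) 1 → ‖f x‖^2 * jw α β x = 0 := by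
        have h1 : ∀ᵐ x : ℝ, x ≠ (1:ℝ) := by
          refine ae_iff.2 ?_
          have : {x : ℝ | ¬ x ≠ 1} = {1} := by ext y; simp
          rw [this]
          exact Real.volume_singleton
        filter_upwards [h1] with x hx hmem
        rw [Set.uIoc_of_le (by norm_num : (-1:ℝ) ≤ 1)] at hmem
        have hxIoo : x ∈ Set.Ioo (-1:ℝ) 1 := ⟨hmem.1, lt_of_le_of_ne hmem.2 hx⟩
        rw [hcon x hxIoo]
        simp
      calc (∫ x in (-1:ℝ)..1, ‖f x‖^2 * jw α β x)
          = ∫ x in (-1:ℝ)..1, (0:ℝ) := intervalIntegral.integral_congr_ae hae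
        _ = 0 := by simp
    rw [hnormJ] at hz
    norm_num at hz
  obtain ⟨x₁, hx₁Ioo, hfx₁⟩ := hx1
  have hnn2 : ∀ x ∈ Set.Icc (-1:ℝ) 1, 0 ≤ (1 - x^2) * ‖f x‖^2 :=
    fun x hx => mul_nonneg (by nlinarith [hx.1, hx.2]) (by positivity)
  have hC_pos : 0 < C := by
    rw [hC_def]
    apply jw_int_pos α β hα1 hβ1 hCc hnn2 hx₁Ioo
    have h1 : (0:ℝ) < 1 - x₁^2 := by nlinarith [hx₁Ioo.1, hx₁Ioo.2]
    have h2 : (0:ℝ) < ‖f x₁‖^2 := pow_pos (norm_pos_iff.mpr hfx₁) 2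
    exact mul_pos h1 h2
  have hx0 : ∃ x₀ ∈ Set.Ioo (-1:ℝ) 1, f x₀ ≠ 0 ∧ x₀ ≠ ε := by
    rcases ne_or_eq x₁ ε with h | h
    · exact ⟨x₁, hx₁Ioo, hfx₁, h⟩
    · subst h
      have hce : ContinuousAt f x₁ := hfc.continuousAt
        (mem_nhds_iff.2 ⟨Set.Ioo (-1:ℝ) 1, Ioo_subset_Icc_self, isOpen_Ioo, hx₁Ioo⟩)
      have hev : ∀ᶠ x in nhds x₁, f x ≠ 0 ∧ x ∈ Set.Ioo (-1:ℝ) 1 :=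
        (hce.eventually_ne hfx₁).and (isOpen_Ioo.eventually_mem hx₁Ioo)
      obtain ⟨δ, hδ0, hδ⟩ := Metric.eventually_nhds_iff.mp hev
      have hmem := hδ (y := x₁ + δ/2) (by
        rw [Real.dist_eq, show x₁ + δ/2 - x₁ = δ/2 by ring, abs_of_pos (by linarith)]
        linarith)
      exact ⟨x₁ + δ/2, hmem.2, hmem.1, by intro hc; nlinarith [hc]⟩
  obtain ⟨x₀, hx₀Ioo, hfx₀, hx₀ε⟩ := hx0
  have hP_pos : 0 < P := by
    rw [hP_def]
    have hPc : ContinuousOn (fun x : ℝ => (x - ε)^2 * ‖f x‖^2) (Set.Icc (-1:ℝ) 1) :=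
      ContinuousOn.mul (by fun_prop) hNc
    apply jw_int_pos α β hα1 hβ1 hPc
      (fun x hx => mul_nonneg (sq_nonneg _) (by positivity)) hx₀Ioo
    have h1 : (0:ℝ) < (x₀ - ε)^2 :=
      lt_of_le_of_ne (sq_nonneg _) (Ne.symm (pow_ne_zero 2 (sub_ne_zero.2 hx₀ε)))
    have h2 : (0:ℝ) < ‖f x₀‖^2 := pow_pos (norm_pos_iff.mpr hfx₀) 2
    exact mul_pos h1 h2
  -- ===== algebraic identities among the integrals =====
  have hsum : C + X2 = 1 := by
    have hcg : (∫ x in (-1:ℝ)..1, (1*((1-x^2)*‖f x‖^2) + 1*(x^2*‖f x‖^2)) * jw α β x)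
        = ∫ x in (-1:ℝ)..1, ‖f x‖^2 * jw α β x :=
      intervalIntegral.integral_congr (fun x _ => by ring)
    have hcomb := jw_comb α β hα1 hβ1 1 1 hCc hx2Nc
    rw [hcg, hnormJ] at hcomb
    rw [hC_def, hX2_def]
    linarith [hcomb]
  have hPX : P = X2 - ε^2 := by
    have hcg : P = ∫ x in (-1:ℝ)..1,
        (1 * (x^2 * ‖f x‖^2) + (-(2*ε)) * (x * ‖f x‖^2) + ε^2 * ‖f x‖^2) * jw α β x := by
      rw [hP_def]
      apply intervalIntegral.integral_congr
      intro x _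
      ring
    rw [hcg, jw_comb3 α β hα1 hβ1 1 (-(2*ε)) (ε^2) hx2Nc hxNc hNc, hεJ, hnormJ, ← hX2_def]
    ring
  -- ===== Cauchy-Schwarz =====
  have hCS : D^2 ≤ A * C := by
    have h := hquad (-(D/C))
    have heq : 1 * A + (2 * (-(D/C))) * D + (-(D/C)) ^ 2 * C = A - D^2/C := by
      field_simp
      ring
    rw [heq] at h
    have : D^2/C ≤ A := by linarith
    calc D^2 = D^2/C * C := by field_simp
      _ ≤ A * C := mul_le_mul_of_nonneg_right this hC_pos.le
  have hDne : D ≠ 0 := by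
    intro h
    apply hne
    rw [h] at hD2
    linarith
  have hD2pos : 0 < D^2 := lt_of_le_of_ne (sq_nonneg D) (Ne.symm (pow_ne_zero 2 hDne))
  have hA_pos : 0 < A := by nlinarith
  have hstrictC : C < 1 - ε^2 := by linarith
  have hfinal : D^2 < (1 - ε^2) * A := by nlinarith
  -- ===== conclusion =====
  rw [hE1, sq_abs]
  have hBne : (α - β) / (α + β + 2) + ε ≠ 0 := by
    intro h
    apply hDne
    have : (α + β + 2) * ((α - β) / (α + β + 2) + ε) = 2 * D := by
      field_simp
      linarith
    rw [h, mul_zero] at this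
    linarith
  have hB2 : 0 < ((α - β) / (α + β + 2) + ε)^2 :=
    lt_of_le_of_ne (sq_nonneg _) (Ne.symm (pow_ne_zero 2 hBne))
  have hKB : (α + β + 2) ^ 2 / 4 = D^2 / ((α - β) / (α + β + 2) + ε)^2 := by
    have hB : (α + β + 2) * ((α - β) / (α + β + 2) + ε) = 2 * D := by
      field_simp
      linarith
    have hsq : ((α + β + 2) * ((α - β) / (α + β + 2) + ε))^2 = (2*D)^2 := by rw [hB]
    rw [eq_div_iff (ne_of_gt hB2)]
    nlinarith [hsq]
  rw [hKB, div_mul_eq_mul_div]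
  exact (div_lt_div_iff_of_pos_right hB2).mpr hfinal
end

section
/- For every n ∈ ℕ and every t ∈ ℝ with cos t ≠ cos(π/(2n + 2)), the trigonometric identity 1 + 2 ∑_{k=1}^n cos(kπ/(2n + 2)) cos(kt) = cos((n + 1)t) · cos(nπ/(2n + 2)) / (cos t − cos(π/(2n + 2))) holds. -/
open Real Finset

lemma cheb_key (a t : ℝ) : ∀ n : ℕ,
    (Real.cos t - Real.cos a) *
      (1 + 2 * ∑ k ∈ Finset.Icc 1 n, Real.cos (k * a) * Real.cos (k * t))
    = Real.cos ((n + 1) * t) * Real.cos (n * a)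
      - Real.cos (n * t) * Real.cos ((n + 1) * a) := by
  intro n
  induction n with
  | zero => simp
  | succ n ih =>
    rw [Finset.sum_Icc_succ_top (by omega : 1 ≤ n + 1)]
    push_cast
    push_cast at ih
    have ht2 : ((n : ℝ) + 1 + 1) * t = ((n : ℝ) + 1) * t + t := by ring
    have ht0 : (n : ℝ) * t = ((n : ℝ) + 1) * t - t := by ring
    have ha2 : ((n : ℝ) + 1 + 1) * a = ((n : ℝ) + 1) * a + a := by ring
    have ha0 : (n : ℝ) * a = ((n : ℝ) + 1) * a - a := by ring
    rw [ht2, ha2]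
    rw [ht0, ha0] at ih
    simp only [Real.cos_add, Real.cos_sub] at ih ⊢
    nlinarith [ih]

/-- The explicit trigonometric form of the optimally space localized
Chebyshev polynomial `𝒯_n`. -/
theorem chebyshev_optimal_trig_identity
    (n : ℕ) (t : ℝ)
    (h : Real.cos t ≠ Real.cos (π / (2 * n + 2))) :
    1 + 2 * ∑ k ∈ Finset.Icc 1 n, Real.cos (k * π / (2 * n + 2)) * Real.cos (k * t)
      = Real.cos ((n + 1) * t) * Real.cos (n * π / (2 * n + 2))
          / (Real.cos t - Real.cos (π / (2 * n + 2))) := by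
  set a : ℝ := π / (2 * n + 2) with ha
  have hne : Real.cos t - Real.cos a ≠ 0 := sub_ne_zero.mpr h
  have h2n : (2 * (n : ℝ) + 2) ≠ 0 := by positivity
  have hva : ((n : ℝ) + 1) * a = π / 2 := by
    rw [ha]; field_simp
  have key := cheb_key a t n
  have hsum : ∀ k ∈ Finset.Icc 1 n,
      Real.cos (k * π / (2 * n + 2)) * Real.cos (k * t)
        = Real.cos (k * a) * Real.cos (k * t) := by
    intro k _
    rw [ha, mul_div_assoc]
  rw [Finset.sum_congr rfl hsum]
  have hna : (n : ℝ) * π / (2 * n + 2) = (n : ℝ) * a := by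
    rw [ha, mul_div_assoc]
  rw [hna]
  rw [hva, Real.cos_pi_div_two, mul_zero, sub_zero] at key
  field_simp
  rw [mul_comm t ((n:ℝ)+1), mul_comm a (n:ℝ)]; linarith [key]
end

section
/- For all integers 1 ≤ m ≤ n and every t ∈ ℝ with cos t ≠ cos(π/(n − m + 2)), the trigonometric identity ∑_{k=m}^n [sin((k − m + 1)π/(n − m + 2)) / sin(π/(n − m + 2))] cos(kt) = cos((n − m + 2)t/2) · cos((n + m)t/2) / (cos t − cos(π/(n − m + 2))) holds. -/
open Real Finset

lemma step_trig (a t x y : ℝ) :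
    2 * (Real.cos t - Real.cos a) * (Real.sin x * Real.cos y)
      = (Real.sin x * Real.cos (y - t) - Real.sin (x - a) * Real.cos y)
        - (Real.sin (x + a) * Real.cos y - Real.sin x * Real.cos (y + t)) := by
  simp only [Real.sin_add, Real.sin_sub, Real.cos_add, Real.cos_sub]
  ring

lemma tele (m : ℕ) (a t : ℝ) : ∀ n : ℕ, m ≤ n →
    ∑ k ∈ Finset.Icc m n,
        2 * (Real.cos t - Real.cos a) * (Real.sin (((k : ℝ) - m + 1) * a) * Real.cos (k * t))
      = Real.sin a * Real.cos (((m : ℝ) - 1) * t)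
        - (Real.sin (((n : ℝ) - m + 2) * a) * Real.cos (n * t)
            - Real.sin (((n : ℝ) - m + 1) * a) * Real.cos (((n : ℝ) + 1) * t)) := by
  intro n hn
  induction n, hn using Nat.le_induction with
  | base =>
      rw [Finset.Icc_self, Finset.sum_singleton, step_trig]
      ring_nf
      simp [Real.sin_zero]
  | succ n hn ih =>
      rw [Finset.sum_Icc_succ_top (by omega : m ≤ n + 1), ih, step_trig]
      push_cast
      ring_nf

/-- The explicit trigonometric form of the optimally space localized
band-limited Chebyshev polynomial `𝒯_n^m`. -/
theorem chebyshev_optimal_wavelet_trig_identity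
    (m n : ℕ) (hm : 1 ≤ m) (hmn : m ≤ n) (t : ℝ)
    (h : Real.cos t ≠ Real.cos (π / ((n : ℝ) - m + 2))) :
    ∑ k ∈ Finset.Icc m n,
        (Real.sin (((k : ℝ) - m + 1) * π / ((n : ℝ) - m + 2))
          / Real.sin (π / ((n : ℝ) - m + 2))) * Real.cos (k * t)
      = Real.cos (((n : ℝ) - m + 2) * t / 2) * Real.cos (((n : ℝ) + m) * t / 2)
          / (Real.cos t - Real.cos (π / ((n : ℝ) - m + 2))) := by
  set N : ℝ := (n : ℝ) - m + 2 with hN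
  have hmn' : (m : ℝ) ≤ n := by exact_mod_cast hmn
  have hN2 : (2 : ℝ) ≤ N := by simp [hN]; linarith
  have hNpos : (0 : ℝ) < N := by linarith
  set a : ℝ := π / N with ha
  have hapos : 0 < a := div_pos Real.pi_pos hNpos
  have haltpi : a < π := by
    rw [ha, div_lt_iff₀ hNpos]
    nlinarith [Real.pi_pos]
  have hs : Real.sin a ≠ 0 := ne_of_gt (Real.sin_pos_of_pos_of_lt_pi hapos haltpi)
  have hC : Real.cos t - Real.cos a ≠ 0 := sub_ne_zero.mpr h
  have hNa : N * a = π := by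
    rw [ha, mul_div_cancel₀ _ (ne_of_gt hNpos)]
  have e1 : Real.sin (((n : ℝ) - m + 2) * a) = 0 := by
    rw [← hN, hNa, Real.sin_pi]
  have e2 : Real.sin (((n : ℝ) - m + 1) * a) = Real.sin a := by
    rw [show ((n : ℝ) - m + 1) * a = π - a by rw [← hNa]; ring, Real.sin_pi_sub]
  have key := tele m a t n hmn
  rw [e1, e2] at key
  rw [← Finset.mul_sum] at key
  have hcc := Real.cos_add_cos (((m : ℝ) - 1) * t) (((n : ℝ) + 1) * t)
  rw [show (((m : ℝ) - 1) * t + ((n : ℝ) + 1) * t) / 2 = ((n : ℝ) + m) * t / 2 by ring,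
      show (((m : ℝ) - 1) * t - ((n : ℝ) + 1) * t) / 2 = -(N * t / 2) by rw [hN]; ring,
      Real.cos_neg] at hcc
  have hS : ∑ k ∈ Finset.Icc m n, Real.sin (((k : ℝ) - m + 1) * a) * Real.cos (k * t)
      = Real.sin a * (Real.cos (N * t / 2) * Real.cos (((n : ℝ) + m) * t / 2))
          / (Real.cos t - Real.cos a) := by
    rw [eq_div_iff hC]
    linear_combination key / 2 + (Real.sin a) / 2 * hcc
  calc ∑ k ∈ Finset.Icc m n,
        (Real.sin (((k : ℝ) - m + 1) * π / N) / Real.sin a) * Real.cos (k * t)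
      = (∑ k ∈ Finset.Icc m n, Real.sin (((k : ℝ) - m + 1) * a) * Real.cos (k * t))
          / Real.sin a := by
        rw [Finset.sum_div]
        refine Finset.sum_congr rfl fun k _ => ?_
        rw [ha, ← mul_div_assoc]
        ring
    _ = Real.cos (N * t / 2) * Real.cos (((n : ℝ) + m) * t / 2)
          / (Real.cos t - Real.cos a) := by
        rw [hS]
        field_simp
end

section
/- Let n and m be even natural numbers with 0 ≤ m ≤ n, let λ be the smallest real zero of the associated Laguerre polynomial p_{(n−m)/2+1}^{(−1/2)}(·, m/2), and set κ = (∑_{k=0}^{(n−m)/2} p_k^{(−1/2)}(λ, m/2)²)^{−1/2}. Then the polynomial ℋ_n^m(x) = κ ∑_{l=m/2}^{n/2} p_{l−m/2}^{(−1/2)}(λ, m/2) h_{2l}(x) satisfies ∫_ℝ |ℋ_n^m(x)|² e^{−x²} dx = 1 and ∫_ℝ x² |ℋ_n^m(x)|² e^{−x²} dx = λ. -/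
open MeasureTheory Finset Polynomial


private lemma int_pow_gauss (n : ℕ) : Integrable fun x : ℝ => x ^ n * Real.exp (-x ^ 2) := by
  have := integrable_rpow_mul_exp_neg_mul_sq (b := 1) one_pos
    (s := (n : ℝ)) (lt_of_lt_of_le (by norm_num) (Nat.cast_nonneg n))
  simpa [Real.rpow_natCast] using this

private lemma int_poly_gauss (P : Polynomial ℝ) :
    Integrable fun x : ℝ => P.eval x * Real.exp (-x ^ 2) := by
  have : (fun x : ℝ => P.eval x * Real.exp (-x ^ 2))
      = fun x => ∑ i ∈ range (P.natDegree + 1), P.coeff i * (x ^ i * Real.exp (-x ^ 2)) := by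
    funext x
    rw [Polynomial.eval_eq_sum_range, Finset.sum_mul]
    simp [mul_assoc]
  rw [this]
  exact integrable_finset_sum _ fun i _ => (int_pow_gauss i).const_mul _

private lemma int_poly_gamma (P : Polynomial ℝ) :
    IntegrableOn (fun x : ℝ => P.eval x * (x ^ (-(1/2 : ℝ)) * Real.exp (-x))) (Set.Ioi 0) := by
  have key : ∀ i : ℕ, IntegrableOn
      (fun x : ℝ => x ^ i * (x ^ (-(1/2 : ℝ)) * Real.exp (-x))) (Set.Ioi 0) := by
    intro i
    have h1 : (0:ℝ) < i + 1/2 := by positivity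
    refine (Real.GammaIntegral_convergent h1).congr_fun (fun x hx => ?_) measurableSet_Ioi
    have hx' : (0:ℝ) < x := hx
    rw [show ((i:ℝ) + 1/2) - 1 = (i:ℝ) + (-(1/2 : ℝ)) by ring]
    beta_reduce
    rw [Real.rpow_add hx',
      Real.rpow_natCast]
    ring
  have : (fun x : ℝ => P.eval x * (x ^ (-(1/2 : ℝ)) * Real.exp (-x)))
      = fun x => ∑ i ∈ range (P.natDegree + 1),
          P.coeff i * (x ^ i * (x ^ (-(1/2 : ℝ)) * Real.exp (-x))) := by
    funext x
    rw [Polynomial.eval_eq_sum_range, Finset.sum_mul]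
    simp [mul_assoc]
  rw [this]
  exact integrable_finset_sum _ fun i _ => ((key i).const_mul _)

private lemma span_lemma (p : ℕ → Polynomial ℝ) (hpd : ∀ l, (p l).natDegree = l)
    (hpl : ∀ l, 0 < (p l).leadingCoeff) :
    ∀ (d : ℕ) (P : Polynomial ℝ), P.natDegree ≤ d →
      ∃ c : ℕ → ℝ, P = ∑ j ∈ Finset.range (d + 1), c j • p j := by
  intro d
  induction d with
  | zero =>
    intro P hP
    have hp0 : p 0 = C ((p 0).coeff 0) := eq_C_of_natDegree_le_zero (le_of_eq (hpd 0))
    have ha : (p 0).coeff 0 ≠ 0 := by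
      have := hpl 0
      rw [Polynomial.leadingCoeff, hpd 0] at this
      exact ne_of_gt this
    refine ⟨fun _ => P.coeff 0 / (p 0).coeff 0, ?_⟩
    rw [Finset.sum_range_one]
    show P = (P.coeff 0 / (p 0).coeff 0) • p 0
    conv_lhs => rw [eq_C_of_natDegree_le_zero hP]
    conv_rhs => rw [hp0]
    rw [Polynomial.smul_C, smul_eq_mul, Polynomial.coeff_C_zero, div_mul_cancel₀ _ ha]
  | succ d IH =>
    intro P hP
    set r : ℝ := P.coeff (d + 1) / (p (d + 1)).leadingCoeff with hr
    have hlead : (p (d + 1)).coeff (d + 1) = (p (d + 1)).leadingCoeff := by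
      rw [Polynomial.leadingCoeff, hpd]
    have hlne : (p (d + 1)).leadingCoeff ≠ 0 := ne_of_gt (hpl (d + 1))
    have hP' : (P - r • p (d + 1)).natDegree ≤ d := by
      rw [Polynomial.natDegree_le_iff_coeff_eq_zero]
      intro N hN
      rw [Polynomial.coeff_sub, Polynomial.coeff_smul, smul_eq_mul]
      rcases eq_or_lt_of_le (Nat.succ_le_of_lt hN) with hEq | hLt
      · rw [← hEq, hlead, hr, div_mul_cancel₀ _ hlne, sub_self]
      · rw [Polynomial.coeff_eq_zero_of_natDegree_lt (lt_of_le_of_lt hP hLt),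
          Polynomial.coeff_eq_zero_of_natDegree_lt (by rw [hpd]; exact hLt), mul_zero, sub_zero]
    obtain ⟨c, hc⟩ := IH _ hP'
    refine ⟨fun j => if j = d + 1 then r else c j, ?_⟩
    show P = ∑ j ∈ Finset.range (d + 1 + 1), (if j = d + 1 then r else c j) • p j
    rw [Finset.sum_range_succ, if_pos rfl]
    have h1 : ∑ j ∈ Finset.range (d + 1), (if j = d + 1 then r else c j) • p j
        = ∑ j ∈ Finset.range (d + 1), c j • p j :=
      Finset.sum_congr rfl fun j hj => by rw [if_neg (Nat.ne_of_lt (Finset.mem_range.mp hj))]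
    rw [h1, ← hc]
    exact (sub_add_cancel _ _).symm

private lemma orthonormal_unique (L : Polynomial ℝ → ℝ)
    (Ladd : ∀ P Q, L (P + Q) = L P + L Q)
    (Lsmul : ∀ (r : ℝ) (P : Polynomial ℝ), L (r • P) = r * L P)
    (p q : ℕ → Polynomial ℝ)
    (hpd : ∀ l, (p l).natDegree = l) (hqd : ∀ l, (q l).natDegree = l)
    (hpl : ∀ l, 0 < (p l).leadingCoeff) (hql : ∀ l, 0 < (q l).leadingCoeff)
    (hpo : ∀ k l, L (p k * p l) = if k = l then 1 else 0)
    (hqo : ∀ k l, L (q k * q l) = if k = l then 1 else 0) :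
    ∀ l, q l = p l := by
  have L0 : L 0 = 0 := by
    have := Lsmul 0 0
    simpa using this
  have Lsum : ∀ (s : Finset ℕ) (f : ℕ → Polynomial ℝ),
      L (∑ j ∈ s, f j) = ∑ j ∈ s, L (f j) := by
    intro s f
    induction s using Finset.induction_on with
    | empty => simpa using L0
    | insert _ _ hnot ih => rw [Finset.sum_insert hnot, Finset.sum_insert hnot, Ladd, ih]
  intro l
  induction l using Nat.strong_induction_on with
  | _ l IH =>
    obtain ⟨c, hc⟩ := span_lemma p hpd hpl l (q l) (le_of_eq (hqd l))
    have hcj : ∀ j, j < l → c j = 0 := by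
      intro j hj
      have e1 : L (q l * p j) = 0 := by
        rw [← IH j hj, hqo l j, if_neg (Nat.ne_of_gt hj)]
      have e2 : L (q l * p j) = c j := by
        conv_lhs => rw [hc]
        rw [Finset.sum_mul, Lsum]
        have : ∀ i ∈ Finset.range (l + 1), L ((c i • p i) * p j) = c i * (if i = j then 1 else 0) := by
          intro i _
          rw [smul_mul_assoc, Lsmul, hpo]
        rw [Finset.sum_congr rfl this]
        simp only [mul_ite, mul_one, mul_zero, Finset.sum_ite_eq', Finset.mem_range]
        rw [if_pos (by omega)]
      rw [e1] at e2; exact e2.symm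
    have hql2 : q l = c l • p l := by
      rw [hc, Finset.sum_range_succ]
      have : ∑ j ∈ Finset.range l, c j • p j = 0 := by
        apply Finset.sum_eq_zero
        intro j hj
        rw [hcj j (Finset.mem_range.mp hj), zero_smul]
      rw [this, zero_add]
    have hc2 : c l ^ 2 = 1 := by
      have := hqo l l
      rw [if_pos rfl, hql2] at this
      rw [smul_mul_assoc, mul_smul_comm, Lsmul, Lsmul, hpo l l, if_pos rfl] at this
      nlinarith [this]
    have hclpos : 0 < c l := by
      have hlc : (q l).coeff l = c l * (p l).coeff l := by
        rw [hql2, Polynomial.coeff_smul, smul_eq_mul]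
      have h1 : 0 < (q l).coeff l := by
        have := hql l; rwa [Polynomial.leadingCoeff, hqd] at this
      have h2 : 0 < (p l).coeff l := by
        have := hpl l; rwa [Polynomial.leadingCoeff, hpd] at this
      nlinarith
    have : c l = 1 := by nlinarith
    rw [hql2, this, one_smul]

private lemma coeff_comp_neg (p : Polynomial ℝ) (i : ℕ) :
    (p.comp (-X)).coeff i = (-1) ^ i * p.coeff i := by
  induction p using Polynomial.induction_on' with
  | add p q hp hq => simp [Polynomial.add_comp, hp, hq, mul_add]
  | monomial n a =>
    rw [Polynomial.monomial_comp, neg_pow, ← Polynomial.C_1, ← Polynomial.C_neg, ← Polynomial.C_pow]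
    rw [← mul_assoc, ← Polynomial.C_mul]
    simp only [Polynomial.coeff_C_mul, Polynomial.coeff_X_pow, Polynomial.coeff_monomial]
    by_cases hni : n = i
    · subst hni; simp [mul_comm]
    · simp [hni, Ne.symm hni]

private lemma sum_pair (f : ℕ → ℝ) (N : ℕ) :
    ∑ j ∈ Finset.range (2 * N), f j = ∑ i ∈ Finset.range N, (f (2 * i) + f (2 * i + 1)) := by
  induction N with
  | zero => simp
  | succ N IH =>
    rw [Finset.sum_range_succ, ← IH, Nat.mul_succ, show 2*N+2 = (2*N+1)+1 from rfl,
      Finset.sum_range_succ, Finset.sum_range_succ]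
    ring

private lemma LL_eq_gauss (P : Polynomial ℝ) :
    (∫ y in Set.Ioi (0:ℝ), P.eval y * (y ^ (-(1/2 : ℝ)) * Real.exp (-y)))
      = ∫ x : ℝ, P.eval (x ^ 2) * Real.exp (-x ^ 2) := by
  set g : ℝ → ℝ := fun y => P.eval y * (y ^ (-(1/2 : ℝ)) * Real.exp (-y)) with hg
  have h1 : (∫ x : ℝ, P.eval (x ^ 2) * Real.exp (-x ^ 2))
      = 2 * ∫ x in Set.Ioi (0:ℝ), P.eval (x ^ 2) * Real.exp (-x ^ 2) := by
    rw [← integral_comp_abs (f := fun x => P.eval (x ^ 2) * Real.exp (-x ^ 2))]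
    congr 1; funext x; simp [sq_abs]
  have h2 : (∫ x in Set.Ioi (0:ℝ), (|(2:ℝ)| * x ^ ((2:ℝ) - 1)) • g (x ^ (2:ℝ)))
      = ∫ y in Set.Ioi (0:ℝ), g y :=
    integral_comp_rpow_Ioi g two_ne_zero
  rw [← h2]
  have h3 : ∀ x ∈ Set.Ioi (0:ℝ), (|(2:ℝ)| * x ^ ((2:ℝ) - 1)) • g (x ^ (2:ℝ))
      = 2 * (P.eval (x ^ 2) * Real.exp (-x ^ 2)) := by
    intro x hx
    have hx' : (0:ℝ) < x := hx
    have hrpow2 : x ^ (2:ℝ) = x ^ 2 := by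
      rw [show (2:ℝ) = ((2:ℕ):ℝ) by norm_num, Real.rpow_natCast]
    have hhalf : (x ^ (2:ℝ)) ^ (-(1/2 : ℝ)) = x⁻¹ := by
      rw [← Real.rpow_mul hx'.le, show (2:ℝ) * (-(1/2:ℝ)) = -1 by norm_num, Real.rpow_neg_one]
    rw [hg]
    simp only [smul_eq_mul]
    rw [hhalf, hrpow2, show ((2:ℝ) - 1) = 1 by norm_num, Real.rpow_one,
      show |(2:ℝ)| = 2 from abs_of_pos two_pos]
    field_simp
  rw [MeasureTheory.setIntegral_congr_fun measurableSet_Ioi h3, MeasureTheory.integral_const_mul,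
    ← h1]

private lemma hermite_laguerre_link
    (h : ℕ → Polynomial ℝ)
    (hdeg : ∀ l, (h l).natDegree = l)
    (hlead : ∀ l, 0 < (h l).leadingCoeff)
    (horth : ∀ k l, (∫ x : ℝ, (h k).eval x * (h l).eval x * Real.exp (-x ^ 2))
      = if k = l then 1 else 0)
    (qm : ℕ → Polynomial ℝ)
    (hqmdeg : ∀ l, (qm l).natDegree = l)
    (hqmlead : ∀ l, 0 < (qm l).leadingCoeff)
    (hqmorth : ∀ k l, (∫ x in Set.Ioi (0 : ℝ),
        (qm k).eval x * (qm l).eval x * (x ^ (-(1/2 : ℝ)) * Real.exp (-x)))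
      = if k = l then 1 else 0) :
    ∀ l x, (h (2 * l)).eval x = (qm l).eval (x ^ 2) := by
  -- the Hermite linear functional
  set LH : Polynomial ℝ → ℝ := fun P => ∫ x : ℝ, P.eval x * Real.exp (-x ^ 2) with hLH
  have LHadd : ∀ P Q, LH (P + Q) = LH P + LH Q := by
    intro P Q
    rw [hLH]
    simp only [Polynomial.eval_add, add_mul]
    exact integral_add (int_poly_gauss P) (int_poly_gauss Q)
  have LHsmul : ∀ (r : ℝ) (P : Polynomial ℝ), LH (r • P) = r * LH P := by
    intro r P
    rw [hLH]
    simp only [Polynomial.eval_smul, smul_eq_mul, mul_assoc]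
    exact MeasureTheory.integral_const_mul r _
  have horth' : ∀ k l, LH (h k * h l) = if k = l then 1 else 0 := by
    intro k l
    rw [hLH]
    simpa only [Polynomial.eval_mul] using horth k l
  -- parity
  have hpar : ∀ l, ((-1 : ℝ)) ^ l • (h l).comp (-X) = h l := by
    have hnX : (-X : Polynomial ℝ).natDegree = 1 := by simp
    have hnXl : (-X : Polynomial ℝ).leadingCoeff = -1 := by simp
    set g : ℕ → Polynomial ℝ := fun l => ((-1 : ℝ)) ^ l • (h l).comp (-X) with hgdef
    have hCg : ∀ l, g l = C ((-1 : ℝ) ^ l) * (h l).comp (-X) := by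
      intro l; rw [hgdef]; simp [Polynomial.smul_eq_C_mul]
    have hsq : ∀ l : ℕ, ((-1 : ℝ)) ^ l * ((-1 : ℝ)) ^ l = 1 := by
      intro l; rw [← pow_add, ← two_mul, pow_mul]; norm_num
    have gdeg : ∀ l, (g l).natDegree = l := by
      intro l
      rw [hCg, Polynomial.natDegree_C_mul (by positivity : ((-1:ℝ))^l ≠ 0),
        Polynomial.natDegree_comp, hnX, hdeg, mul_one]
    have glead : ∀ l, 0 < (g l).leadingCoeff := by
      intro l
      rw [hCg, Polynomial.leadingCoeff_mul, Polynomial.leadingCoeff_C,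
        Polynomial.leadingCoeff_comp (by rw [hnX]; norm_num), hnXl, hdeg]
      calc (0:ℝ) < (h l).leadingCoeff := hlead l
      _ = (-1:ℝ)^l * ((h l).leadingCoeff * (-1)^l) := by
          rw [show (-1:ℝ)^l * ((h l).leadingCoeff * (-1)^l) = ((-1:ℝ)^l * (-1)^l) * (h l).leadingCoeff by ring, hsq, one_mul]
    have gorth : ∀ k l, LH (g k * g l) = if k = l then 1 else 0 := by
      intro k l
      have ev : ∀ x : ℝ, (g k * g l).eval x * Real.exp (-x ^ 2)
          = ((-1:ℝ))^(k+l) * ((h k).eval (-x) * (h l).eval (-x) * Real.exp (-(-x) ^ 2)) := by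
        intro x
        rw [hgdef]
        simp only [Polynomial.eval_mul, Polynomial.eval_smul, smul_eq_mul,
          Polynomial.eval_comp, Polynomial.eval_neg, Polynomial.eval_X, neg_sq, pow_add]
        ring
      rw [hLH]
      simp only [ev]
      have hneg : (∫ a : ℝ, (h k).eval (-a) * (h l).eval (-a) * Real.exp (-(-a) ^ 2))
          = ∫ a : ℝ, (h k).eval a * (h l).eval a * Real.exp (-a ^ 2) :=
        integral_neg_eq_self (fun x : ℝ => (h k).eval x * (h l).eval x * Real.exp (-x ^ 2)) volume
      rw [MeasureTheory.integral_const_mul, hneg, horth k l]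
      by_cases hkl : k = l
      · subst hkl; rw [if_pos rfl, mul_one, ← two_mul, pow_mul]; norm_num
      · rw [if_neg hkl, mul_zero]
    exact orthonormal_unique LH LHadd LHsmul h g hdeg gdeg hlead glead horth' gorth
  -- odd coefficients of h (2l) vanish
  have hodd : ∀ l i, (h (2 * l)).coeff (2 * i + 1) = 0 := by
    intro l i
    have h1 : (h (2 * l)).comp (-X) = h (2 * l) := by
      have := hpar (2 * l)
      rwa [pow_mul, neg_one_sq, one_pow, one_smul] at this
    have h2 := coeff_comp_neg (h (2 * l)) (2 * i + 1)
    rw [h1, pow_succ, pow_mul, neg_one_sq, one_pow, one_mul] at h2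
    linarith [h2]
  -- the even-part polynomials
  set Q : ℕ → Polynomial ℝ := fun l => ∑ i ∈ Finset.range (l + 1),
    C ((h (2 * l)).coeff (2 * i)) * X ^ i with hQdef
  have Qcoeff : ∀ l j, (Q l).coeff j
      = if j < l + 1 then (h (2 * l)).coeff (2 * j) else 0 := by
    intro l j
    rw [hQdef]
    simp only [Polynomial.finset_sum_coeff, Polynomial.coeff_C_mul, Polynomial.coeff_X_pow,
      mul_ite, mul_one, mul_zero, Finset.sum_ite_eq, Finset.mem_range]
  have Qdeg : ∀ l, (Q l).natDegree = l := by
    intro l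
    have hub : (Q l).natDegree ≤ l := by
      rw [Polynomial.natDegree_le_iff_coeff_eq_zero]
      intro N hN
      rw [Qcoeff, if_neg (by omega)]
    have hlb : (Q l).coeff l ≠ 0 := by
      rw [Qcoeff, if_pos (by omega)]
      have := hlead (2 * l)
      rw [Polynomial.leadingCoeff, hdeg] at this
      exact ne_of_gt this
    exact le_antisymm hub (Polynomial.le_natDegree_of_ne_zero hlb)
  have Qlead : ∀ l, 0 < (Q l).leadingCoeff := by
    intro l
    rw [Polynomial.leadingCoeff, Qdeg, Qcoeff, if_pos (by omega)]
    have := hlead (2 * l); rwa [Polynomial.leadingCoeff, hdeg] at this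
  have Qeval : ∀ l x, (Q l).eval (x ^ 2) = (h (2 * l)).eval x := by
    intro l x
    have hev2 : (h (2 * l)).eval x
        = ∑ j ∈ Finset.range (2 * (l + 1)), (h (2 * l)).coeff j * x ^ j := by
      conv_lhs => rw [Polynomial.eval_eq_sum_range (p := h (2 * l)) x]
      rw [hdeg, show 2 * (l + 1) = (2 * l + 1) + 1 by ring, Finset.sum_range_succ,
        Finset.sum_range_succ, hodd l l, zero_mul, add_zero, ← Finset.sum_range_succ]
    rw [hev2, _root_.sum_pair, hQdef]
    simp only [Polynomial.eval_finset_sum, Polynomial.eval_mul, Polynomial.eval_C,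
      Polynomial.eval_pow, Polynomial.eval_X]
    refine Finset.sum_congr rfl fun i _ => ?_
    rw [hodd l i, zero_mul, add_zero, ← pow_mul]
  -- the Laguerre linear functional
  set LL : Polynomial ℝ → ℝ :=
    fun P => ∫ y in Set.Ioi (0:ℝ), P.eval y * (y ^ (-(1/2 : ℝ)) * Real.exp (-y)) with hLL
  have LLadd : ∀ P R, LL (P + R) = LL P + LL R := by
    intro P R
    simp only [hLL, Polynomial.eval_add, add_mul]
    exact integral_add (int_poly_gamma P) (int_poly_gamma R)
  have LLsmul : ∀ (r : ℝ) (P : Polynomial ℝ), LL (r • P) = r * LL P := by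
    intro r P
    simp only [hLL, Polynomial.eval_smul, smul_eq_mul, mul_assoc]
    exact MeasureTheory.integral_const_mul r _
  have qmorth' : ∀ k l, LL (qm k * qm l) = if k = l then 1 else 0 := by
    intro k l
    simp only [hLL, Polynomial.eval_mul]
    simpa only [Polynomial.eval_mul] using hqmorth k l
  have Qorth : ∀ k l, LL (Q k * Q l) = if k = l then 1 else 0 := by
    intro k l
    simp only [hLL]
    rw [LL_eq_gauss (Q k * Q l)]
    have hptw : ∀ x : ℝ, (Q k * Q l).eval (x ^ 2) * Real.exp (-x ^ 2)
        = (h (2 * k)).eval x * (h (2 * l)).eval x * Real.exp (-x ^ 2) := by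
      intro x; rw [Polynomial.eval_mul, Qeval, Qeval]
    simp only [hptw]
    rw [horth (2 * k) (2 * l)]
    by_cases hkl : k = l
    · subst hkl; rw [if_pos rfl, if_pos rfl]
    · rw [if_neg (by omega : ¬ 2 * k = 2 * l), if_neg hkl]
  have hQqm : ∀ l, Q l = qm l :=
    orthonormal_unique LL LLadd LLsmul qm Q hqmdeg Qdeg hqmlead Qlead qmorth' Qorth
  intro l x
  rw [← hQqm l, Qeval]

/-- The polynomial `ℋ_n^m(x) = κ ∑_{l=m/2}^{n/2} p_{l−m/2}^{(−1/2)}(λ, m/2) h_{2l}(x)`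
has unit norm and position variance equal to the smallest zero `λ` of
`p_{(n−m)/2+1}^{(−1/2)}(·, m/2)`. -/
theorem hermite_optimal_polynomial
    (h : ℕ → Polynomial ℝ)
    (hdeg : ∀ l, (h l).natDegree = l)
    (hlead : ∀ l, 0 < (h l).leadingCoeff)
    (horth : ∀ k l, (∫ x : ℝ, (h k).eval x * (h l).eval x * Real.exp (-x ^ 2))
      = if k = l then 1 else 0)
    (qm : ℕ → Polynomial ℝ) (am bm : ℕ → ℝ)
    (hqmdeg : ∀ l, (qm l).natDegree = l)
    (hqmlead : ∀ l, 0 < (qm l).leadingCoeff)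
    (hqmorth : ∀ k l, (∫ x in Set.Ioi (0 : ℝ),
        (qm k).eval x * (qm l).eval x * (x ^ (-(1/2 : ℝ)) * Real.exp (-x)))
      = if k = l then 1 else 0)
    (hbm : ∀ l, 0 < bm l)
    (hqmrec : ∀ l x, bm (l + 1) * (qm (l + 1)).eval x
      = (x - am l) * (qm l).eval x - bm l * (if l = 0 then 0 else (qm (l - 1)).eval x))
    (m n : ℕ) (hm : Even m) (hn : Even n) (hmn : m ≤ n)
    (qa : ℕ → ℝ → ℝ)
    (hqa0 : ∀ x, qa 0 x = 1)
    (hqarec : ∀ l x, bm (m / 2 + l + 1) * qa (l + 1) x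
      = (x - am (m / 2 + l)) * qa l x - bm (m / 2 + l) * (if l = 0 then 0 else qa (l - 1) x))
    (lam : ℝ)
    (hzero : qa ((n - m) / 2 + 1) lam = 0)
    (hsmallest : ∀ μ : ℝ, qa ((n - m) / 2 + 1) μ = 0 → lam ≤ μ)
    (κ : ℝ)
    (hκ : κ = (Real.sqrt (∑ k ∈ Finset.range ((n - m) / 2 + 1), (qa k lam) ^ 2))⁻¹)
    (H : ℝ → ℝ)
    (hH : ∀ x, H x = κ * ∑ l ∈ Finset.Icc (m / 2) (n / 2),
      qa (l - m / 2) lam * (h (2 * l)).eval x) :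
    (∫ x : ℝ, (H x) ^ 2 * Real.exp (-x ^ 2)) = 1 ∧
    (∫ x : ℝ, x ^ 2 * (H x) ^ 2 * Real.exp (-x ^ 2)) = lam := by
  have link := hermite_laguerre_link h hdeg hlead horth qm hqmdeg hqmlead hqmorth
  set c := m / 2 with hc
  set N := (n - m) / 2 with hN
  have hm2 : m % 2 = 0 := Nat.even_iff.mp hm
  have hn2 : n % 2 = 0 := Nat.even_iff.mp hn
  have hn2c : n / 2 = c + N := by omega
  set v : ℕ → ℝ := fun k => qa k lam with hv
  set S : ℝ := ∑ k ∈ Finset.range (N + 1), v k ^ 2 with hS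
  have hSpos : 0 < S := by
    rw [hS]
    have h0 : (0:ℕ) ∈ Finset.range (N + 1) := Finset.mem_range.mpr (by omega)
    have : (1:ℝ) ≤ ∑ k ∈ Finset.range (N + 1), v k ^ 2 := by
      have := Finset.single_le_sum (f := fun k => v k ^ 2)
        (fun i _ => sq_nonneg (v i)) h0
      rw [hv] at this ⊢
      simpa [hqa0 lam] using this
    linarith
  have hκ2 : κ ^ 2 = S⁻¹ := by
    rw [hκ, ← Real.sqrt_inv, Real.sq_sqrt (inv_nonneg.mpr hSpos.le)]
  -- rewrite H as a range sum
  have hHx : ∀ x, H x = κ * ∑ k ∈ Finset.range (N + 1), v k * (h (2 * (c + k))).eval x := by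
    intro x
    rw [hH x, hn2c]
    congr 1
    rw [← Finset.Ico_add_one_right_eq_Icc, Finset.sum_Ico_eq_sum_range]
    refine Finset.sum_congr (by congr 1; omega) fun k hk => ?_
    congr 2
    omega
  -- integrability of basic products
  have intHH : ∀ a b : ℕ, Integrable fun x : ℝ =>
      (h a).eval x * (h b).eval x * Real.exp (-x ^ 2) := by
    intro a b
    have := int_poly_gauss (h a * h b)
    simpa only [Polynomial.eval_mul] using this
  -- double sum expansion of the square
  have hsq : ∀ (x : ℝ) (w : ℝ), (H x) ^ 2 * w
      = ∑ k ∈ Finset.range (N + 1), ∑ j ∈ Finset.range (N + 1),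
          (κ * v k) * (κ * v j) * ((h (2 * (c + k))).eval x * (h (2 * (c + j))).eval x * w) := by
    intro x w
    rw [hHx x]
    rw [show (κ * ∑ k ∈ Finset.range (N + 1), v k * (h (2 * (c + k))).eval x) ^ 2 * w
      = (∑ k ∈ Finset.range (N + 1), v k * (h (2 * (c + k))).eval x)
        * (∑ j ∈ Finset.range (N + 1), v j * (h (2 * (c + j))).eval x) * (κ * κ * w) by ring]
    rw [Finset.sum_mul_sum, Finset.sum_mul]
    refine Finset.sum_congr rfl fun k _ => ?_
    rw [Finset.sum_mul]
    refine Finset.sum_congr rfl fun j _ => ?_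
    ring
  constructor
  · -- norm
    have : (∫ x : ℝ, (H x) ^ 2 * Real.exp (-x ^ 2))
        = ∑ k ∈ Finset.range (N + 1), ∑ j ∈ Finset.range (N + 1),
            (κ * v k) * (κ * v j) * (if 2 * (c + k) = 2 * (c + j) then (1:ℝ) else 0) := by
      rw [show (fun x : ℝ => (H x) ^ 2 * Real.exp (-x ^ 2)) = fun x =>
          ∑ k ∈ Finset.range (N + 1), ∑ j ∈ Finset.range (N + 1),
            (κ * v k) * (κ * v j) * ((h (2 * (c + k))).eval x * (h (2 * (c + j))).eval x
              * Real.exp (-x ^ 2)) from funext fun x => hsq x _]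
      rw [MeasureTheory.integral_finset_sum _ fun k _ =>
        integrable_finset_sum _ fun j _ => ((intHH _ _).const_mul _)]
      refine Finset.sum_congr rfl fun k _ => ?_
      rw [MeasureTheory.integral_finset_sum _ fun j _ => ((intHH _ _).const_mul _)]
      refine Finset.sum_congr rfl fun j _ => ?_
      rw [MeasureTheory.integral_const_mul, horth]
    rw [this]
    have : ∀ k ∈ Finset.range (N + 1), ∑ j ∈ Finset.range (N + 1),
        (κ * v k) * (κ * v j) * (if 2 * (c + k) = 2 * (c + j) then (1:ℝ) else 0)
        = κ ^ 2 * v k ^ 2 := by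
      intro k hk
      have : ∀ j ∈ Finset.range (N + 1),
          (κ * v k) * (κ * v j) * (if 2 * (c + k) = 2 * (c + j) then (1:ℝ) else 0)
          = if j = k then κ ^ 2 * v k ^ 2 else 0 := by
        intro j _
        by_cases hjk : j = k
        · subst hjk; rw [if_pos rfl, if_pos rfl]; ring
        · rw [if_neg (by omega), if_neg hjk, mul_zero]
      rw [Finset.sum_congr rfl this, Finset.sum_ite_eq' _ _ _, if_pos hk]
    rw [Finset.sum_congr rfl this, ← Finset.mul_sum, ← hS, hκ2]
    exact inv_mul_cancel₀ (ne_of_gt hSpos)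
  · -- variance
    have hrec_eval : ∀ (b : ℕ) (x : ℝ), x ^ 2 * (h (2 * b)).eval x
        = bm (b + 1) * (h (2 * (b + 1))).eval x + am b * (h (2 * b)).eval x
          + bm b * (if b = 0 then 0 else (h (2 * (b - 1))).eval x) := by
      intro b x
      have hq := hqmrec b (x ^ 2)
      by_cases hb : b = 0
      · subst hb
        rw [if_pos rfl] at hq ⊢
        rw [link 0 x, link 1 x]
        linarith [hq]
      · rw [if_neg hb] at hq ⊢
        rw [link b x, link (b + 1) x, link (b - 1) x]
        linarith [hq]
    have intXHH : ∀ a b : ℕ, Integrable fun x : ℝ =>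
        x ^ 2 * ((h a).eval x * (h b).eval x * Real.exp (-x ^ 2)) := by
      intro a b
      refine (int_poly_gauss (X ^ 2 * h a * h b)).congr (Filter.Eventually.of_forall fun x => ?_)
      simp only [Polynomial.eval_mul, Polynomial.eval_pow, Polynomial.eval_X]
      ring
    have hA : ∀ a b : ℕ, (∫ x : ℝ, x ^ 2 * ((h (2 * a)).eval x * (h (2 * b)).eval x
          * Real.exp (-x ^ 2)))
        = (if b + 1 = a then bm a else 0) + (if b = a then am a else 0)
          + (if b = a + 1 then bm b else 0) := by
      intro a b
      have e2 : am b * (if 2 * a = 2 * b then (1:ℝ) else 0) = (if b = a then am a else 0) := by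
        by_cases hx : b = a
        · rw [if_pos (by omega), if_pos hx, mul_one, hx]
        · rw [if_neg (by omega), if_neg hx, mul_zero]
      have e1 : bm (b + 1) * (if 2 * a = 2 * (b + 1) then (1:ℝ) else 0)
          = (if b + 1 = a then bm a else 0) := by
        by_cases hx : b + 1 = a
        · rw [if_pos (by omega), if_pos hx, mul_one, hx]
        · rw [if_neg (by omega), if_neg hx, mul_zero]
      by_cases hb : b = 0
      · subst hb
        have hptw : ∀ x : ℝ, x ^ 2 * ((h (2 * a)).eval x * (h (2 * 0)).eval x
              * Real.exp (-x ^ 2))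
            = bm 1 * ((h (2 * a)).eval x * (h (2 * 1)).eval x * Real.exp (-x ^ 2))
              + am 0 * ((h (2 * a)).eval x * (h (2 * 0)).eval x * Real.exp (-x ^ 2)) := by
          intro x
          have hr := hrec_eval 0 x
          rw [if_pos rfl] at hr
          calc x ^ 2 * ((h (2 * a)).eval x * (h (2 * 0)).eval x * Real.exp (-x ^ 2))
              = (x ^ 2 * (h (2 * 0)).eval x) * ((h (2 * a)).eval x * Real.exp (-x ^ 2)) := by
                ring
            _ = _ := by rw [hr]; ring
        rw [show (fun x : ℝ => x ^ 2 * ((h (2 * a)).eval x * (h (2 * 0)).eval x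
            * Real.exp (-x ^ 2))) = fun x => bm 1 * ((h (2 * a)).eval x * (h (2 * 1)).eval x
            * Real.exp (-x ^ 2)) + am 0 * ((h (2 * a)).eval x * (h (2 * 0)).eval x
            * Real.exp (-x ^ 2)) from funext hptw]
        have i1 : Integrable fun x : ℝ => bm 1 * ((h (2 * a)).eval x * (h (2 * 1)).eval x
            * Real.exp (-x ^ 2)) := (intHH _ _).const_mul _
        have i2 : Integrable fun x : ℝ => am 0 * ((h (2 * a)).eval x * (h (2 * 0)).eval x
            * Real.exp (-x ^ 2)) := (intHH _ _).const_mul _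
        rw [MeasureTheory.integral_add i1 i2,
          MeasureTheory.integral_const_mul, MeasureTheory.integral_const_mul, horth, horth]
        rw [show (2 * 1 : ℕ) = 2 * (0 + 1) by norm_num] at *
        rw [e1, e2]
        rw [if_neg (by omega : ¬ (0 : ℕ) = a + 1), add_zero]
      · have hptw : ∀ x : ℝ, x ^ 2 * ((h (2 * a)).eval x * (h (2 * b)).eval x
              * Real.exp (-x ^ 2))
            = bm (b + 1) * ((h (2 * a)).eval x * (h (2 * (b + 1))).eval x * Real.exp (-x ^ 2))
              + am b * ((h (2 * a)).eval x * (h (2 * b)).eval x * Real.exp (-x ^ 2))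
              + bm b * ((h (2 * a)).eval x * (h (2 * (b - 1))).eval x * Real.exp (-x ^ 2)) := by
          intro x
          have hr := hrec_eval b x
          rw [if_neg hb] at hr
          calc x ^ 2 * ((h (2 * a)).eval x * (h (2 * b)).eval x * Real.exp (-x ^ 2))
              = (x ^ 2 * (h (2 * b)).eval x) * ((h (2 * a)).eval x * Real.exp (-x ^ 2)) := by
                ring
            _ = _ := by rw [hr]; ring
        rw [show (fun x : ℝ => x ^ 2 * ((h (2 * a)).eval x * (h (2 * b)).eval x
            * Real.exp (-x ^ 2))) = fun x =>
              bm (b + 1) * ((h (2 * a)).eval x * (h (2 * (b + 1))).eval x * Real.exp (-x ^ 2))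
              + am b * ((h (2 * a)).eval x * (h (2 * b)).eval x * Real.exp (-x ^ 2))
              + bm b * ((h (2 * a)).eval x * (h (2 * (b - 1))).eval x * Real.exp (-x ^ 2))
            from funext hptw]
        have i1 : Integrable fun x : ℝ => bm (b + 1) * ((h (2 * a)).eval x
            * (h (2 * (b + 1))).eval x * Real.exp (-x ^ 2)) := (intHH _ _).const_mul _
        have i2 : Integrable fun x : ℝ => am b * ((h (2 * a)).eval x * (h (2 * b)).eval x
            * Real.exp (-x ^ 2)) := (intHH _ _).const_mul _
        have i3 : Integrable fun x : ℝ => bm b * ((h (2 * a)).eval x * (h (2 * (b - 1))).eval x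
            * Real.exp (-x ^ 2)) := (intHH _ _).const_mul _
        have i12 : Integrable fun x : ℝ => bm (b + 1) * ((h (2 * a)).eval x
            * (h (2 * (b + 1))).eval x * Real.exp (-x ^ 2)) + am b * ((h (2 * a)).eval x
            * (h (2 * b)).eval x * Real.exp (-x ^ 2)) := i1.add i2
        rw [MeasureTheory.integral_add i12 i3, MeasureTheory.integral_add i1 i2,
          MeasureTheory.integral_const_mul, MeasureTheory.integral_const_mul,
          MeasureTheory.integral_const_mul, horth, horth, horth, e1, e2]
        have e3 : bm b * (if 2 * a = 2 * (b - 1) then (1:ℝ) else 0)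
            = (if b = a + 1 then bm b else 0) := by
          by_cases hx : b = a + 1
          · rw [if_pos (by omega), if_pos hx, mul_one]
          · rw [if_neg (by omega), if_neg hx, mul_zero]
        rw [e3]
    -- expand the integral into a double sum
    have hsq2 : ∀ x : ℝ, x ^ 2 * H x ^ 2 * Real.exp (-x ^ 2)
        = ∑ k ∈ Finset.range (N + 1), ∑ j ∈ Finset.range (N + 1),
            (κ * v k) * (κ * v j) * (x ^ 2 * ((h (2 * (c + k))).eval x
              * (h (2 * (c + j))).eval x * Real.exp (-x ^ 2))) := by
      intro x
      have h0 := hsq x (Real.exp (-x ^ 2))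
      calc x ^ 2 * H x ^ 2 * Real.exp (-x ^ 2)
          = x ^ 2 * (H x ^ 2 * Real.exp (-x ^ 2)) := by ring
        _ = _ := by
            rw [h0, Finset.mul_sum]
            refine Finset.sum_congr rfl fun k _ => ?_
            rw [Finset.mul_sum]
            refine Finset.sum_congr rfl fun j _ => ?_
            ring
    have hI2 : (∫ x : ℝ, x ^ 2 * H x ^ 2 * Real.exp (-x ^ 2))
        = ∑ k ∈ Finset.range (N + 1), ∑ j ∈ Finset.range (N + 1),
            (κ * v k) * (κ * v j) * ((if j + 1 = k then bm (c + k) else 0)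
              + (if j = k then am (c + k) else 0)
              + (if j = k + 1 then bm (c + j) else 0)) := by
      rw [show (fun x : ℝ => x ^ 2 * H x ^ 2 * Real.exp (-x ^ 2)) = fun x =>
          ∑ k ∈ Finset.range (N + 1), ∑ j ∈ Finset.range (N + 1),
            (κ * v k) * (κ * v j) * (x ^ 2 * ((h (2 * (c + k))).eval x
              * (h (2 * (c + j))).eval x * Real.exp (-x ^ 2))) from funext hsq2]
      rw [MeasureTheory.integral_finset_sum _ fun k _ =>
        integrable_finset_sum _ fun j _ => ((intXHH _ _).const_mul _)]
      refine Finset.sum_congr rfl fun k _ => ?_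
      rw [MeasureTheory.integral_finset_sum _ fun j _ => ((intXHH _ _).const_mul _)]
      refine Finset.sum_congr rfl fun j _ => ?_
      rw [MeasureTheory.integral_const_mul, hA (c + k) (c + j)]
      have g1 : (if c + j + 1 = c + k then bm (c + k) else 0)
          = (if j + 1 = k then bm (c + k) else 0) := by
        by_cases hx : j + 1 = k
        · rw [if_pos (by omega), if_pos hx]
        · rw [if_neg (by omega), if_neg hx]
      have g2 : (if c + j = c + k then am (c + k) else 0)
          = (if j = k then am (c + k) else 0) := by
        by_cases hx : j = k
        · rw [if_pos (by omega), if_pos hx]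
        · rw [if_neg (by omega), if_neg hx]
      have g3 : (if c + j = c + k + 1 then bm (c + j) else 0)
          = (if j = k + 1 then bm (c + j) else 0) := by
        by_cases hx : j = k + 1
        · rw [if_pos (by omega), if_pos hx]
        · rw [if_neg (by omega), if_neg hx]
      rw [g1, g2, g3]
    rw [hI2]
    -- evaluate the inner sums using the recurrence for qa at lam
    have hinner : ∀ k ∈ Finset.range (N + 1),
        (∑ j ∈ Finset.range (N + 1), (κ * v k) * (κ * v j) * ((if j + 1 = k then bm (c + k) else 0)
          + (if j = k then am (c + k) else 0)
          + (if j = k + 1 then bm (c + j) else 0)))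
        = (κ * v k) * (κ * (lam * v k)) := by
      intro k hk
      have hkN : k ≤ N := by
        have := Finset.mem_range.mp hk
        omega
      have step1 : ∀ j ∈ Finset.range (N + 1),
          (κ * v k) * (κ * v j) * ((if j + 1 = k then bm (c + k) else 0)
            + (if j = k then am (c + k) else 0)
            + (if j = k + 1 then bm (c + j) else 0))
          = (κ * v k) * ((if j = k - 1 then (if k = 0 then 0 else κ * v j * bm (c + k)) else 0)
            + (if j = k then κ * v j * am (c + k) else 0)
            + (if j = k + 1 then κ * v j * bm (c + j) else 0)) := by
        intro j _
        have t1 : (κ * v j) * (if j + 1 = k then bm (c + k) else 0)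
            = (if j = k - 1 then (if k = 0 then 0 else κ * v j * bm (c + k)) else 0) := by
          by_cases h1 : j + 1 = k
          · rw [if_pos h1, if_pos (by omega), if_neg (by omega)]
          · rw [if_neg h1, mul_zero]
            by_cases h2 : j = k - 1
            · rw [if_pos h2, if_pos (by omega)]
            · rw [if_neg h2]
        have t2 : (κ * v j) * (if j = k then am (c + k) else 0)
            = (if j = k then κ * v j * am (c + k) else 0) := by
          by_cases h1 : j = k
          · rw [if_pos h1, if_pos h1]
          · rw [if_neg h1, if_neg h1, mul_zero]
        have t3 : (κ * v j) * (if j = k + 1 then bm (c + j) else 0)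
            = (if j = k + 1 then κ * v j * bm (c + j) else 0) := by
          by_cases h1 : j = k + 1
          · rw [if_pos h1, if_pos h1]
          · rw [if_neg h1, if_neg h1, mul_zero]
        calc (κ * v k) * (κ * v j) * ((if j + 1 = k then bm (c + k) else 0)
              + (if j = k then am (c + k) else 0)
              + (if j = k + 1 then bm (c + j) else 0))
            = (κ * v k) * ((κ * v j) * (if j + 1 = k then bm (c + k) else 0)
              + (κ * v j) * (if j = k then am (c + k) else 0)
              + (κ * v j) * (if j = k + 1 then bm (c + j) else 0)) := by ring
          _ = _ := by rw [t1, t2, t3]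
      rw [Finset.sum_congr rfl step1, ← Finset.mul_sum]
      congr 1
      rw [Finset.sum_add_distrib, Finset.sum_add_distrib]
      rw [Finset.sum_ite_eq' (Finset.range (N + 1)) (k - 1)
          (fun j => if k = 0 then 0 else κ * v j * bm (c + k)),
        Finset.sum_ite_eq' (Finset.range (N + 1)) k (fun j => κ * v j * am (c + k)),
        Finset.sum_ite_eq' (Finset.range (N + 1)) (k + 1) (fun j => κ * v j * bm (c + j))]
      rw [if_pos (Finset.mem_range.mpr (by omega)), if_pos hk]
      have s3 : (if k + 1 ∈ Finset.range (N + 1) then κ * v (k + 1) * bm (c + (k + 1)) else 0)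
          = κ * v (k + 1) * bm (c + k + 1) := by
        by_cases hkN' : k + 1 ∈ Finset.range (N + 1)
        · rw [if_pos hkN']
          congr 2
        · rw [if_neg hkN']
          have hkeq : k = N := by
            have hnlt : ¬ (k + 1 < N + 1) := fun hh => hkN' (Finset.mem_range.mpr hh)
            omega
          have : v (k + 1) = 0 := by
            rw [hv]
            simp only []
            rw [hkeq]
            exact hzero
          rw [this]
          ring
      rw [s3]
      have hrec := hqarec k lam
      simp only [hv]
      by_cases hk0 : k = 0
      · subst hk0
        rw [if_pos rfl] at hrec ⊢
        simp only [Nat.add_zero, Nat.zero_add, mul_zero, sub_zero] at hrec ⊢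
        rw [zero_add]
        linear_combination κ * hrec
      · rw [if_neg hk0] at hrec ⊢
        linear_combination κ * hrec
    rw [Finset.sum_congr rfl hinner]
    have : ∀ k ∈ Finset.range (N + 1), (κ * v k) * (κ * (lam * v k))
        = lam * (κ ^ 2 * v k ^ 2) := by
      intro k _
      ring
    rw [Finset.sum_congr rfl this, ← Finset.mul_sum, ← Finset.mul_sum, hκ2, ← hS,
      inv_mul_cancel₀ (ne_of_gt hSpos), mul_one]
end

section
/- Let n be an even natural number and let λ ∈ ℝ be a zero of the Laguerre polynomial p_{n/2+1}^{(−1/2)}. Then for every x ∈ ℝ with x² ≠ λ, the optimally space localized Hermite expansion admits the explicit form ∑_{l=0}^{n/2} p_l^{(−1/2)}(λ) h_{2l}(x) = b_{n/2+1}^{(−1/2)} p_{n/2}^{(−1/2)}(λ) h_{n+2}(x) / (x² − λ). (Here one uses the classical relation h_{2l}(x) = p_l^{(−1/2)}(x²), which holds for these normalizations.) -/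
open MeasureTheory Finset

section Aux
open Set Polynomial Real

-- integrability lemmas
lemma intH (p : Polynomial ℝ) : Integrable (fun x : ℝ => p.eval x * Real.exp (-x^2)) := by
  have hev : (fun x : ℝ => p.eval x * Real.exp (-x^2))
      = fun x => ∑ i ∈ Finset.range (p.natDegree + 1), p.coeff i * (x ^ i * Real.exp (-x^2)) := by
    funext x; rw [p.eval_eq_sum_range x, Finset.sum_mul]
    exact Finset.sum_congr rfl fun i _ => by ring
  rw [hev]
  apply integrable_finset_sum
  intro i _
  apply Integrable.const_mul
  have := integrable_rpow_mul_exp_neg_mul_sq (b := 1) one_pos (s := (i:ℝ))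
    (lt_of_lt_of_le neg_one_lt_zero (Nat.cast_nonneg i))
  simpa [Real.rpow_natCast] using this

lemma intL (p : Polynomial ℝ) :
    Integrable (fun t : ℝ => p.eval t * (t ^ (-(1/2:ℝ)) * Real.exp (-t)))
      (volume.restrict (Ioi 0)) := by
  have hev : (fun t : ℝ => p.eval t * (t ^ (-(1/2:ℝ)) * Real.exp (-t)))
      = fun t => ∑ i ∈ Finset.range (p.natDegree + 1),
          p.coeff i * (t ^ i * (t ^ (-(1/2:ℝ)) * Real.exp (-t))) := by
    funext t; rw [p.eval_eq_sum_range t, Finset.sum_mul]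
    exact Finset.sum_congr rfl fun i _ => by ring
  rw [hev]
  apply integrable_finset_sum
  intro i _
  apply Integrable.const_mul
  have h := Real.GammaIntegral_convergent (s := (i:ℝ) + 1/2) (by positivity)
  apply h.congr_fun ?_ measurableSet_Ioi
  intro t ht
  rw [Set.mem_Ioi] at ht
  dsimp only
  rw [show ((i:ℝ) + 1/2 - 1) = (i:ℝ) + (-(1/2:ℝ)) by ring, Real.rpow_add ht,
    Real.rpow_natCast]
  ring

lemma integral_odd (f : ℝ → ℝ) (hf : ∀ x, f (-x) = -f x) : (∫ x : ℝ, f x) = 0 := by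
  have h1 : (∫ x : ℝ, f (-x)) = ∫ x, f x := by
    have := (Measure.measurePreserving_neg (volume : Measure ℝ)).integral_comp
      (Homeomorph.neg ℝ).measurableEmbedding f
    simpa using this
  have h2 : (∫ x : ℝ, f (-x)) = -∫ x, f x := by
    simp_rw [hf]
    exact integral_neg f
  linarith [h1.symm.trans h2]

lemma cov (f : Polynomial ℝ) :
    (∫ x : ℝ, f.eval (x^2) * Real.exp (-x^2))
      = ∫ t in Ioi (0:ℝ), f.eval t * (t ^ (-(1/2:ℝ)) * Real.exp (-t)) := by
  have h1 : (∫ x : ℝ, f.eval (x^2) * Real.exp (-x^2))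
      = 2 * ∫ x in Ioi (0:ℝ), f.eval (x^2) * Real.exp (-x^2) := by
    rw [← integral_comp_abs (f := fun t => f.eval (t^2) * Real.exp (-t^2))]
    congr 1; funext x; rw [sq_abs]
  have h2 : (∫ t in Ioi (0:ℝ), f.eval t * (t ^ (-(1/2:ℝ)) * Real.exp (-t)))
      = ∫ x in Ioi (0:ℝ), ((2:ℝ) * x ^ ((2:ℝ) - 1)) •
          (fun t => f.eval t * (t ^ (-(1/2:ℝ)) * Real.exp (-t))) (x ^ (2:ℝ)) :=
    (integral_comp_rpow_Ioi_of_pos zero_lt_two).symm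
  rw [h1, h2, ← MeasureTheory.integral_const_mul]
  apply setIntegral_congr_fun measurableSet_Ioi
  intro x hx
  rw [Set.mem_Ioi] at hx
  have hx2 : (x:ℝ) ^ (2:ℝ) = x ^ 2 := by
    rw [show ((2:ℝ)) = ((2:ℕ):ℝ) by norm_num, Real.rpow_natCast]
  have hxr : (x ^ 2 : ℝ) ^ (-(1/2:ℝ)) = x⁻¹ := by
    rw [← hx2, ← Real.rpow_mul hx.le]
    norm_num
    rw [Real.rpow_neg_one]
  dsimp only
  rw [hx2, hxr, show ((2:ℝ) - 1) = 1 by norm_num, Real.rpow_one, smul_eq_mul]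
  field_simp

lemma orth_lowdeg (μ : Measure ℝ) (w : ℝ → ℝ) (P : ℕ → Polynomial ℝ)
    (hP : ∀ l, (P l).natDegree = l) (hPl : ∀ l, (P l).leadingCoeff ≠ 0)
    (hint : ∀ p : Polynomial ℝ, Integrable (fun x => p.eval x * w x) μ)
    (horth : ∀ k l, (∫ x, (P k).eval x * (P l).eval x * w x ∂μ) = if k = l then 1 else 0) :
    ∀ d : ℕ, ∀ m : ℕ, ∀ p : Polynomial ℝ, p.natDegree ≤ d → d < m →
      (∫ x, (P m).eval x * p.eval x * w x ∂μ) = 0 := by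
  have key : ∀ (a b : Polynomial ℝ), Integrable (fun x => a.eval x * b.eval x * w x) μ := by
    intro a b
    have := hint (a * b)
    simpa [Polynomial.eval_mul, mul_assoc] using this
  intro d
  induction d with
  | zero =>
    intro m p hp hdm
    have h0 : (P 0).natDegree = 0 := hP 0
    set c : ℝ := p.coeff 0 / (P 0).coeff 0 with hc
    have hP0 : (P 0).coeff 0 ≠ 0 := by
      have := hPl 0
      rwa [Polynomial.leadingCoeff, h0] at this
    have hpc : ∀ x, p.eval x = c * (P 0).eval x := by
      intro x
      have hpeq : p = Polynomial.C (p.coeff 0) := Polynomial.eq_C_of_natDegree_le_zero hp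
      have hP0eq : P 0 = Polynomial.C ((P 0).coeff 0) := Polynomial.eq_C_of_natDegree_le_zero h0.le
      rw [hpeq]
      conv_rhs => rw [hP0eq]
      simp [hc]
      field_simp
    have : (fun x => (P m).eval x * p.eval x * w x)
        = fun x => c * ((P m).eval x * (P 0).eval x * w x) := by
      funext x; rw [hpc x]; ring
    rw [this, MeasureTheory.integral_const_mul, horth m 0, if_neg (by omega)]
    ring
  | succ d ih =>
    intro m p hp hdm
    set c : ℝ := p.coeff (d+1) / (P (d+1)).leadingCoeff with hc
    set r : Polynomial ℝ := p - Polynomial.C c * P (d+1) with hr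
    have hlc : (Polynomial.C c * P (d+1)).coeff (d+1) = p.coeff (d+1) := by
      rw [Polynomial.coeff_C_mul]
      have : (P (d+1)).coeff (d+1) = (P (d+1)).leadingCoeff := by
        rw [Polynomial.leadingCoeff, hP (d+1)]
      rw [this, hc, div_mul_cancel₀ _ (hPl (d+1))]
    have hrd : r.natDegree ≤ d := by
      rw [Polynomial.natDegree_le_iff_coeff_eq_zero]
      intro N hN
      rw [hr, Polynomial.coeff_sub]
      rcases eq_or_lt_of_le (Nat.succ_le_of_lt hN) with h | h
      · rw [← h, hlc, sub_self]
      · have h1 : p.coeff N = 0 := Polynomial.coeff_eq_zero_of_natDegree_lt (lt_of_le_of_lt hp h)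
        have h2 : (Polynomial.C c * P (d+1)).coeff N = 0 := by
          apply Polynomial.coeff_eq_zero_of_natDegree_lt
          calc (Polynomial.C c * P (d+1)).natDegree
              ≤ (Polynomial.C c).natDegree + (P (d+1)).natDegree := Polynomial.natDegree_mul_le
            _ < N := by rw [Polynomial.natDegree_C, hP (d+1)]; omega
        rw [h1, h2, sub_self]
    have hsplit : (fun x => (P m).eval x * p.eval x * w x)
        = fun x => c * ((P m).eval x * (P (d+1)).eval x * w x)
            + (P m).eval x * r.eval x * w x := by
      funext x
      have hpx : p.eval x = c * (P (d+1)).eval x + r.eval x := by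
        rw [hr]; simp only [eval_sub, eval_mul, eval_C]; ring
      rw [hpx]; ring
    rw [hsplit, MeasureTheory.integral_add ((key _ _).const_mul c) (key _ _),
      MeasureTheory.integral_const_mul, horth m (d+1), if_neg (by omega),
      ih m r hrd (by omega)]
    ring

lemma bridge
    (h : ℕ → Polynomial ℝ)
    (hdeg : ∀ l, (h l).natDegree = l)
    (hlead : ∀ l, 0 < (h l).leadingCoeff)
    (horth : ∀ k l, (∫ x : ℝ, (h k).eval x * (h l).eval x * Real.exp (-x ^ 2))
      = if k = l then 1 else 0)
    (qm : ℕ → Polynomial ℝ)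
    (hqmdeg : ∀ l, (qm l).natDegree = l)
    (hqmlead : ∀ l, 0 < (qm l).leadingCoeff)
    (hqmorth : ∀ k l, (∫ x in Set.Ioi (0 : ℝ),
        (qm k).eval x * (qm l).eval x * (x ^ (-(1/2 : ℝ)) * Real.exp (-x)))
      = if k = l then 1 else 0)
    (l : ℕ) (x : ℝ) : (h (2 * l)).eval x = (qm l).eval (x ^ 2) := by
  have hsq : ∀ y : ℝ, -y^2 = -(y^2) := fun y => rfl
  set g : Polynomial ℝ := (qm l).comp (X ^ 2) with hg
  have hgeval : ∀ y : ℝ, g.eval y = (qm l).eval (y ^ 2) := by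
    intro y; simp [hg, eval_comp]
  have hgdeg : g.natDegree = 2 * l := by
    rw [hg, natDegree_comp, natDegree_X_pow, hqmdeg, mul_comm]
  have hglead : g.leadingCoeff = (qm l).leadingCoeff := by
    rw [hg, leadingCoeff_comp (by rw [natDegree_X_pow]; norm_num)]
    simp [leadingCoeff_X_pow]
  have keyI : ∀ a b : Polynomial ℝ,
      Integrable (fun y : ℝ => a.eval y * b.eval y * Real.exp (-y^2)) := by
    intro a b
    have := intH (a * b)
    simpa [Polynomial.eval_mul, mul_assoc] using this
  -- g is orthogonal to low-degree monomials
  have keyg : ∀ k, k < 2 * l →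
      (∫ y : ℝ, g.eval y * y ^ k * Real.exp (-y^2)) = 0 := by
    intro k hk
    rcases Nat.even_or_odd k with ⟨i, hi⟩ | ⟨i, hi⟩
    · -- even, k = i + i
      have hil : i < l := by omega
      have heq : (fun y : ℝ => g.eval y * y ^ k * Real.exp (-y^2))
          = fun y => (qm l * X ^ i).eval (y ^ 2) * Real.exp (-(y^2)) := by
        funext y
        rw [eval_mul, eval_pow, eval_X, hgeval, hi]
        rw [show y ^ (i + i) = (y ^ 2) ^ i by rw [← pow_mul]; ring_nf]
      rw [heq, cov (qm l * X ^ i)]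
      have horth' := orth_lowdeg (volume.restrict (Ioi 0))
        (fun t => t ^ (-(1/2:ℝ)) * Real.exp (-t)) qm hqmdeg
        (fun j => (hqmlead j).ne') intL hqmorth i l (X ^ i) (by simp) hil
      refine Eq.trans ?_ horth'
      apply setIntegral_congr_fun measurableSet_Ioi
      intro t _
      dsimp only
      simp only [Polynomial.eval_mul]
    · -- odd
      apply integral_odd
      intro y
      have hodd : Odd k := ⟨i, by omega⟩
      rw [hgeval, hgeval, neg_sq, hodd.neg_pow]
      ring
  have keyh : ∀ k, k < 2 * l →
      (∫ y : ℝ, (h (2 * l)).eval y * y ^ k * Real.exp (-y^2)) = 0 := by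
    intro k hk
    have := orth_lowdeg volume (fun y => Real.exp (-y^2)) h hdeg
      (fun j => (hlead j).ne') intH horth k (2 * l) (X ^ k) (by simp) hk
    simpa using this
  -- the difference polynomial
  set a : ℝ := (h (2 * l)).leadingCoeff with ha
  set b : ℝ := (qm l).leadingCoeff with hb
  set d : Polynomial ℝ := C a * g - C b * h (2 * l) with hd
  have hdeval : ∀ y : ℝ, d.eval y = a * g.eval y - b * (h (2 * l)).eval y := by
    intro y; simp [hd]
  have keyd : ∀ k, k < 2 * l →
      (∫ y : ℝ, d.eval y * y ^ k * Real.exp (-y^2)) = 0 := by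
    intro k hk
    have hsplit : (fun y : ℝ => d.eval y * y ^ k * Real.exp (-y^2))
        = fun y => a * (g.eval y * y ^ k * Real.exp (-y^2))
            - b * ((h (2 * l)).eval y * y ^ k * Real.exp (-y^2)) := by
      funext y; rw [hdeval]; ring
    have hgi : Integrable (fun y : ℝ => g.eval y * y ^ k * Real.exp (-y^2)) := by
      have := keyI g (X ^ k); simpa using this
    have hhi : Integrable (fun y : ℝ => (h (2 * l)).eval y * y ^ k * Real.exp (-y^2)) := by
      have := keyI (h (2 * l)) (X ^ k); simpa using this
    rw [hsplit, integral_sub (hgi.const_mul a) (hhi.const_mul b),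
      MeasureTheory.integral_const_mul, MeasureTheory.integral_const_mul,
      keyg k hk, keyh k hk]
    ring
  have hddeg : d.natDegree ≤ 2 * l := by
    apply le_trans (natDegree_sub_le _ _)
    apply max_le
    · exact le_trans (natDegree_C_mul_le _ _) (le_of_eq hgdeg)
    · exact le_trans (natDegree_C_mul_le _ _) (le_of_eq (hdeg (2 * l)))
  have hdcoeff : d.coeff (2 * l) = 0 := by
    rw [hd, coeff_sub, coeff_C_mul, coeff_C_mul]
    have h1 : g.coeff (2 * l) = b := by
      rw [← hgdeg, Polynomial.coeff_natDegree, hglead]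
    have h2 : (h (2 * l)).coeff (2 * l) = a := by
      have h2' := Polynomial.coeff_natDegree (p := h (2 * l))
      rwa [hdeg (2 * l)] at h2'
    rw [h1, h2]; ring
  have hdzero : d = 0 := by
    by_contra hdne
    have hdlt : d.natDegree < 2 * l := by
      rcases lt_or_eq_of_le hddeg with hlt | heq
      · exact hlt
      · exfalso
        have : d.leadingCoeff = 0 := by
          rw [Polynomial.leadingCoeff, heq, hdcoeff]
        exact hdne (Polynomial.leadingCoeff_eq_zero.mp this)
    -- ∫ d² w = 0
    have hdd : (∫ y : ℝ, d.eval y * d.eval y * Real.exp (-y^2)) = 0 := by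
      have hsplit : (fun y : ℝ => d.eval y * d.eval y * Real.exp (-y^2))
          = fun y => ∑ k ∈ Finset.range (2 * l),
              d.coeff k * (d.eval y * y ^ k * Real.exp (-y^2)) := by
        funext y
        have hstep : ∑ k ∈ Finset.range (2 * l),
            d.coeff k * (d.eval y * y ^ k * Real.exp (-y^2))
            = (∑ k ∈ Finset.range (2 * l), d.coeff k * y ^ k)
                * (d.eval y * Real.exp (-y^2)) := by
          rw [Finset.sum_mul]
          exact Finset.sum_congr rfl fun k _ => by ring
        rw [hstep, ← Polynomial.eval_eq_sum_range' hdlt]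
        ring
      rw [hsplit, integral_finset_sum]
      · apply Finset.sum_eq_zero
        intro k hk
        rw [MeasureTheory.integral_const_mul, keyd k (Finset.mem_range.mp hk)]
        ring
      · intro k _
        apply Integrable.const_mul
        have := keyI d (X ^ k); simpa using this
    have hnn : ∀ y : ℝ, 0 ≤ d.eval y * d.eval y * Real.exp (-y^2) := by
      intro y
      exact mul_nonneg (mul_self_nonneg _) (Real.exp_pos _).le
    have hae : (fun y : ℝ => d.eval y * d.eval y * Real.exp (-y^2)) =ᵐ[volume] 0 := by
      rw [← MeasureTheory.integral_eq_zero_iff_of_nonneg]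
      · exact hdd
      · intro y; exact hnn y
      · exact keyI d d
    have hcont : Continuous (fun y : ℝ => d.eval y * d.eval y * Real.exp (-y^2)) := by
      fun_prop
    have hzero : (fun y : ℝ => d.eval y * d.eval y * Real.exp (-y^2)) = 0 :=
      (Continuous.ae_eq_iff_eq volume hcont continuous_const).mp hae
    apply hdne
    apply Polynomial.funext
    intro y
    have h0 : d.eval y * d.eval y * Real.exp (-y^2) = 0 := by
      have := congrFun hzero y
      simpa using this
    have hmm : d.eval y * d.eval y = 0 := by
      rcases mul_eq_zero.mp h0 with hh | hh
      · exact hh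
      · exact absurd hh (Real.exp_ne_zero _)
    simp [mul_self_eq_zero.mp hmm]
  -- from d = 0 conclude a • g = b • h and then equality
  have heq : ∀ y : ℝ, a * g.eval y = b * (h (2 * l)).eval y := by
    intro y
    have hzz : a * eval y g - b * eval y (h (2 * l)) = 0 := by
      rw [← hdeval y, hdzero, Polynomial.eval_zero]
    linarith
  -- norms
  have hg1 : (∫ y : ℝ, g.eval y * g.eval y * Real.exp (-y^2)) = 1 := by
    have hcov := cov (qm l * qm l)
    have hl : (fun y : ℝ => (qm l * qm l).eval (y ^ 2) * Real.exp (-y^2))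
        = fun y => g.eval y * g.eval y * Real.exp (-y^2) := by
      funext y; rw [Polynomial.eval_mul, hgeval]
    rw [hl] at hcov
    rw [hcov]
    have := hqmorth l l
    simp only [if_pos rfl] at this
    refine Eq.trans ?_ this
    apply setIntegral_congr_fun measurableSet_Ioi
    intro t _
    simp only [Polynomial.eval_mul]
  have hh1 : (∫ y : ℝ, (h (2 * l)).eval y * (h (2 * l)).eval y * Real.exp (-y^2)) = 1 := by
    have := horth (2 * l) (2 * l)
    simpa using this
  -- a² = b²
  have hab2 : a ^ 2 = b ^ 2 := by
    have e1 : (∫ y : ℝ, (a * g.eval y) * (a * g.eval y) * Real.exp (-y^2)) = a ^ 2 := by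
      have : (fun y : ℝ => (a * g.eval y) * (a * g.eval y) * Real.exp (-y^2))
          = fun y => a ^ 2 * (g.eval y * g.eval y * Real.exp (-y^2)) := by
        funext y; ring
      rw [this, MeasureTheory.integral_const_mul, hg1, mul_one]
    have e2 : (∫ y : ℝ, (b * (h (2*l)).eval y) * (b * (h (2*l)).eval y) * Real.exp (-y^2)) = b ^ 2 := by
      have : (fun y : ℝ => (b * (h (2*l)).eval y) * (b * (h (2*l)).eval y) * Real.exp (-y^2))
          = fun y => b ^ 2 * ((h (2*l)).eval y * (h (2*l)).eval y * Real.exp (-y^2)) := by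
        funext y; ring
      rw [this, MeasureTheory.integral_const_mul, hh1, mul_one]
    rw [← e1, ← e2]
    congr 1
    funext y
    rw [heq y]
  have hapos : 0 < a := hlead (2 * l)
  have hbpos : 0 < b := hqmlead l
  have hab : a = b := by
    have hfac : (a - b) * (a + b) = 0 := by nlinarith
    rcases mul_eq_zero.mp hfac with hc | hc
    · linarith
    · linarith
  have := heq x
  rw [hab] at this
  have hx := mul_left_cancel₀ hbpos.ne' this
  rw [← hgeval x, hx]
lemma CD (qm : ℕ → Polynomial ℝ) (am bm : ℕ → ℝ)
    (hqmrec : ∀ l x, bm (l + 1) * (qm (l + 1)).eval x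
      = (x - am l) * (qm l).eval x - bm l * (if l = 0 then 0 else (qm (l - 1)).eval x)) :
    ∀ m : ℕ, ∀ u v : ℝ,
      (u - v) * ∑ l ∈ Finset.range (m + 1), (qm l).eval v * (qm l).eval u
        = bm (m + 1) * ((qm (m + 1)).eval u * (qm m).eval v
            - (qm m).eval u * (qm (m + 1)).eval v) := by
  intro m
  induction m with
  | zero =>
    intro u v
    have h1 := hqmrec 0 u
    have h2 := hqmrec 0 v
    simp only [reduceIte, mul_zero, sub_zero] at h1 h2
    rw [Finset.sum_range_one]
    linear_combination (qm 0).eval u * h2 - (qm 0).eval v * h1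
  | succ m ih =>
    intro u v
    have h1 := hqmrec (m + 1) u
    have h2 := hqmrec (m + 1) v
    simp only [if_neg (Nat.succ_ne_zero m), Nat.add_sub_cancel] at h1 h2
    rw [Finset.sum_range_succ]
    linear_combination ih u v + (qm (m+1)).eval u * h2 - (qm (m+1)).eval v * h1

end Aux

/-- If `λ` is a zero of the Laguerre polynomial `p_{n/2+1}^{(−1/2)}` (n even),
then for `x² ≠ λ`,
`∑_{l=0}^{n/2} p_l^{(−1/2)}(λ) h_{2l}(x) = b_{n/2+1}^{(−1/2)} p_{n/2}^{(−1/2)}(λ) h_{n+2}(x)/(x² − λ)`. -/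
theorem hermite_optimal_explicit
    (h : ℕ → Polynomial ℝ)
    (hdeg : ∀ l, (h l).natDegree = l)
    (hlead : ∀ l, 0 < (h l).leadingCoeff)
    (horth : ∀ k l, (∫ x : ℝ, (h k).eval x * (h l).eval x * Real.exp (-x ^ 2))
      = if k = l then 1 else 0)
    (qm : ℕ → Polynomial ℝ) (am bm : ℕ → ℝ)
    (hqmdeg : ∀ l, (qm l).natDegree = l)
    (hqmlead : ∀ l, 0 < (qm l).leadingCoeff)
    (hqmorth : ∀ k l, (∫ x in Set.Ioi (0 : ℝ),
        (qm k).eval x * (qm l).eval x * (x ^ (-(1/2 : ℝ)) * Real.exp (-x)))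
      = if k = l then 1 else 0)
    (hbm : ∀ l, 0 < bm l)
    (hqmrec : ∀ l x, bm (l + 1) * (qm (l + 1)).eval x
      = (x - am l) * (qm l).eval x - bm l * (if l = 0 then 0 else (qm (l - 1)).eval x))
    (n : ℕ) (hn : Even n)
    (lam : ℝ)
    (hzero : (qm (n / 2 + 1)).eval lam = 0)
    (x : ℝ) (hx : x ^ 2 ≠ lam) :
    ∑ l ∈ Finset.range (n / 2 + 1), (qm l).eval lam * (h (2 * l)).eval x
      = bm (n / 2 + 1) * (qm (n / 2)).eval lam * (h (n + 2)).eval x / (x ^ 2 - lam) := by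
  have hb : ∀ l (y : ℝ), (h (2 * l)).eval y = (qm l).eval (y ^ 2) :=
    bridge h hdeg hlead horth qm hqmdeg hqmlead hqmorth
  have hcd := CD qm am bm hqmrec (n / 2) (x ^ 2) lam
  have hn2 : n + 2 = 2 * (n / 2 + 1) := by
    obtain ⟨r, hr⟩ := hn
    omega
  have hsum : ∑ l ∈ Finset.range (n / 2 + 1), (qm l).eval lam * (h (2 * l)).eval x
      = ∑ l ∈ Finset.range (n / 2 + 1), (qm l).eval lam * (qm l).eval (x ^ 2) := by
    exact Finset.sum_congr rfl fun l _ => by rw [hb l x]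
  have hh : (h (n + 2)).eval x = (qm (n / 2 + 1)).eval (x ^ 2) := by
    rw [hn2, hb (n / 2 + 1) x]
  rw [hsum, hh, eq_div_iff (sub_ne_zero.mpr hx)]
  linear_combination hcd - bm (n / 2 + 1) * (qm (n / 2)).eval (x ^ 2) * hzero
end
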